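/- arXiv:2108.12543 — 8 statements merged into one kernel-verified Lean document; each statement's English description precedes it below -/
import Mathlib

section
/- For all real t with |t| ≤ 1, arcsin(t) = ∑_{n=0}^∞ ((2n-1)!!/(2n)!!) · t^(2n+1)/(2n+1). -/
open Real Nat



noncomputable def bb (n : ℕ) : ℝ := ((2 * n - 1)‼ : ℝ) / ((2 * n)‼ : ℝ)

lemma bb_pos (n : ℕ) : 0 < bb n := by
  apply _root_.div_pos <;> exact_mod_cast Nat.doubleFactorial_pos _

lemma odd_df (n : ℕ) : (2 * n + 1)‼ = (2 * n + 1) * (2 * n - 1)‼ := by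
  cases n with
  | zero => rfl
  | succ m =>
    have h1 : 2 * (m + 1) + 1 = (2 * m + 1) + 2 := by ring
    have h2 : 2 * (m + 1) - 1 = 2 * m + 1 := by omega
    rw [h1, h2, Nat.doubleFactorial_add_two]

lemma bb_rec (n : ℕ) : bb (n + 1) * (2 * n + 2) = bb n * (2 * n + 1) := by
  have h1 : (2 * (n + 1))‼ = (2 * n + 2) * (2 * n)‼ := by
    have : 2 * (n + 1) = 2 * n + 2 := by ring
    rw [this, Nat.doubleFactorial_add_two]
  have h2 : (2 * (n + 1) - 1)‼ = (2 * n + 1) * (2 * n - 1)‼ := by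
    have : 2 * (n + 1) - 1 = 2 * n + 1 := by omega
    rw [this, odd_df]
  have hd : ((2 * n)‼ : ℝ) ≠ 0 := by exact_mod_cast (Nat.doubleFactorial_pos _).ne'
  have hd2 : ((2 * n + 2 : ℕ) : ℝ) ≠ 0 := by positivity
  unfold bb
  rw [h1, h2]
  push_cast
  field_simp
lemma bb_eq (n : ℕ) : bb (n + 1) = bb n * (2 * n + 1) / (2 * n + 2) := by
  have h := bb_rec n
  field_simp
  linarith [h]

lemma bb_le_one (n : ℕ) : bb n ≤ 1 := by
  induction n with
  | zero => simp [bb]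
  | succ m ih =>
    rw [bb_eq]
    rw [div_le_one (by positivity)]
    nlinarith [bb_pos m]

lemma bb_sq (n : ℕ) : bb n ^ 2 * (2 * n + 1) ≤ 1 := by
  induction n with
  | zero => norm_num [bb]
  | succ m ih =>
    rw [bb_eq]
    have h1 : (0:ℝ) < 2 * m + 2 := by positivity
    rw [div_pow, div_mul_eq_mul_div, div_le_one (by positivity)]
    have key : (2 * (m:ℝ) + 1) * (2 * ↑(m+1) + 1) ≤ (2 * m + 2) ^ 2 := by
      push_cast; nlinarith
    calc (bb m * (2 * (m:ℝ) + 1)) ^ 2 * (2 * ↑(m + 1) + 1)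
        = bb m ^ 2 * (2 * (m:ℝ) + 1) ^ 2 * (2 * ↑(m + 1) + 1) := by ring
      _
        = bb m ^ 2 * ((2 * (m:ℝ) + 1) * ((2 * m + 1) * (2 * ↑(m+1) + 1))) := by ring
      _ ≤ bb m ^ 2 * ((2 * (m:ℝ) + 1) * (2 * m + 2) ^ 2) := by
          apply mul_le_mul_of_nonneg_left _ (by positivity)
          apply mul_le_mul_of_nonneg_left _ (by positivity)
          nlinarith
      _ = (bb m ^ 2 * (2 * (m:ℝ) + 1)) * (2 * m + 2) ^ 2 := by ring
      _ ≤ 1 * (2 * (m:ℝ) + 2) ^ 2 := by nlinarith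
      _ = (2 * (m:ℝ) + 2) ^ 2 := by ring

noncomputable def aa (n : ℕ) : ℝ := bb n / (2 * n + 1)

lemma aa_pos (n : ℕ) : 0 < aa n := div_pos (bb_pos n) (by positivity)

lemma summable_aa : Summable aa := by
  have hs : Summable (fun n : ℕ => ((n : ℝ) + 1) ^ (-(3/2) : ℝ)) := by
    have h : Summable (fun n : ℕ => (n : ℝ) ^ (-(3/2) : ℝ)) :=
      Real.summable_nat_rpow.mpr (by norm_num)
    have := (summable_nat_add_iff 1).mpr h
    simpa using this
  apply hs.of_nonneg_of_le (fun n => (aa_pos n).le)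
  intro n
  have h1 : (0:ℝ) < 2 * n + 1 := by positivity
  have hb : bb n ≤ ((n:ℝ) + 1) ^ (-(1/2) : ℝ) := by
    have h2 : bb n ^ 2 ≤ 1 / (2 * n + 1) := by
      rw [le_div_iff₀ h1]; exact bb_sq n
    have h3 : (1:ℝ) / (2 * n + 1) ≤ 1 / (n + 1) := by
      apply div_le_div_of_nonneg_left one_pos.le (by positivity) (by push_cast; linarith)
    have h4 : bb n ^ 2 ≤ ((n:ℝ)+1)⁻¹ := by rw [← one_div]; linarith
    have h5 : ((n:ℝ) + 1) ^ (-(1/2) : ℝ) = Real.sqrt (((n:ℝ)+1)⁻¹) := by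
      rw [Real.sqrt_eq_rpow, ← Real.rpow_neg_one ((n:ℝ)+1),
        ← Real.rpow_mul (by positivity)]
      norm_num
    rw [h5]
    calc bb n = Real.sqrt (bb n ^ 2) := by rw [Real.sqrt_sq (bb_pos n).le]
      _ ≤ Real.sqrt (((n:ℝ)+1)⁻¹) := Real.sqrt_le_sqrt h4
  have hc : (1:ℝ) / (2 * n + 1) ≤ ((n:ℝ) + 1) ^ (-1 : ℝ) := by
    rw [Real.rpow_neg_one, ← one_div]
    apply div_le_div_of_nonneg_left one_pos.le (by positivity) (by push_cast; linarith)
  calc aa n = bb n * (1 / (2 * n + 1)) := by rw [aa, div_eq_mul_one_div]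
    _ ≤ ((n:ℝ) + 1) ^ (-(1/2) : ℝ) * ((n:ℝ) + 1) ^ (-1 : ℝ) := by
        apply mul_le_mul hb hc (by positivity) (by positivity)
    _ = ((n : ℝ) + 1) ^ (-(3/2) : ℝ) := by
        rw [← Real.rpow_add (by positivity)]; norm_num
lemma aa_mul (n : ℕ) : aa n * (2 * n + 1) = bb n := by
  rw [aa, div_mul_cancel₀]; positivity

lemma summable_helper {x : ℝ} (hx : |x| < 1) {c : ℕ → ℝ}
    (hc : ∀ n, ‖c n‖ ≤ 3 * (n + 1) * |x| ^ n) : Summable c := by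
  apply Summable.of_norm_bounded _ hc
  have h1 : Summable (fun n : ℕ => (n : ℝ) * |x| ^ n) := by
    simpa using summable_pow_mul_geometric_of_norm_lt_one 1 (by simpa using hx)
  have h2 : Summable (fun n : ℕ => |x| ^ n) :=
    summable_geometric_of_lt_one (abs_nonneg x) hx
  have := (h1.add h2).mul_left 3
  apply this.congr
  intro n; ring

lemma abs_pow_le {x : ℝ} (hx : |x| ≤ 1) {m n : ℕ} (h : n ≤ m) : |x| ^ m ≤ |x| ^ n :=
  pow_le_pow_of_le_one (abs_nonneg x) hx h

noncomputable def SS (x : ℝ) : ℝ := ∑' n, aa n * x ^ (2 * n + 1)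
noncomputable def gg (x : ℝ) : ℝ := ∑' n, bb n * x ^ (2 * n)

lemma norm_term_le {x : ℝ} (hx : |x| ≤ 1) (n : ℕ) {c : ℝ} (hc0 : 0 ≤ c) (hc : c ≤ 3 * (n+1))
    {m : ℕ} (hm : n ≤ m) : ‖c * x ^ m‖ ≤ 3 * (n + 1) * |x| ^ n := by
  rw [norm_mul, norm_pow, Real.norm_eq_abs, Real.norm_eq_abs, abs_of_nonneg hc0]
  exact mul_le_mul hc (abs_pow_le hx hm) (by positivity) (by positivity)

lemma summable_SS {x : ℝ} (hx : |x| < 1) : Summable (fun n => aa n * x ^ (2 * n + 1)) := by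
  apply summable_helper hx
  intro n
  apply norm_term_le hx.le n (aa_pos n).le _ (by omega)
  have := bb_le_one n
  have := aa_pos n
  have h : aa n ≤ bb n := by
    rw [aa]; apply div_le_self (bb_pos n).le; push_cast; linarith
  push_cast; linarith

lemma summable_gg {x : ℝ} (hx : |x| < 1) : Summable (fun n => bb n * x ^ (2 * n)) := by
  apply summable_helper hx
  intro n
  apply norm_term_le hx.le n (bb_pos n).le _ (by omega)
  have := bb_le_one n; push_cast; linarith

lemma summable_T1 {x : ℝ} (hx : |x| < 1) :
    Summable (fun n : ℕ => (2 * n + 1) * bb n * x ^ (2 * n + 1)) := by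
  apply summable_helper hx
  intro n
  have hb := bb_pos n
  apply norm_term_le hx.le n (by positivity) _ (by omega)
  have h1 := bb_pos n
  have h2 := bb_le_one n
  push_cast
  nlinarith
lemma summable_T2 {x : ℝ} (hx : |x| < 1) :
    Summable (fun n : ℕ => (2 * n : ℝ) * bb n * x ^ (2 * n + 1)) := by
  apply summable_helper hx
  intro n
  have hb := bb_pos n
  apply norm_term_le hx.le n (by positivity) _ (by omega)
  have h1 := bb_pos n
  have h2 := bb_le_one n
  push_cast
  nlinarith
lemma summable_u {r : ℝ} (hr : |r| < 1) : Summable (fun n : ℕ => 2 * ((n : ℝ) + 1) * r ^ n) := by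
  have h1 : Summable (fun n : ℕ => (n : ℝ) * r ^ n) := by
    simpa using summable_pow_mul_geometric_of_norm_lt_one 1 (by simpa using hr)
  have h2 : Summable (fun n : ℕ => r ^ n) := summable_geometric_of_norm_lt_one (by simpa using hr)
  have := (h1.add h2).mul_left 2
  apply this.congr; intro n; ring

lemma hasDerivAt_SS {x : ℝ} (hx : |x| < 1) : HasDerivAt SS (gg x) x := by
  set r : ℝ := (|x| + 1) / 2 with hrdef
  have hr0 : 0 ≤ r := by positivity
  have hr1 : r < 1 := by rw [hrdef]; linarith
  have hxr : x ∈ Set.Ioo (-r) r := by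
    rw [Set.mem_Ioo, ← abs_lt, hrdef]; linarith [abs_nonneg x]
  have key : HasDerivAt (fun y => ∑' n, aa n * y ^ (2 * n + 1))
      (∑' n, aa n * ((2 * n + 1) * x ^ (2 * n))) x := by
    apply hasDerivAt_tsum_of_isPreconnected (summable_u (by rwa [abs_of_nonneg hr0]))
      isOpen_Ioo (convex_Ioo _ _).isPreconnected
      (g := fun n y => aa n * y ^ (2 * n + 1))
      (g' := fun n y => aa n * ((2 * n + 1) * y ^ (2 * n)))
      (y₀ := x) (hy₀ := hxr) (hy := hxr)
    · intro n y _
      have h := (hasDerivAt_pow (2 * n + 1) y).const_mul (aa n)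
      simp only [Nat.add_sub_cancel] at h
      exact h.congr_deriv (by push_cast; ring)
    · intro n y hy
      have hyr : |y| ≤ r := by
        rw [abs_le]; exact ⟨hy.1.le, hy.2.le⟩
      have h1 : ‖aa n * ((2 * n + 1) * y ^ (2 * n))‖
          = (aa n * (2 * n + 1)) * |y| ^ (2 * n) := by
        rw [norm_mul, norm_mul, norm_pow, Real.norm_eq_abs, Real.norm_eq_abs,
          Real.norm_eq_abs, abs_of_nonneg (aa_pos n).le, abs_of_nonneg (by positivity)]
        push_cast; ring
      rw [h1, aa_mul]
      have h2 : |y| ^ (2 * n) ≤ r ^ n := by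
        calc |y| ^ (2 * n) ≤ r ^ (2 * n) := by
              apply pow_le_pow_left₀ (abs_nonneg y) hyr
          _ ≤ r ^ n := pow_le_pow_of_le_one hr0 hr1.le (by omega)
      have h3 := bb_le_one n
      have h4 := bb_pos n
      have h5 : (0:ℝ) ≤ r ^ n := by positivity
      nlinarith
    · exact summable_SS hx
  have : (∑' n, aa n * ((2 * n + 1) * x ^ (2 * n))) = gg x := by
    rw [gg]
    apply tsum_congr
    intro n
    rw [← aa_mul n]
    push_cast; ring
  rw [this] at key
  exact key

lemma hasDerivAt_gg {x : ℝ} (hx : |x| < 1) :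
    HasDerivAt gg (∑' n, bb n * (2 * n * x ^ (2 * n - 1))) x := by
  set r : ℝ := (|x| + 1) / 2 with hrdef
  have hr0 : 0 ≤ r := by positivity
  have hr1 : r < 1 := by rw [hrdef]; linarith
  have hxr : x ∈ Set.Ioo (-r) r := by
    rw [Set.mem_Ioo, ← abs_lt, hrdef]; linarith [abs_nonneg x]
  apply hasDerivAt_tsum_of_isPreconnected (summable_u (by rwa [abs_of_nonneg hr0]))
    isOpen_Ioo (convex_Ioo _ _).isPreconnected
    (g := fun n y => bb n * y ^ (2 * n))
    (g' := fun n y => bb n * (2 * n * y ^ (2 * n - 1)))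
    (y₀ := x) (hy₀ := hxr) (hy := hxr)
  · intro n y _
    have h := (hasDerivAt_pow (2 * n) y).const_mul (bb n)
    push_cast at h
    exact h
  · intro n y hy
    have hyr : |y| ≤ r := by rw [abs_le]; exact ⟨hy.1.le, hy.2.le⟩
    rcases Nat.eq_zero_or_pos n with rfl | hn
    · simp
    have h1 : ‖bb n * (2 * n * y ^ (2 * n - 1))‖ = bb n * (2 * n) * |y| ^ (2 * n - 1) := by
      rw [norm_mul, norm_mul, norm_pow, Real.norm_eq_abs, Real.norm_eq_abs, Real.norm_eq_abs,
        abs_of_nonneg (bb_pos n).le, abs_of_nonneg (by positivity)]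
      ring
    rw [h1]
    have h2 : |y| ^ (2 * n - 1) ≤ r ^ n := by
      calc |y| ^ (2 * n - 1) ≤ r ^ (2 * n - 1) := pow_le_pow_left₀ (abs_nonneg y) hyr _
        _ ≤ r ^ n := pow_le_pow_of_le_one hr0 hr1.le (by omega)
    have h3 := bb_le_one n
    have h4 := bb_pos n
    have h5 : (0:ℝ) ≤ r ^ n := by positivity
    have h6 : (1:ℝ) ≤ (n:ℝ) := by exact_mod_cast hn
    calc bb n * (2 * (n:ℝ)) * |y| ^ (2 * n - 1)
        ≤ 1 * (2 * (n:ℝ)) * r ^ n := by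
          apply mul_le_mul _ h2 (by positivity) (by positivity)
          nlinarith
      _ ≤ 2 * ((n:ℝ) + 1) * r ^ n := by nlinarith
  · exact summable_gg hx
lemma summable_dg {x : ℝ} (hx : |x| < 1) :
    Summable (fun n : ℕ => bb n * (2 * n * x ^ (2 * n - 1))) := by
  apply summable_helper hx
  intro n
  have hb := bb_pos n
  have h3 := bb_le_one n
  have he : bb n * (2 * n * x ^ (2 * n - 1)) = (2 * n * bb n) * x ^ (2 * n - 1) := by ring
  rw [he]
  apply norm_term_le hx.le n (by positivity) _ (by omega)
  push_cast; nlinarith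

lemma summable_xgg {x : ℝ} (hx : |x| < 1) :
    Summable (fun n : ℕ => bb n * x ^ (2 * n + 1)) := by
  apply summable_helper hx
  intro n
  have hb := bb_pos n
  have h3 := bb_le_one n
  apply norm_term_le hx.le n (by positivity) _ (by omega)
  push_cast; nlinarith

lemma deriv_gg_eq {x : ℝ} (hx : |x| < 1) :
    (∑' n : ℕ, bb n * (2 * n * x ^ (2 * n - 1)))
      = ∑' n : ℕ, (2 * n + 1) * bb n * x ^ (2 * n + 1) := by
  rw [Summable.tsum_eq_zero_add (summable_dg hx)]
  have h0 : bb 0 * (2 * (0:ℕ) * x ^ (2 * 0 - 1)) = 0 := by norm_num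
  rw [h0, zero_add]
  apply tsum_congr
  intro n
  have he : 2 * (n + 1) - 1 = 2 * n + 1 := by omega
  rw [he]
  have hrec := bb_rec n
  push_cast
  linear_combination x ^ (2 * n + 1) * hrec

lemma gg_ode {x : ℝ} (hx : |x| < 1) :
    (1 - x ^ 2) * (∑' n : ℕ, bb n * (2 * n * x ^ (2 * n - 1))) = x * gg x := by
  rw [deriv_gg_eq hx]
  set T1 := ∑' n : ℕ, (2 * n + 1) * bb n * x ^ (2 * n + 1) with hT1
  have h1 : x * gg x = ∑' n : ℕ, bb n * x ^ (2 * n + 1) := by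
    rw [gg, ← tsum_mul_left]
    apply tsum_congr; intro n; ring
  have h2 : x ^ 2 * T1 = ∑' n : ℕ, (2 * n + 1) * bb n * x ^ (2 * n + 3) := by
    rw [hT1, ← tsum_mul_left]
    apply tsum_congr; intro n; push_cast; ring
  have h3 : T1 - x * gg x = ∑' n : ℕ, (2 * (n:ℝ)) * bb n * x ^ (2 * n + 1) := by
    rw [h1, hT1, ← Summable.tsum_sub (summable_T1 hx) (summable_xgg hx)]
    apply tsum_congr; intro n; push_cast; ring
  have h4 : (∑' n : ℕ, (2 * (n:ℝ)) * bb n * x ^ (2 * n + 1)) = x ^ 2 * T1 := by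
    rw [Summable.tsum_eq_zero_add (summable_T2 hx)]
    have h0 : (2 * ((0:ℕ):ℝ)) * bb 0 * x ^ (2 * 0 + 1) = 0 := by norm_num
    rw [h0, zero_add, h2]
    apply tsum_congr
    intro n
    have he : 2 * (n + 1) + 1 = 2 * n + 3 := by omega
    rw [he]
    have hrec := bb_rec n
    push_cast
    linear_combination x ^ (2 * n + 3) * hrec
  rw [h4] at h3
  linarith

lemma gg_zero : gg 0 = 1 := by
  rw [gg, tsum_eq_single 0]
  · norm_num [bb, Nat.doubleFactorial]
  · intro n hn
    rw [zero_pow (by omega), mul_zero]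

lemma hasDerivAt_phi {y : ℝ} (hy : y ∈ Set.Ioo (-1:ℝ) 1) :
    HasDerivAt (fun z => gg z * Real.sqrt (1 - z ^ 2)) 0 y := by
  have hy1 : |y| < 1 := abs_lt.mpr ⟨hy.1, hy.2⟩
  have hpos : 0 < 1 - y ^ 2 := by nlinarith [abs_nonneg y, sq_abs y, hy1]
  have hne : 1 - y ^ 2 ≠ 0 := hpos.ne'
  have hsq : HasDerivAt (fun z : ℝ => 1 - z ^ 2) (-(2 * y)) y := by
    have h := (hasDerivAt_pow 2 y).const_sub 1
    simpa using h
  have hsqrt : HasDerivAt (fun z : ℝ => Real.sqrt (1 - z ^ 2))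
      (1 / (2 * Real.sqrt (1 - y ^ 2)) * (-(2 * y))) y :=
    (Real.hasDerivAt_sqrt hne).comp y hsq
  have hg := hasDerivAt_gg hy1
  have hmul := hg.mul hsqrt
  set d := ∑' n : ℕ, bb n * (2 * n * y ^ (2 * n - 1)) with hd
  have hode := gg_ode hy1
  rw [← hd] at hode
  have hs : 0 < Real.sqrt (1 - y ^ 2) := Real.sqrt_pos.mpr hpos
  have hs2 : Real.sqrt (1 - y ^ 2) ^ 2 = 1 - y ^ 2 := Real.sq_sqrt hpos.le
  have hzero : d * Real.sqrt (1 - y ^ 2)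
      + gg y * (1 / (2 * Real.sqrt (1 - y ^ 2)) * (-(2 * y))) = 0 := by
    field_simp
    linear_combination d * hs2 + hode
  rw [hzero] at hmul
  exact hmul

lemma gg_eq {x : ℝ} (hx : |x| < 1) : gg x = 1 / Real.sqrt (1 - x ^ 2) := by
  have hxI : x ∈ Set.Ioo (-1:ℝ) 1 := by rw [Set.mem_Ioo, ← abs_lt]; exact hx
  have h0I : (0:ℝ) ∈ Set.Ioo (-1:ℝ) 1 := by norm_num
  have hmvt := (convex_Ioo (-1:ℝ) 1).norm_image_sub_le_of_norm_hasDerivWithin_le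
    (f := fun z => gg z * Real.sqrt (1 - z ^ 2)) (f' := fun _ => 0) (C := 0)
    (fun y hy => (hasDerivAt_phi hy).hasDerivWithinAt) (fun y _ => by simp) h0I hxI
  simp only [norm_zero, zero_mul, norm_le_zero_iff, sub_eq_zero] at hmvt
  have hphi0 : gg 0 * Real.sqrt (1 - (0:ℝ) ^ 2) = 1 := by
    rw [gg_zero]; norm_num
  rw [hphi0] at hmvt
  have hpos : 0 < 1 - x ^ 2 := by nlinarith [sq_abs x, abs_nonneg x]
  have hs : 0 < Real.sqrt (1 - x ^ 2) := Real.sqrt_pos.mpr hpos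
  rw [eq_div_iff hs.ne']
  exact hmvt
lemma SS_zero : SS 0 = 0 := by
  rw [SS]
  convert tsum_zero with n
  rw [zero_pow (by omega), mul_zero]

lemma SS_eq_arcsin {x : ℝ} (hx : x ∈ Set.Ioo (-1:ℝ) 1) : SS x = Real.arcsin x := by
  have key : ∀ y ∈ Set.Ioo (-1:ℝ) 1,
      HasDerivAt (fun z => SS z - Real.arcsin z) 0 y := by
    intro y hy
    have hy1 : |y| < 1 := abs_lt.mpr ⟨hy.1, hy.2⟩
    have h1 := hasDerivAt_SS hy1
    have h2 := Real.hasDerivAt_arcsin (ne_of_gt hy.1) (ne_of_lt hy.2)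
    have h3 := h1.sub h2
    rw [gg_eq hy1, sub_self] at h3
    exact h3
  have h0I : (0:ℝ) ∈ Set.Ioo (-1:ℝ) 1 := by norm_num
  have hmvt := (convex_Ioo (-1:ℝ) 1).norm_image_sub_le_of_norm_hasDerivWithin_le
    (f := fun z => SS z - Real.arcsin z) (f' := fun _ => 0) (C := 0)
    (fun y hy => (key y hy).hasDerivWithinAt) (fun y _ => by simp) h0I hx
  simp only [norm_zero, zero_mul, norm_le_zero_iff, sub_eq_zero] at hmvt
  rw [SS_zero, Real.arcsin_zero, sub_zero] at hmvt
  exact sub_eq_zero.mp hmvt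

lemma continuousOn_SS : ContinuousOn SS (Set.Icc (-1:ℝ) 1) := by
  apply continuousOn_tsum (u := aa)
  · intro n
    exact (continuousOn_const.mul (continuousOn_pow _))
  · exact summable_aa
  · intro n x hx
    have hx1 : |x| ≤ 1 := abs_le.mpr ⟨hx.1, hx.2⟩
    rw [norm_mul, norm_pow, Real.norm_eq_abs, Real.norm_eq_abs,
      abs_of_nonneg (aa_pos n).le]
    calc aa n * |x| ^ (2 * n + 1) ≤ aa n * 1 := by
          apply mul_le_mul_of_nonneg_left _ (aa_pos n).le
          exact pow_le_one₀ (abs_nonneg x) hx1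
      _ = aa n := mul_one _

lemma SS_eq_endpoint {t : ℝ} (ht : t = 1 ∨ t = -1) : SS t = Real.arcsin t := by
  have htI : t ∈ Set.Icc (-1:ℝ) 1 := by rcases ht with rfl | rfl <;> norm_num
  have hcl : t ∈ closure (Set.Ioo (-1:ℝ) 1) := by
    rw [closure_Ioo (by norm_num : (-1:ℝ) ≠ 1)]; exact htI
  haveI : (nhdsWithin t (Set.Ioo (-1:ℝ) 1)).NeBot :=
    mem_closure_iff_nhdsWithin_neBot.mp hcl
  have h1 : Filter.Tendsto SS (nhdsWithin t (Set.Ioo (-1:ℝ) 1)) (nhds (SS t)) := by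
    have := continuousOn_SS t htI
    exact this.mono_left (nhdsWithin_mono _ Set.Ioo_subset_Icc_self)
  have h2 : Filter.Tendsto Real.arcsin (nhdsWithin t (Set.Ioo (-1:ℝ) 1))
      (nhds (Real.arcsin t)) :=
    (Real.continuous_arcsin.tendsto t).mono_left nhdsWithin_le_nhds
  have h3 : Filter.Tendsto SS (nhdsWithin t (Set.Ioo (-1:ℝ) 1)) (nhds (Real.arcsin t)) := by
    apply h2.congr'
    filter_upwards [self_mem_nhdsWithin] with y hy
    exact (SS_eq_arcsin hy).symm
  exact tendsto_nhds_unique h1 h3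

theorem arcsin_series (t : ℝ) (ht : |t| ≤ 1) :
    Real.arcsin t =
      ∑' n : ℕ, ((2 * n - 1)‼ : ℝ) / ((2 * n)‼ : ℝ) * t ^ (2 * n + 1) / (2 * n + 1) := by
  have hS : ∑' n : ℕ, ((2 * n - 1)‼ : ℝ) / ((2 * n)‼ : ℝ) * t ^ (2 * n + 1) / (2 * n + 1)
      = SS t := by
    rw [SS]
    apply tsum_congr
    intro n
    rw [aa, bb]
    ring
  rw [hS]
  rcases lt_or_eq_of_le ht with h | h
  · exact (SS_eq_arcsin (by rw [Set.mem_Ioo, ← abs_lt]; exact h)).symm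
  · have : t = 1 ∨ t = -1 := by
      rcases abs_eq (by norm_num : (0:ℝ) ≤ 1) |>.mp h with h' | h'
      · exact Or.inl h'
      · exact Or.inr h'
    exact (SS_eq_endpoint this).symm
end

section
/- For all real t with |t| ≤ 1, (arcsin t)^2 = (1/2) · ∑_{n=1}^∞ ((2n)!!/(2n-1)!!) · t^(2n)/n^2. -/
open Real Nat

/-- `dd n = (2n)!! / (2n+1)!!` as a real number. -/
noncomputable def dd (n : ℕ) : ℝ := ((2 * n)‼ : ℝ) / ((2 * n + 1)‼ : ℝ)

lemma dd_pos (n : ℕ) : 0 < dd n :=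
  div_pos (by exact_mod_cast Nat.doubleFactorial_pos _)
    (by exact_mod_cast Nat.doubleFactorial_pos _)

lemma dd_zero : dd 0 = 1 := by simp [dd, Nat.doubleFactorial]

lemma dd_succ (n : ℕ) : dd (n + 1) = (2 * n + 2) / (2 * n + 3) * dd n := by
  have h1 : 2 * (n + 1) = 2 * n + 2 := by ring
  have h2 : 2 * n + 2 + 1 = 2 * n + 1 + 2 := by ring
  rw [dd, h1, h2, Nat.doubleFactorial_add_two, Nat.doubleFactorial_add_two, dd]
  have hpos : ((2 * n + 1)‼ : ℝ) ≠ 0 := by exact_mod_cast (Nat.doubleFactorial_pos _).ne'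
  have hpos2 : ((2 * n)‼ : ℝ) ≠ 0 := by exact_mod_cast (Nat.doubleFactorial_pos _).ne'
  push_cast
  have h3 : (2 * (n:ℝ) + 3) ≠ 0 := by positivity
  field_simp
  ring

lemma dd_sq (n : ℕ) : dd n ^ 2 * (n + 1) ≤ 1 := by
  induction n with
  | zero => simp [dd_zero]
  | succ n ih =>
    have hd := dd_pos n
    rw [dd_succ]
    have h3 : (0:ℝ) < 2 * (n:ℝ) + 3 := by positivity
    have key : ((2 * (n:ℝ) + 2) / (2 * n + 3)) ^ 2 * ((n:ℝ) + 1 + 1) ≤ (n : ℝ) + 1 := by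
      rw [div_pow, div_mul_eq_mul_div, div_le_iff₀ (by positivity)]
      nlinarith [sq_nonneg ((n:ℝ) + 1)]
    push_cast
    calc ((2 * (n:ℝ) + 2) / (2 * n + 3) * dd n) ^ 2 * ((n:ℝ) + 1 + 1)
        = dd n ^ 2 * (((2 * (n:ℝ) + 2) / (2 * n + 3)) ^ 2 * ((n:ℝ) + 1 + 1)) := by ring
      _ ≤ dd n ^ 2 * ((n:ℝ) + 1) := by
          apply mul_le_mul_of_nonneg_left key (by positivity)
      _ ≤ 1 := by exact_mod_cast ih

lemma dd_le_one (n : ℕ) : dd n ≤ 1 := by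
  have h := dd_sq n
  have hd := dd_pos n
  nlinarith [sq_nonneg (dd n - 1), Nat.cast_nonneg (α := ℝ) n]

lemma dd_rec (n : ℕ) : (2 * (n:ℝ) + 3) * dd (n + 1) = (2 * n + 2) * dd n := by
  rw [dd_succ]
  have h3 : (0:ℝ) < 2 * (n:ℝ) + 3 := by positivity
  field_simp

lemma dd_le_sqrt (n : ℕ) : dd n * Real.sqrt (n + 1) ≤ 1 := by
  have h1 : (dd n * Real.sqrt (n + 1)) ^ 2 ≤ 1 := by
    rw [mul_pow, Real.sq_sqrt (by positivity)]
    exact dd_sq n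
  nlinarith [mul_nonneg (dd_pos n).le (Real.sqrt_nonneg ((n:ℝ) + 1))]

lemma summable_M : Summable (fun n : ℕ => dd n / (n + 1)) := by
  have hs : Summable (fun n : ℕ => (((n:ℝ) + 1) ^ ((3:ℝ)/2))⁻¹) := by
    have := (Real.summable_nat_rpow_inv (p := (3:ℝ)/2)).2 (by norm_num)
    have h2 := this.comp_injective (Nat.succ_injective)
    refine h2.congr fun n => ?_
    simp only [Function.comp_apply, Nat.succ_eq_add_one]
    push_cast
    rw [add_comm]
  refine hs.of_nonneg_of_le (fun n => div_nonneg (dd_pos n).le (by positivity)) (fun n => ?_)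
  have hpos : (0:ℝ) < (n:ℝ) + 1 := by positivity
  have hrp : ((n:ℝ) + 1) ^ ((3:ℝ)/2) = ((n:ℝ) + 1) * Real.sqrt ((n:ℝ) + 1) := by
    rw [Real.sqrt_eq_rpow, ← Real.rpow_one_add' (by positivity) (by norm_num)]
    norm_num
  rw [hrp, inv_eq_one_div, div_le_div_iff₀ hpos (by positivity)]
  have hb := dd_le_sqrt n
  nlinarith [Real.sqrt_nonneg ((n:ℝ)+1), (dd_pos n).le]


/-- `GG t = ∑ dd n t^(2n+1)`, which equals `arcsin t / √(1-t²)` for `|t| < 1`. -/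
noncomputable def GG (t : ℝ) : ℝ := ∑' n : ℕ, dd n * t ^ (2 * n + 1)

/-- `FF t = ∑ dd n/(n+1) t^(2n+2)`, which equals `(arcsin t)²`. -/
noncomputable def FF (t : ℝ) : ℝ := ∑' n : ℕ, dd n / (n + 1) * t ^ (2 * n + 2)

lemma summable_odd_geom {x : ℝ} (hx : |x| < 1) :
    Summable (fun n : ℕ => (2 * (n : ℝ) + 1) * x ^ (2 * n)) := by
  have h2 : ‖x ^ 2‖ < 1 := by
    rw [Real.norm_eq_abs, abs_pow]
    exact pow_lt_one₀ (abs_nonneg x) hx (by norm_num)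
  have hs := ((summable_pow_mul_geometric_of_norm_lt_one 1 h2).mul_left 2).add
    (summable_geometric_of_norm_lt_one h2)
  refine hs.congr fun n => ?_
  rw [pow_mul]
  push_cast
  ring

lemma summable_G_terms {t : ℝ} (h : |t| < 1) :
    Summable (fun n : ℕ => dd n * t ^ (2 * n + 1)) := by
  have h2 : ‖t ^ 2‖ < 1 := by
    rw [Real.norm_eq_abs, abs_pow]
    exact pow_lt_one₀ (abs_nonneg t) h (by norm_num)
  refine ((summable_geometric_of_norm_lt_one h2).mul_left |t|).of_norm_bounded fun n => ?_
  rw [norm_mul, Real.norm_eq_abs, Real.norm_eq_abs, abs_of_nonneg (dd_pos n).le, abs_pow]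
  calc dd n * |t| ^ (2 * n + 1) ≤ 1 * |t| ^ (2 * n + 1) := by
        apply mul_le_mul_of_nonneg_right (dd_le_one n) (by positivity)
    _ = |t| * (t ^ 2) ^ n := by
        rw [one_mul, pow_succ, pow_mul, sq_abs, mul_comm]

lemma summable_Gd_terms {t : ℝ} (h : |t| < 1) :
    Summable (fun n : ℕ => (2 * (n : ℝ) + 1) * dd n * t ^ (2 * n)) := by
  refine (summable_odd_geom h).of_norm_bounded fun n => ?_
  rw [Real.norm_eq_abs, abs_mul, abs_mul, abs_of_nonneg (by positivity : (0:ℝ) ≤ 2*(n:ℝ)+1),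
    abs_of_nonneg (dd_pos n).le, abs_pow]
  calc (2*(n:ℝ)+1) * dd n * |t| ^ (2*n) ≤ (2*(n:ℝ)+1) * 1 * |t| ^ (2*n) := by
        apply mul_le_mul_of_nonneg_right
          (mul_le_mul_of_nonneg_left (dd_le_one n) (by positivity)) (by positivity)
    _ = (2*(n:ℝ)+1) * t ^ (2*n) := by
        rw [mul_one, pow_mul, pow_mul, ← abs_pow, abs_of_nonneg (by positivity : (0:ℝ) ≤ t^2)]

lemma summable_F_terms {t : ℝ} (h : |t| ≤ 1) :
    Summable (fun n : ℕ => dd n / (n + 1) * t ^ (2 * n + 2)) := by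
  refine summable_M.of_norm_bounded fun n => ?_
  have hdn : (0:ℝ) ≤ dd n / ((n:ℝ)+1) := div_nonneg (dd_pos n).le (by positivity)
  rw [Real.norm_eq_abs, abs_mul, abs_of_nonneg hdn, abs_pow]
  calc dd n / ((n:ℝ)+1) * |t| ^ (2*n+2) ≤ dd n / ((n:ℝ)+1) * 1 :=
        mul_le_mul_of_nonneg_left (pow_le_one₀ (abs_nonneg t) h) hdn
    _ = dd n / ((n:ℝ)+1) := mul_one _

lemma hasDerivAt_GG {t : ℝ} (h : |t| < 1) :
    HasDerivAt GG (∑' n : ℕ, (2 * (n : ℝ) + 1) * dd n * t ^ (2 * n)) t := by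
  set r : ℝ := (|t| + 1) / 2 with hr
  have htr : |t| < r := by rw [hr]; linarith
  have hr1 : r < 1 := by rw [hr]; linarith
  have hr0 : 0 ≤ r := by rw [hr]; positivity
  have hrabs : |r| < 1 := by rw [abs_of_nonneg hr0]; exact hr1
  have hu : Summable (fun n : ℕ => (2 * (n : ℝ) + 1) * r ^ (2 * n)) := summable_odd_geom hrabs
  have H : HasDerivAt (fun z : ℝ => ∑' n : ℕ, dd n * z ^ (2 * n + 1))
      (∑' n : ℕ, (2 * (n : ℝ) + 1) * dd n * t ^ (2 * n)) t := by
    refine hasDerivAt_tsum_of_isPreconnected (u := fun n : ℕ => (2 * (n : ℝ) + 1) * r ^ (2 * n))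
      (y₀ := (0:ℝ)) (g' := fun n y => (2 * (n : ℝ) + 1) * dd n * y ^ (2 * n))
      hu isOpen_Ioo (convex_Ioo (-r) r).isPreconnected
      (fun n y _ => ?_) (fun n y hy => ?_) ?_ ?_ ?_
    · have := (hasDerivAt_pow (2 * n + 1) y).const_mul (dd n)
      refine this.congr_deriv ?_
      have he : 2 * n + 1 - 1 = 2 * n := by omega
      rw [he]
      push_cast
      ring
    · have hy' : |y| ≤ r := by
        rw [abs_le]
        exact ⟨hy.1.le, hy.2.le⟩
      rw [Real.norm_eq_abs, abs_mul, abs_mul, abs_of_nonneg (by positivity : (0:ℝ) ≤ 2*(n:ℝ)+1),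
        abs_of_nonneg (dd_pos n).le, abs_pow]
      calc (2*(n:ℝ)+1) * dd n * |y| ^ (2*n) ≤ (2*(n:ℝ)+1) * 1 * r ^ (2*n) := by
            apply mul_le_mul (mul_le_mul_of_nonneg_left (dd_le_one n) (by positivity))
              (pow_le_pow_left₀ (abs_nonneg y) hy' _) (by positivity) (by positivity)
        _ = (2*(n:ℝ)+1) * r ^ (2*n) := by rw [mul_one]
    · exact ⟨by linarith [abs_nonneg t], by linarith [abs_nonneg t]⟩
    · refine summable_zero.congr fun n => ?_
      simp
    · exact ⟨neg_lt_of_abs_lt htr, lt_of_abs_lt htr⟩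
  exact H

lemma hasDerivAt_FF {t : ℝ} (h : |t| < 1) : HasDerivAt FF (2 * GG t) t := by
  set r : ℝ := (|t| + 1) / 2 with hr
  have htr : |t| < r := by rw [hr]; linarith
  have hr1 : r < 1 := by rw [hr]; linarith
  have hr0 : 0 ≤ r := by rw [hr]; positivity
  have h2 : ‖r ^ 2‖ < 1 := by
    rw [Real.norm_eq_abs, abs_pow, abs_of_nonneg hr0]
    exact pow_lt_one₀ hr0 hr1 (by norm_num)
  have hu : Summable (fun n : ℕ => 2 * r * (r ^ 2) ^ n) :=
    (summable_geometric_of_norm_lt_one h2).mul_left (2 * r)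
  have H : HasDerivAt (fun z : ℝ => ∑' n : ℕ, dd n / (n + 1) * z ^ (2 * n + 2))
      (∑' n : ℕ, 2 * (dd n * t ^ (2 * n + 1))) t := by
    refine hasDerivAt_tsum_of_isPreconnected (u := fun n : ℕ => 2 * r * (r ^ 2) ^ n)
      (y₀ := (0:ℝ)) (g' := fun n y => 2 * (dd n * y ^ (2 * n + 1)))
      hu isOpen_Ioo (convex_Ioo (-r) r).isPreconnected
      (fun n y _ => ?_) (fun n y hy => ?_) ?_ ?_ ?_
    · have := (hasDerivAt_pow (2 * n + 2) y).const_mul (dd n / ((n:ℝ) + 1))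
      refine this.congr_deriv ?_
      have he : 2 * n + 2 - 1 = 2 * n + 1 := by omega
      rw [he]
      have hn : ((n:ℝ) + 1) ≠ 0 := by positivity
      field_simp
      push_cast
      ring
    · have hy' : |y| ≤ r := by rw [abs_le]; exact ⟨hy.1.le, hy.2.le⟩
      rw [Real.norm_eq_abs, abs_mul, abs_mul, abs_of_nonneg (by norm_num : (0:ℝ) ≤ 2),
        abs_of_nonneg (dd_pos n).le, abs_pow]
      calc 2 * (dd n * |y| ^ (2*n+1)) ≤ 2 * (1 * r ^ (2*n+1)) := by
            apply mul_le_mul_of_nonneg_left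
              (mul_le_mul (dd_le_one n) (pow_le_pow_left₀ (abs_nonneg y) hy' _)
                (by positivity) (by norm_num)) (by norm_num)
        _ = 2 * r * (r ^ 2) ^ n := by rw [one_mul, pow_succ, pow_mul]; ring
    · exact ⟨by linarith [abs_nonneg t], by linarith [abs_nonneg t]⟩
    · refine summable_zero.congr fun n => ?_
      simp
    · exact ⟨neg_lt_of_abs_lt htr, lt_of_abs_lt htr⟩
  rw [show (2:ℝ) * GG t = ∑' n : ℕ, 2 * (dd n * t ^ (2 * n + 1)) by rw [GG, tsum_mul_left]]
  exact H

lemma GG_ode {t : ℝ} (h : |t| < 1) :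
    (1 - t ^ 2) * (∑' n : ℕ, (2 * (n : ℝ) + 1) * dd n * t ^ (2 * n)) - t * GG t = 1 := by
  set a : ℕ → ℝ := fun n => (2 * (n : ℝ) + 1) * dd n * t ^ (2 * n) with ha
  have hsa : Summable a := summable_Gd_terms h
  have hsG : Summable (fun n : ℕ => dd n * t ^ (2 * n + 1)) := summable_G_terms h
  have key : t ^ 2 * (∑' n, a n) + t * GG t = ∑' n, a (n + 1) := by
    rw [GG, ← tsum_mul_left, ← tsum_mul_left, ← Summable.tsum_add (hsa.mul_left (t ^ 2))
      (hsG.mul_left t)]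
    refine tsum_congr fun n => ?_
    have h1 : a (n + 1) = (2 * (n:ℝ) + 3) * dd (n + 1) * t ^ (2 * n + 2) := by
      rw [ha]
      push_cast
      ring_nf
    rw [h1, dd_rec n]
    simp only [ha]
    ring
  have h0 : (∑' n, a n) = a 0 + ∑' n, a (n + 1) := Summable.tsum_eq_zero_add hsa
  have ha0 : a 0 = 1 := by simp [ha, dd_zero]
  have : t ^ 2 * (∑' n, a n) + t * GG t = (∑' n, a n) - 1 := by
    rw [key, h0, ha0]; ring
  linarith [this]

lemma const_of_deriv_zero {f : ℝ → ℝ} (hf : ∀ z ∈ Set.Ioo (-1:ℝ) 1, HasDerivAt f 0 z)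
    {x y : ℝ} (hx : x ∈ Set.Ioo (-1:ℝ) 1) (hy : y ∈ Set.Ioo (-1:ℝ) 1) : f x = f y := by
  apply (convex_Ioo (-1:ℝ) 1).is_const_of_fderivWithin_eq_zero
    (fun z hz => (hf z hz).differentiableAt.differentiableWithinAt)
    (fun z hz => ?_) hx hy
  have h1 := (hf z hz).hasFDerivAt.hasFDerivWithinAt.fderivWithin
    (isOpen_Ioo.uniqueDiffOn z hz)
  rw [h1]
  ext v
  simp

lemma GG_zero : GG 0 = 0 := by
  have h : ∀ n : ℕ, dd n * (0:ℝ) ^ (2 * n + 1) = 0 := fun n => by simp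
  rw [GG]
  simp only [h]
  exact tsum_zero

lemma FF_zero : FF 0 = 0 := by
  have h : ∀ n : ℕ, dd n / ((n:ℝ) + 1) * (0:ℝ) ^ (2 * n + 2) = 0 := fun n => by simp
  rw [FF]
  simp only [h]
  exact tsum_zero

lemma GG_eq {t : ℝ} (h : |t| < 1) : GG t * Real.sqrt (1 - t ^ 2) = Real.arcsin t := by
  have hderiv : ∀ z ∈ Set.Ioo (-1:ℝ) 1,
      HasDerivAt (fun x : ℝ => GG x * Real.sqrt (1 - x ^ 2) - Real.arcsin x) 0 z := by
    intro z hz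
    have hza : |z| < 1 := abs_lt.2 ⟨hz.1, hz.2⟩
    have hz2 : (0:ℝ) < 1 - z ^ 2 := by nlinarith [abs_lt.1 hza]
    set s : ℝ := Real.sqrt (1 - z ^ 2) with hs
    have hs0 : 0 < s := Real.sqrt_pos.2 hz2
    have hsq : s ^ 2 = 1 - z ^ 2 := Real.sq_sqrt hz2.le
    have hG := hasDerivAt_GG hza
    set Gd : ℝ := ∑' n : ℕ, (2 * (n : ℝ) + 1) * dd n * z ^ (2 * n) with hGd
    have hsqrt : HasDerivAt (fun x : ℝ => Real.sqrt (1 - x ^ 2)) (-z / s) z := by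
      have h1 : HasDerivAt (fun x : ℝ => 1 - x ^ 2) (-(2 * z)) z := by
        have := (hasDerivAt_pow 2 z).const_sub 1
        refine this.congr_deriv ?_
        simp
      have := (Real.hasDerivAt_sqrt hz2.ne').comp z h1
      refine this.congr_deriv ?_
      rw [hs]
      field_simp
    have harc := Real.hasDerivAt_arcsin (by linarith [(abs_lt.1 hza).1] : z ≠ -1)
      (by linarith [(abs_lt.1 hza).2] : z ≠ 1)
    have hode := GG_ode hza
    have hD : HasDerivAt (fun x : ℝ => GG x * Real.sqrt (1 - x ^ 2) - Real.arcsin x)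
        (Gd * s + GG z * (-z / s) - 1 / s) z := (hG.mul hsqrt).sub harc
    have hzero : Gd * s + GG z * (-z / s) - 1 / s = 0 := by
      have h2 : (Gd * s + GG z * (-z / s) - 1 / s) * s = Gd * s ^ 2 - z * GG z - 1 := by
        field_simp
        ring
      rw [hsq] at h2
      have h3 : (Gd * s + GG z * (-z / s) - 1 / s) * s = 0 := by
        rw [h2, hGd]
        linarith [hode]
      rcases mul_eq_zero.1 h3 with h4 | h4
      · exact h4
      · exact absurd h4 hs0.ne'
    rwa [hzero] at hD
  have hmem : t ∈ Set.Ioo (-1:ℝ) 1 := ⟨neg_lt_of_abs_lt h, lt_of_abs_lt h⟩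
  have h0 : GG t * Real.sqrt (1 - t ^ 2) - Real.arcsin t
      = GG 0 * Real.sqrt (1 - 0 ^ 2) - Real.arcsin 0 :=
    const_of_deriv_zero hderiv hmem (by norm_num)
  rw [GG_zero, Real.arcsin_zero] at h0
  simp at h0
  linarith [h0]

lemma arcsin_sq_eq_FF_Ioo : Set.EqOn (fun t : ℝ => Real.arcsin t ^ 2) FF (Set.Ioo (-1:ℝ) 1) := by
  intro t ht
  have hderiv : ∀ z ∈ Set.Ioo (-1:ℝ) 1,
      HasDerivAt (fun x : ℝ => Real.arcsin x ^ 2 - FF x) 0 z := by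
    intro z hz
    have hza : |z| < 1 := abs_lt.2 ⟨hz.1, hz.2⟩
    have hz2 : (0:ℝ) < 1 - z ^ 2 := by nlinarith [abs_lt.1 hza]
    set s : ℝ := Real.sqrt (1 - z ^ 2) with hs
    have hs0 : 0 < s := Real.sqrt_pos.2 hz2
    have harc := Real.hasDerivAt_arcsin (by linarith [(abs_lt.1 hza).1] : z ≠ -1)
      (by linarith [(abs_lt.1 hza).2] : z ≠ 1)
    have harc2 : HasDerivAt (fun x : ℝ => Real.arcsin x ^ 2)
        (2 * Real.arcsin z * (1 / s)) z := by
      have := harc.pow 2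
      refine this.congr_deriv ?_
      rw [hs]
      push_cast
      ring
    have hF := hasDerivAt_FF hza
    have hGeq := GG_eq hza
    have hD : HasDerivAt (fun x : ℝ => Real.arcsin x ^ 2 - FF x)
        (2 * Real.arcsin z * (1 / s) - 2 * GG z) z := harc2.sub hF
    have hzero : 2 * Real.arcsin z * (1 / s) - 2 * GG z = 0 := by
      rw [← hGeq, ← hs]
      field_simp
      ring
    rwa [hzero] at hD
  have h0 : Real.arcsin t ^ 2 - FF t = Real.arcsin 0 ^ 2 - FF 0 :=
    const_of_deriv_zero hderiv ht (by norm_num)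
  rw [FF_zero, Real.arcsin_zero] at h0
  simp only
  nlinarith [h0]

lemma continuousOn_FF : ContinuousOn FF (Set.Icc (-1:ℝ) 1) := by
  refine continuousOn_tsum (u := fun n : ℕ => dd n / ((n:ℝ) + 1))
    (fun i => (continuousOn_const.mul (continuousOn_pow _))) summable_M
    (fun n x hx => ?_)
  have hx1 : |x| ≤ 1 := abs_le.2 ⟨hx.1, hx.2⟩
  have hdn : (0:ℝ) ≤ dd n / ((n:ℝ)+1) := div_nonneg (dd_pos n).le (by positivity)
  rw [Real.norm_eq_abs, abs_mul, abs_of_nonneg hdn, abs_pow]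
  calc dd n / ((n:ℝ)+1) * |x| ^ (2*n+2) ≤ dd n / ((n:ℝ)+1) * 1 :=
        mul_le_mul_of_nonneg_left (pow_le_one₀ (abs_nonneg x) hx1) hdn
    _ = dd n / ((n:ℝ)+1) := mul_one _

lemma arcsin_sq_eq_FF {t : ℝ} (ht : |t| ≤ 1) : Real.arcsin t ^ 2 = FF t := by
  have hIcc : t ∈ Set.Icc (-1:ℝ) 1 := by
    rcases abs_le.1 ht with ⟨h1, h2⟩
    exact ⟨h1, h2⟩
  have hclos : Set.Icc (-1:ℝ) 1 ⊆ closure (Set.Ioo (-1:ℝ) 1) := by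
    rw [closure_Ioo (by norm_num : (-1:ℝ) ≠ 1)]
  have := arcsin_sq_eq_FF_Ioo.of_subset_closure
    (Real.continuous_arcsin.pow 2).continuousOn continuousOn_FF
    Set.Ioo_subset_Icc_self hclos
  exact this hIcc

theorem arcsin_sq_series (t : ℝ) (ht : |t| ≤ 1) :
    (Real.arcsin t) ^ 2 =
      (1 / 2) * ∑' n : ℕ, ((2 * (n + 1))‼ : ℝ) / ((2 * (n + 1) - 1)‼ : ℝ) *
        t ^ (2 * (n + 1)) / ((n + 1 : ℕ) : ℝ) ^ 2 := by
  have hterm : ∀ n : ℕ, ((2 * (n + 1))‼ : ℝ) / ((2 * (n + 1) - 1)‼ : ℝ) *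
      t ^ (2 * (n + 1)) / ((n + 1 : ℕ) : ℝ) ^ 2
      = 2 * (dd n / ((n:ℝ) + 1) * t ^ (2 * n + 2)) := by
    intro n
    have e1 : 2 * (n + 1) - 1 = 2 * n + 1 := by omega
    have e2 : 2 * (n + 1) = 2 * n + 2 := by omega
    rw [e1, e2]
    have e3 : (2 * n + 2)‼ = (2 * n + 2) * (2 * n)‼ := Nat.doubleFactorial_add_two (2 * n)
    rw [dd, e3]
    have hp1 : ((2 * n + 1)‼ : ℝ) ≠ 0 := by exact_mod_cast (Nat.doubleFactorial_pos _).ne'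
    have hp2 : ((n:ℝ) + 1) ≠ 0 := by positivity
    push_cast
    field_simp
  rw [tsum_congr hterm, tsum_mul_left, arcsin_sq_eq_FF ht, FF]
  ring
end

section
/- For all real t with 0 ≤ t ≤ 1, ∫_0^1 arcsin(t·u)/√(1-u^2) du = ∑_{n=1}^∞ t^(2n-1)/(2n-1)^2, i.e. equals the Legendre chi function χ₂(t). -/
open Real MeasureTheory Set intervalIntegral

lemma II_base : IntervalIntegrable (fun u : ℝ => (1 - u) ^ (-(1/2) : ℝ)) volume 0 1 := by
  have h : IntervalIntegrable (fun x : ℝ => x ^ (-(1/2) : ℝ)) volume 0 1 :=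
    intervalIntegral.intervalIntegrable_rpow' (by norm_num)
  simpa using (h.comp_sub_left 1).symm

lemma sqrt_one_sub_sq_le {u : ℝ} (hu0 : 0 ≤ u) (hu1 : u ≤ 1) :
    Real.sqrt (1 - u) ≤ Real.sqrt (1 - u^2) := by
  apply Real.sqrt_le_sqrt; nlinarith

lemma arsinh_special {s : ℝ} (hs0 : 0 < s) (hs1 : s < 1) :
    Real.arsinh (s / Real.sqrt (1 - s^2)) = (Real.log (1+s) - Real.log (1-s)) / 2 := by
  have h1 : (0:ℝ) < 1 - s^2 := by nlinarith
  have hsq : Real.sqrt (1 - s^2) > 0 := Real.sqrt_pos.mpr h1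
  rw [Real.arsinh]
  have h2 : 1 + (s / Real.sqrt (1 - s^2))^2 = 1 / (1 - s^2) := by
    rw [div_pow, Real.sq_sqrt h1.le]; field_simp; ring
  rw [h2, one_div, Real.sqrt_inv]
  have h3 : s / Real.sqrt (1 - s^2) + (Real.sqrt (1 - s^2))⁻¹ = (1 + s) / Real.sqrt (1 - s^2) := by
    field_simp; ring
  rw [h3, Real.log_div (by positivity) (ne_of_gt hsq), Real.log_sqrt h1.le]
  have h4 : 1 - s^2 = (1+s) * (1-s) := by ring
  rw [h4, Real.log_mul (by positivity) (by nlinarith)]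
  ring

lemma II_g {s : ℝ} (hs0 : 0 < s) (hs1 : s < 1) :
    IntervalIntegrable (fun u : ℝ => u / (Real.sqrt (1 - u^2) * Real.sqrt (1 - (s*u)^2)))
      volume 0 1 := by
  have hs2 : (0:ℝ) < 1 - s^2 := by nlinarith
  have hbase : IntervalIntegrable
      (fun u : ℝ => (1 - u) ^ (-(1/2) : ℝ) * (Real.sqrt (1 - s^2))⁻¹) volume 0 1 :=
    II_base.mul_const _
  apply hbase.mono_fun'
  · have hc : Continuous fun u : ℝ => Real.sqrt (1 - u^2) * Real.sqrt (1 - (s*u)^2) := by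
      fun_prop
    exact (measurable_id.div hc.measurable).aestronglyMeasurable
  · rw [Filter.EventuallyLE, ae_restrict_iff' measurableSet_uIoc]
    apply Filter.Eventually.of_forall
    intro u hu
    rw [Set.uIoc_of_le (by norm_num : (0:ℝ) ≤ 1)] at hu
    obtain ⟨hu0, hu1⟩ := hu
    have h1u : (0:ℝ) ≤ 1 - u := by linarith
    have hnn : 0 ≤ u / (Real.sqrt (1 - u^2) * Real.sqrt (1 - (s*u)^2)) := by positivity
    rw [Real.norm_of_nonneg hnn]
    rcases eq_or_lt_of_le hu1 with h | hu1'
    · subst h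
      norm_num [Real.zero_rpow]
    have h2 : Real.sqrt (1 - s^2) ≤ Real.sqrt (1 - (s*u)^2) := by
      apply Real.sqrt_le_sqrt
      have hu2 : u^2 ≤ 1 := by nlinarith
      have : (s*u)^2 ≤ s^2 := by rw [mul_pow]; nlinarith [sq_nonneg s]
      linarith
    have h3 : Real.sqrt (1 - u) ≤ Real.sqrt (1 - u^2) := sqrt_one_sub_sq_le hu0.le hu1
    have hpos1 : (0:ℝ) < Real.sqrt (1 - u) := Real.sqrt_pos.mpr (by linarith)
    have hpos2 : (0:ℝ) < Real.sqrt (1 - s^2) := Real.sqrt_pos.mpr hs2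
    have key : u / (Real.sqrt (1 - u^2) * Real.sqrt (1 - (s*u)^2)) ≤
        1 / (Real.sqrt (1 - u) * Real.sqrt (1 - s^2)) := by
      apply div_le_div₀ zero_le_one hu1'.le (by positivity)
      exact mul_le_mul h3 h2 hpos2.le (Real.sqrt_nonneg _)
    calc u / (Real.sqrt (1 - u^2) * Real.sqrt (1 - (s*u)^2))
        ≤ 1 / (Real.sqrt (1 - u) * Real.sqrt (1 - s^2)) := key
      _ = (1 - u) ^ (-(1/2) : ℝ) * (Real.sqrt (1 - s^2))⁻¹ := by
          rw [Real.rpow_neg h1u, ← Real.sqrt_eq_rpow, one_div, mul_inv]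


lemma inner_integral {s : ℝ} (hs0 : 0 < s) (hs1 : s < 1) :
    ∫ u in (0:ℝ)..1, u / (Real.sqrt (1 - u^2) * Real.sqrt (1 - (s*u)^2)) =
      (Real.log (1+s) - Real.log (1-s)) / (2*s) := by
  have hs2 : (0:ℝ) < 1 - s^2 := by nlinarith
  have hsqs : (0:ℝ) < Real.sqrt (1 - s^2) := Real.sqrt_pos.mpr hs2
  set c : ℝ := s / Real.sqrt (1 - s^2) with hc
  set φ : ℝ → ℝ := fun u => -s⁻¹ * Real.arsinh (c * Real.sqrt (1 - u^2)) with hφ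
  have hcont : ContinuousOn φ (Icc 0 1) := by
    apply Continuous.continuousOn
    have hin : Continuous fun u : ℝ => c * Real.sqrt (1 - u^2) := by fun_prop
    exact continuous_const.mul (Real.continuous_arsinh.comp hin)
  have hderiv : ∀ u ∈ Ioo (0:ℝ) 1,
      HasDerivAt φ (u / (Real.sqrt (1-u^2) * Real.sqrt (1-(s*u)^2))) u := by
    intro u hu
    obtain ⟨hu0, hu1⟩ := hu
    have hu2 : (0:ℝ) < 1 - u^2 := by nlinarith
    have hsu : (0:ℝ) < 1 - (s*u)^2 := by nlinarith
    have hsq2 : (0:ℝ) < Real.sqrt (1 - u^2) := Real.sqrt_pos.mpr hu2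
    have hsq3 : (0:ℝ) < Real.sqrt (1 - (s*u)^2) := Real.sqrt_pos.mpr hsu
    have h0 : HasDerivAt (fun u : ℝ => 1 - u^2) (-(2*u)) u := by
      simpa using ((hasDerivAt_pow 2 u).const_sub 1)
    have hw : HasDerivAt (fun u : ℝ => Real.sqrt (1 - u^2)) (-u / Real.sqrt (1-u^2)) u := by
      have h := (Real.hasDerivAt_sqrt (ne_of_gt hu2)).comp u h0
      refine h.congr_deriv ?_
      field_simp
    have harc := (Real.hasDerivAt_arsinh (c * Real.sqrt (1-u^2))).comp u (hw.const_mul c)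
    have hfull := harc.const_mul (-s⁻¹)
    refine hfull.congr_deriv ?_
    have hkey : 1 + (c * Real.sqrt (1-u^2))^2 = (1-(s*u)^2)/(1-s^2) := by
      rw [hc, mul_pow, div_pow, Real.sq_sqrt hu2.le, Real.sq_sqrt hs2.le]
      field_simp
      ring
    rw [hkey, Real.sqrt_div hsu.le, hc]
    rw [inv_div]
    field_simp
  have hint := II_g hs0 hs1
  have heq := intervalIntegral.integral_eq_sub_of_hasDeriv_right_of_le (by norm_num : (0:ℝ) ≤ 1)
      hcont (fun u hu => (hderiv u hu).hasDerivWithinAt) hint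
  rw [heq, hφ]
  have e1 : Real.sqrt (1 - (1:ℝ)^2) = 0 := by norm_num
  have e0 : Real.sqrt (1 - (0:ℝ)^2) = 1 := by norm_num
  simp only [e1, e0, mul_zero, mul_one, Real.arsinh_zero]
  rw [arsinh_special hs0 hs1, zero_sub, neg_mul, neg_neg, inv_mul_eq_div, div_div]

lemma arcsin_eq_integral {t u : ℝ} (ht0 : 0 ≤ t) (ht1 : t ≤ 1) (hu0 : 0 < u) (hu1 : u < 1) :
    Real.arcsin (t*u) = ∫ s in (0:ℝ)..t, u / Real.sqrt (1 - (s*u)^2) := by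
  have hpos : ∀ s ∈ Icc (0:ℝ) t, (0:ℝ) < 1 - (s*u)^2 := by
    intro s hs
    obtain ⟨h1, h2⟩ := hs
    have hsu0 : 0 ≤ s*u := by positivity
    have hsu1 : s*u < 1 := by nlinarith
    nlinarith
  have hderiv : ∀ s ∈ uIcc (0:ℝ) t,
      HasDerivAt (fun s => Real.arcsin (s*u)) (u / Real.sqrt (1-(s*u)^2)) s := by
    intro s hs
    rw [uIcc_of_le ht0] at hs
    have h := hpos s hs
    have h1 : s*u ≠ 1 := by nlinarith
    have h2 : s*u ≠ -1 := by nlinarith [hs.1, hu0.le, mul_nonneg hs.1 hu0.le]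
    have ha := (Real.hasDerivAt_arcsin h2 h1).comp s (hasDerivAt_mul_const u)
    refine ha.congr_deriv ?_
    rw [div_mul_eq_mul_div, one_mul]
  have hcont : ContinuousOn (fun s => u / Real.sqrt (1-(s*u)^2)) (uIcc (0:ℝ) t) := by
    rw [uIcc_of_le ht0]
    apply ContinuousOn.div continuousOn_const
    · fun_prop
    · intro s hs
      exact ne_of_gt (Real.sqrt_pos.mpr (hpos s hs))
  have := intervalIntegral.integral_eq_sub_of_hasDerivAt hderiv
    (hcont.intervalIntegrable)
  rw [this]
  simp

lemma hasSum_series {s : ℝ} (hs0 : 0 < s) (hs1 : s < 1) :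
    HasSum (fun n : ℕ => s^(2*n) / (2*(n:ℝ)+1))
      ((Real.log (1+s) - Real.log (1-s)) / (2*s)) := by
  have h := hasSum_log_sub_log_of_abs_lt_one (abs_lt.mpr ⟨by linarith, hs1⟩)
  have h2 := h.div_const (2*s)
  refine h2.congr_fun (fun n => ?_)
  have hne : (2*(n:ℝ)+1) ≠ 0 := by positivity
  rw [pow_succ]
  field_simp

lemma summable_chi {t : ℝ} (ht0 : 0 ≤ t) (ht1 : t ≤ 1) :
    Summable (fun n : ℕ => t^(2*n+1) / (2*(n:ℝ)+1)^2) := by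
  have hbase : Summable (fun n : ℕ => 1 / ((n:ℝ)+1)^2) := by
    have h := (Real.summable_one_div_nat_pow (p := 2)).mpr one_lt_two
    have h2 := (summable_nat_add_iff 1).mpr h
    simpa using h2
  apply Summable.of_nonneg_of_le (fun n => by positivity) _ hbase
  intro n
  have h1 : t^(2*n+1) ≤ 1 := pow_le_one₀ ht0 ht1
  have h2 : ((n:ℝ)+1)^2 ≤ (2*(n:ℝ)+1)^2 := by nlinarith [Nat.cast_nonneg (α := ℝ) n]
  calc t^(2*n+1) / (2*(n:ℝ)+1)^2 ≤ 1 / (2*(n:ℝ)+1)^2 := by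
        gcongr
    _ ≤ 1 / ((n:ℝ)+1)^2 := by gcongr

theorem chi2_integral (t : ℝ) (ht0 : 0 ≤ t) (ht1 : t ≤ 1) :
    ∫ u in (0:ℝ)..1, Real.arcsin (t * u) / Real.sqrt (1 - u ^ 2) =
      ∑' n : ℕ, t ^ (2 * (n + 1) - 1) / ((2 * (n + 1) - 1 : ℕ) : ℝ) ^ 2 := by
  have hrhs : (∑' n : ℕ, t ^ (2 * (n + 1) - 1) / ((2 * (n + 1) - 1 : ℕ) : ℝ) ^ 2)
      = ∑' n : ℕ, t^(2*n+1) / (2*(n:ℝ)+1)^2 := by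
    apply tsum_congr
    intro n
    have h : 2 * (n + 1) - 1 = 2*n+1 := by omega
    rw [h]
    push_cast
    ring_nf
  rw [hrhs]
  set g : ℝ → ℝ → ℝ := fun s u => u / (Real.sqrt (1-u^2) * Real.sqrt (1-(s*u)^2)) with hg
  have key : (∫⁻ u in Ioo (0:ℝ) 1, ENNReal.ofReal (Real.arcsin (t*u) / Real.sqrt (1-u^2)))
      = ∑' n : ℕ, ENNReal.ofReal (t^(2*n+1) / (2*(n:ℝ)+1)^2) := by
    calc
      (∫⁻ u in Ioo (0:ℝ) 1, ENNReal.ofReal (Real.arcsin (t*u) / Real.sqrt (1-u^2)))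
          = ∫⁻ u in Ioo (0:ℝ) 1, ∫⁻ s in Ioo (0:ℝ) t, ENNReal.ofReal (g s u) := by
            apply setLIntegral_congr_fun measurableSet_Ioo
            simp only [EqOn]
            intro u hu
            obtain ⟨hu0, hu1⟩ := hu
            have hptw : ∀ s : ℝ, g s u = (u / Real.sqrt (1-(s*u)^2)) / Real.sqrt (1-u^2) := by
              intro s; rw [hg]; rw [div_div, mul_comm]
            have hrep : Real.arcsin (t*u) / Real.sqrt (1-u^2) = ∫ s in (0:ℝ)..t, g s u := by
              rw [arcsin_eq_integral ht0 ht1 hu0 hu1, ← intervalIntegral.integral_div]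
              exact (intervalIntegral.integral_congr (fun s _ => hptw s)).symm
            rw [hrep]
            have hcont : ContinuousOn (fun s => g s u) (uIcc (0:ℝ) t) := by
              apply ContinuousOn.div continuousOn_const (by fun_prop)
              intro s hs
              rw [uIcc_of_le ht0] at hs
              have hsu0 : 0 ≤ s*u := mul_nonneg hs.1 hu0.le
              have hsu1 : s*u < 1 := by nlinarith [hs.2]
              have h1 : (0:ℝ) < 1 - (s*u)^2 := by nlinarith
              have h2 : (0:ℝ) < 1 - u^2 := by nlinarith
              have : 0 < Real.sqrt (1-u^2) * Real.sqrt (1-(s*u)^2) := by positivity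
              exact this.ne'
            have hii := hcont.intervalIntegrable (μ := volume)
            rw [intervalIntegrable_iff, Set.uIoc_of_le ht0] at hii
            have hnn : 0 ≤ᵐ[volume.restrict (Ioc (0:ℝ) t)] fun s => g s u := by
              apply Filter.Eventually.of_forall
              intro s
              exact div_nonneg hu0.le (by positivity)
            rw [intervalIntegral.integral_of_le ht0,
              MeasureTheory.ofReal_integral_eq_lintegral_ofReal hii hnn]
            exact (setLIntegral_congr Ioo_ae_eq_Ioc).symm
      _ = ∫⁻ s in Ioo (0:ℝ) t, ∫⁻ u in Ioo (0:ℝ) 1, ENNReal.ofReal (g s u) := by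
            apply MeasureTheory.lintegral_lintegral_swap
            apply Measurable.aemeasurable
            apply ENNReal.measurable_ofReal.comp
            have hden : Continuous fun p : ℝ × ℝ =>
                Real.sqrt (1-p.1^2) * Real.sqrt (1-(p.2*p.1)^2) := by fun_prop
            exact measurable_fst.div hden.measurable
      _ = ∫⁻ s in Ioo (0:ℝ) t, ∑' n : ℕ, ENNReal.ofReal (s^(2*n) / (2*(n:ℝ)+1)) := by
            apply setLIntegral_congr_fun measurableSet_Ioo
            simp only [EqOn]
            intro s hs
            obtain ⟨hs0, hst⟩ := hs
            have hs1 : s < 1 := lt_of_lt_of_le hst ht1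
            have hii := II_g hs0 hs1
            rw [intervalIntegrable_iff, Set.uIoc_of_le zero_le_one] at hii
            have hnn : 0 ≤ᵐ[volume.restrict (Ioc (0:ℝ) 1)] fun u => g s u := by
              refine (ae_restrict_iff' measurableSet_Ioc).mpr (Filter.Eventually.of_forall ?_)
              intro u hu
              exact div_nonneg hu.1.le (by positivity)
            have h1 : (∫⁻ u in Ioo (0:ℝ) 1, ENNReal.ofReal (g s u))
                = ENNReal.ofReal ((Real.log (1+s) - Real.log (1-s))/(2*s)) := by
              rw [setLIntegral_congr Ioo_ae_eq_Ioc,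
                ← MeasureTheory.ofReal_integral_eq_lintegral_ofReal hii hnn,
                ← intervalIntegral.integral_of_le zero_le_one, inner_integral hs0 hs1]
            rw [h1]
            have hsum := hasSum_series hs0 hs1
            rw [← hsum.tsum_eq]
            exact ENNReal.ofReal_tsum_of_nonneg (fun n => by positivity) hsum.summable
      _ = ∑' n : ℕ, ∫⁻ s in Ioo (0:ℝ) t, ENNReal.ofReal (s^(2*n) / (2*(n:ℝ)+1)) := by
            apply MeasureTheory.lintegral_tsum
            intro n
            apply Measurable.aemeasurable
            apply ENNReal.measurable_ofReal.comp
            fun_prop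
      _ = ∑' n : ℕ, ENNReal.ofReal (t^(2*n+1) / (2*(n:ℝ)+1)^2) := by
            apply tsum_congr
            intro n
            have hcont : Continuous fun s : ℝ => s^(2*n) / (2*(n:ℝ)+1) := by fun_prop
            have hii : IntegrableOn (fun s : ℝ => s^(2*n)/(2*(n:ℝ)+1)) (Ioc 0 t) volume :=
              hcont.integrableOn_Ioc (μ := volume)
            have hnn : 0 ≤ᵐ[volume.restrict (Ioc (0:ℝ) t)] fun s : ℝ => s^(2*n)/(2*(n:ℝ)+1) := by
              refine (ae_restrict_iff' measurableSet_Ioc).mpr (Filter.Eventually.of_forall ?_)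
              intro s hs
              have := hs.1
              positivity
            rw [setLIntegral_congr Ioo_ae_eq_Ioc,
              ← MeasureTheory.ofReal_integral_eq_lintegral_ofReal hii hnn,
              ← intervalIntegral.integral_of_le ht0]
            congr 1
            rw [intervalIntegral.integral_div, integral_pow]
            push_cast
            rw [zero_pow (by omega : 2*n+1 ≠ 0), sub_zero, div_div, ← pow_two]
  have hnnf : 0 ≤ᵐ[volume.restrict (Ioc (0:ℝ) 1)]
      fun u => Real.arcsin (t*u) / Real.sqrt (1-u^2) := by
    refine (ae_restrict_iff' measurableSet_Ioc).mpr (Filter.Eventually.of_forall ?_)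
    intro u hu
    exact div_nonneg (Real.arcsin_nonneg.mpr (mul_nonneg ht0 hu.1.le)) (Real.sqrt_nonneg _)
  have hmf : AEStronglyMeasurable (fun u => Real.arcsin (t*u) / Real.sqrt (1-u^2))
      (volume.restrict (Ioc (0:ℝ) 1)) := by
    apply Measurable.aestronglyMeasurable
    apply Measurable.div
    · exact (Real.continuous_arcsin.comp (continuous_const.mul continuous_id)).measurable
    · exact (by fun_prop : Continuous fun u : ℝ => Real.sqrt (1-u^2)).measurable
  rw [intervalIntegral.integral_of_le zero_le_one,
    MeasureTheory.integral_eq_lintegral_of_nonneg_ae hnnf hmf,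
    ← setLIntegral_congr Ioo_ae_eq_Ioc, key]
  have hsummable := summable_chi ht0 ht1
  rw [← ENNReal.ofReal_tsum_of_nonneg
      (fun n => div_nonneg (pow_nonneg ht0 _) (by positivity)) hsummable,
    ENNReal.toReal_ofReal
      (tsum_nonneg (fun n => div_nonneg (pow_nonneg ht0 _) (by positivity)))]
end

section
/- For all real t with 0 ≤ t ≤ 1, (1/π) · ∫_0^1 (arcsin(t·u))^2/√(1-u^2) du = (1/4)·Li₂(t^2). -/
open Real Set MeasureTheory Finset

noncomputable def dc : ℕ → ℝ
  | 0 => 1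
  | n+1 => dc n * (2*(n:ℝ)+2)^2 / ((2*(n:ℝ)+3)*(2*(n:ℝ)+4))

lemma dc_pos (n : ℕ) : 0 < dc n := by
  induction n with
  | zero => norm_num [dc]
  | succ n ih =>
    rw [dc]
    positivity

lemma dc_le_one (n : ℕ) : dc n ≤ 1 := by
  induction n with
  | zero => norm_num [dc]
  | succ n ih =>
    rw [dc, div_le_one (by positivity)]
    calc dc n * (2*(n:ℝ)+2)^2 ≤ 1 * (2*(n:ℝ)+2)^2 := by
          gcongr
      _ ≤ (2*(n:ℝ)+3)*(2*(n:ℝ)+4) := by nlinarith [n.cast_nonneg (α := ℝ)]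

lemma dc_succ (n : ℕ) :
    dc (n+1) * ((2*(n:ℝ)+3)*(2*(n:ℝ)+4)) = dc n * (2*(n:ℝ)+2)^2 := by
  rw [dc]
  have h : ((2*(n:ℝ)+3)*(2*(n:ℝ)+4)) ≠ 0 := by positivity
  field_simp

lemma dc_wallis (n : ℕ) :
    dc n * ∏ i ∈ Finset.range (n+1), (2*(i:ℝ)+1)/(2*(i:ℝ)+2) = 1/(2*((n:ℝ)+1)^2) := by
  induction n with
  | zero => norm_num [dc]
  | succ n ih =>
    have key : dc (n+1) * ∏ i ∈ Finset.range (n+2), (2*(i:ℝ)+1)/(2*(i:ℝ)+2)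
        = (dc n * ∏ i ∈ Finset.range (n+1), (2*(i:ℝ)+1)/(2*(i:ℝ)+2))
          * ((2*(n:ℝ)+2)^2 / ((2*(n:ℝ)+3)*(2*(n:ℝ)+4))
             * ((2*((n:ℕ):ℝ)+3)/(2*((n:ℕ):ℝ)+4))) := by
      rw [Finset.prod_range_succ, dc]
      push_cast
      ring
    rw [key, ih]
    have h2 : (2*(n:ℝ)+3) ≠ 0 := by positivity
    have h3 : (2*(n:ℝ)+4) ≠ 0 := by positivity
    have h4 : ((n:ℝ)+1) ≠ 0 := by positivity
    push_cast
    field_simp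
    ring

lemma master_summable {q : ℝ} (hq : |q| < 1) :
    Summable (fun n : ℕ => (2*(n:ℝ)+2)*(2*(n:ℝ)+1) * q^n) := by
  have h0 : Summable (fun n : ℕ => ((n:ℝ)^2 * q^n)) := by
    simpa using summable_pow_mul_geometric_of_norm_lt_one 2 (r := q) (by rwa [Real.norm_eq_abs])
  have h1 : Summable (fun n : ℕ => ((n:ℝ)^1 * q^n)) := by
    simpa using summable_pow_mul_geometric_of_norm_lt_one 1 (r := q) (by rwa [Real.norm_eq_abs])
  have h2 : Summable (fun n : ℕ => ((n:ℝ)^0 * q^n)) := by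
    simpa using summable_pow_mul_geometric_of_norm_lt_one 0 (r := q) (by rwa [Real.norm_eq_abs])
  have := ((h0.mul_left 4).add ((h1.mul_left 6).add (h2.mul_left 2)))
  refine this.congr fun n => ?_
  ring
lemma term_bound {y r : ℝ} (hy : |y| ≤ r) (hr : r ≤ 1) (n m : ℕ) (hm : 2*n ≤ m)
    {c : ℝ} (hc0 : 0 ≤ c) (hc : c ≤ (2*(n:ℝ)+2)*(2*(n:ℝ)+1)) :
    ‖c * y^m‖ ≤ (2*(n:ℝ)+2)*(2*(n:ℝ)+1) * (r^2)^n := by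
  have hr0 : 0 ≤ r := le_trans (abs_nonneg y) hy
  have h1 : |y|^m ≤ r^m := pow_le_pow_left₀ (abs_nonneg y) hy m
  have h2 : r^m ≤ r^(2*n) := pow_le_pow_of_le_one hr0 hr hm
  have h3 : (r^2)^n = r^(2*n) := by rw [← pow_mul]
  rw [Real.norm_eq_abs, abs_mul, abs_pow, abs_of_nonneg hc0]
  calc c * |y|^m ≤ ((2*(n:ℝ)+2)*(2*(n:ℝ)+1)) * r^(2*n) := by
        apply mul_le_mul hc (h1.trans h2) (by positivity) (by positivity)
    _ = (2*(n:ℝ)+2)*(2*(n:ℝ)+1) * (r^2)^n := by rw [h3]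

lemma summable0 {x : ℝ} (hx : |x| < 1) : Summable (fun n : ℕ => dc n * x^(2*n+2)) := by
  have hq : |x ^ 2| < 1 := by rw [abs_pow]; exact pow_lt_one₀ (abs_nonneg x) hx (by norm_num)
  refine Summable.of_norm_bounded (master_summable hq) fun n => ?_
  have := term_bound (r := |x|) le_rfl hx.le n (2*n+2) (by omega) (dc_pos n).le
      (by nlinarith [dc_le_one n, n.cast_nonneg (α := ℝ)])
  rwa [sq_abs] at this

lemma summable1 {x : ℝ} (hx : |x| < 1) :
    Summable (fun n : ℕ => (2*(n:ℝ)+2) * dc n * x^(2*n+1)) := by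
  have hq : |x ^ 2| < 1 := by rw [abs_pow]; exact pow_lt_one₀ (abs_nonneg x) hx (by norm_num)
  refine Summable.of_norm_bounded (master_summable hq) fun n => ?_
  have := term_bound (c := (2*(n:ℝ)+2) * dc n) (r := |x|) le_rfl hx.le n (2*n+1) (by omega)
      (mul_nonneg (by positivity) (dc_pos n).le)
      (by nlinarith [dc_le_one n, dc_pos n, n.cast_nonneg (α := ℝ)])
  rwa [sq_abs] at this

lemma summable2 {x : ℝ} (hx : |x| < 1) :
    Summable (fun n : ℕ => (2*(n:ℝ)+2) * ((2*(n:ℝ)+1) * (dc n * x^(2*n)))) := by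
  have hq : |x ^ 2| < 1 := by rw [abs_pow]; exact pow_lt_one₀ (abs_nonneg x) hx (by norm_num)
  refine Summable.of_norm_bounded (master_summable hq) fun n => ?_
  have := term_bound (c := (2*(n:ℝ)+2) * ((2*(n:ℝ)+1) * dc n)) (r := |x|) le_rfl hx.le n (2*n)
      (by omega)
      (mul_nonneg (by positivity) (mul_nonneg (by positivity) (dc_pos n).le))
      (by
        have hle : (2*(n:ℝ)+1) * dc n ≤ (2*(n:ℝ)+1) * 1 := by
          have := dc_le_one n
          gcongr
        calc (2*(n:ℝ)+2) * ((2*(n:ℝ)+1) * dc n) ≤ (2*(n:ℝ)+2) * ((2*(n:ℝ)+1) * 1) := by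
              have h2 : (0:ℝ) ≤ 2*(n:ℝ)+2 := by positivity
              exact mul_le_mul_of_nonneg_left hle h2
          _ = (2*(n:ℝ)+2) * (2*(n:ℝ)+1) := by ring)
  rw [sq_abs] at this
  refine (le_of_eq ?_).trans this
  congr 1
  ring

noncomputable def S0 (x : ℝ) : ℝ := ∑' n : ℕ, dc n * x^(2*n+2)
noncomputable def S1 (x : ℝ) : ℝ := ∑' n : ℕ, (2*(n:ℝ)+2) * dc n * x^(2*n+1)
noncomputable def S2 (x : ℝ) : ℝ := ∑' n : ℕ, (2*(n:ℝ)+2) * ((2*(n:ℝ)+1) * (dc n * x^(2*n)))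

lemma hasDerivAt_S0 {x : ℝ} (hx : |x| < 1) : HasDerivAt S0 (S1 x) x := by
  set r := (1+|x|)/2 with hr
  have hxr : |x| < r := by rw [hr]; linarith
  have hr1 : r < 1 := by rw [hr]; linarith
  have hr0 : 0 ≤ r := le_trans (abs_nonneg x) hxr.le
  have hq : |r^2| < 1 := by
    rw [abs_pow, abs_of_nonneg hr0]; exact pow_lt_one₀ hr0 hr1 (by norm_num)
  have h0r : (0:ℝ) ∈ Set.Ioo (-r) r := by constructor <;> nlinarith [abs_nonneg x]
  exact hasDerivAt_tsum_of_isPreconnected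
    (u := fun n : ℕ => (2*(n:ℝ)+2)*(2*(n:ℝ)+1) * (r^2)^n)
    (g' := fun (n : ℕ) (y : ℝ) => (2*(n:ℝ)+2) * dc n * y^(2*n+1))
    (master_summable hq) isOpen_Ioo (convex_Ioo _ _).isPreconnected
    (fun n y _ => by
      have h := (hasDerivAt_pow (2*n+2) y).const_mul (dc n)
      refine h.congr_deriv ?_
      have : 2*n+2-1 = 2*n+1 := by omega
      rw [this]; push_cast; ring)
    (fun n y hy => by
      have hyr : |y| ≤ r := le_of_lt (abs_lt.mpr ⟨hy.1, hy.2⟩)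
      exact term_bound (c := (2*(n:ℝ)+2) * dc n) hyr hr1.le n (2*n+1) (by omega)
        (mul_nonneg (by positivity) (dc_pos n).le)
        (by nlinarith [dc_le_one n, dc_pos n, n.cast_nonneg (α := ℝ)]))
    h0r
    (by
      refine summable_zero.congr fun n => ?_
      simp)
    (abs_lt.mp hxr)

lemma hasDerivAt_S1 {x : ℝ} (hx : |x| < 1) : HasDerivAt S1 (S2 x) x := by
  set r := (1+|x|)/2 with hr
  have hxr : |x| < r := by rw [hr]; linarith
  have hr1 : r < 1 := by rw [hr]; linarith
  have hr0 : 0 ≤ r := le_trans (abs_nonneg x) hxr.le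
  have hq : |r^2| < 1 := by
    rw [abs_pow, abs_of_nonneg hr0]; exact pow_lt_one₀ hr0 hr1 (by norm_num)
  have h0r : (0:ℝ) ∈ Set.Ioo (-r) r := by constructor <;> nlinarith [abs_nonneg x]
  exact hasDerivAt_tsum_of_isPreconnected
    (u := fun n : ℕ => (2*(n:ℝ)+2)*(2*(n:ℝ)+1) * (r^2)^n)
    (g' := fun (n : ℕ) (y : ℝ) => (2*(n:ℝ)+2) * ((2*(n:ℝ)+1) * (dc n * y^(2*n))))
    (master_summable hq) isOpen_Ioo (convex_Ioo _ _).isPreconnected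
    (fun n y _ => by
      have h := (hasDerivAt_pow (2*n+1) y).const_mul ((2*(n:ℝ)+2) * dc n)
      refine h.congr_deriv ?_
      have : 2*n+1-1 = 2*n := by omega
      rw [this]; push_cast; ring)
    (fun n y hy => by
      have hyr : |y| ≤ r := le_of_lt (abs_lt.mpr ⟨hy.1, hy.2⟩)
      have := term_bound (c := (2*(n:ℝ)+2) * ((2*(n:ℝ)+1) * dc n)) hyr hr1.le n (2*n)
        (by omega)
        (mul_nonneg (by positivity) (mul_nonneg (by positivity) (dc_pos n).le))
        (by
          have hle : (2*(n:ℝ)+1) * dc n ≤ (2*(n:ℝ)+1) * 1 := by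
            have := dc_le_one n
            gcongr
          calc (2*(n:ℝ)+2) * ((2*(n:ℝ)+1) * dc n) ≤ (2*(n:ℝ)+2) * ((2*(n:ℝ)+1) * 1) :=
                mul_le_mul_of_nonneg_left hle (by positivity)
            _ = (2*(n:ℝ)+2) * (2*(n:ℝ)+1) := by ring)
      refine (le_of_eq ?_).trans this
      congr 1
      ring)
    h0r
    (by
      refine summable_zero.congr fun n => ?_
      simp)
    (abs_lt.mp hxr)

lemma ode {x : ℝ} (hx : |x| < 1) : (1 - x^2) * S2 x - x * S1 x = 2 := by
  have sa : Summable (fun n : ℕ => (2*(n:ℝ)+2) * ((2*(n:ℝ)+1) * (dc n * x^(2*n+2)))) :=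
    ((summable2 hx).mul_left (x^2)).congr fun n => by ring
  have sb : Summable (fun n : ℕ => (2*(n:ℝ)+2) * (dc n * x^(2*n+2))) :=
    ((summable1 hx).mul_left x).congr fun n => by ring
  have h1 : x * S1 x = ∑' n : ℕ, (2*(n:ℝ)+2) * (dc n * x^(2*n+2)) := by
    rw [S1, ← tsum_mul_left]
    exact tsum_congr fun n => by ring
  have h2 : x^2 * S2 x = ∑' n : ℕ, (2*(n:ℝ)+2) * ((2*(n:ℝ)+1) * (dc n * x^(2*n+2))) := by
    rw [S2, ← tsum_mul_left]
    exact tsum_congr fun n => by ring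
  have hsplit : S2 x
      = 2 + ((∑' n : ℕ, (2*(n:ℝ)+2) * ((2*(n:ℝ)+1) * (dc n * x^(2*n+2))))
          + ∑' n : ℕ, (2*(n:ℝ)+2) * (dc n * x^(2*n+2))) := by
    rw [S2, Summable.tsum_eq_zero_add (summable2 hx)]
    congr 1
    · norm_num [dc]
    · rw [← Summable.tsum_add sa sb]
      refine tsum_congr fun n => ?_
      have hd := dc_succ n
      push_cast
      have expand : (2*((n:ℝ)+1)+2) * ((2*((n:ℝ)+1)+1) * (dc (n+1) * x^(2*(n+1))))
          = (dc (n+1) * ((2*(n:ℝ)+3)*(2*(n:ℝ)+4))) * x^(2*n+2) := by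
        have : 2*(n+1) = 2*n+2 := by omega
        rw [this]; ring
      rw [expand, hd]
      ring
  rw [show (1 - x^2) * S2 x - x * S1 x = S2 x - (x^2 * S2 x + x * S1 x) by ring,
    h1, h2, hsplit]
  ring

open Real Set

lemma hasDerivAt_p {x : ℝ} (hx : x ∈ Ioo (-1:ℝ) 1) :
    HasDerivAt (fun y => Real.sqrt (1-y^2) * S1 y / 2) (1/Real.sqrt (1-x^2)) x := by
  have hx1 : |x| < 1 := abs_lt.mpr ⟨hx.1, hx.2⟩
  have h1x : (0:ℝ) < 1 - x^2 := by nlinarith [abs_lt.mp (abs_lt.mpr ⟨hx.1, hx.2⟩)]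
  have hsq : HasDerivAt (fun y : ℝ => 1 - y^2) (-(2*x)) x := by
    have := (hasDerivAt_pow 2 x).const_sub 1
    refine this.congr_deriv ?_
    norm_num
  have hroot := hsq.sqrt (ne_of_gt h1x)
  have hmul := (hroot.mul (hasDerivAt_S1 hx1)).div_const 2
  refine hmul.congr_deriv ?_
  set s := Real.sqrt (1-x^2) with hs
  have hs0 : 0 < s := Real.sqrt_pos.mpr h1x
  have hs2 : s^2 = 1 - x^2 := Real.sq_sqrt h1x.le
  have hode : s^2 * S2 x - x * S1 x = 2 := by rw [hs2]; exact ode hx1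
  field_simp
  nlinarith [hode, hs0]

lemma sqrt_S1_eq_arcsin {x : ℝ} (hx : x ∈ Ioo (-1:ℝ) 1) :
    Real.sqrt (1-x^2) * S1 x / 2 = Real.arcsin x := by
  set F := fun y : ℝ => Real.sqrt (1-y^2) * S1 y / 2 - Real.arcsin y with hF
  have hD : ∀ y ∈ Ioo (-1:ℝ) 1, HasDerivAt F 0 y := by
    intro y hy
    have h := (hasDerivAt_p hy).sub (Real.hasDerivAt_arcsin (by linarith [hy.1]) (by linarith [hy.2]))
    simp at h
    exact h
  have hdiff : DifferentiableOn ℝ F (Ioo (-1:ℝ) 1) :=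
    fun y hy => (hD y hy).differentiableAt.differentiableWithinAt
  have hzero : ∀ y ∈ Ioo (-1:ℝ) 1, fderivWithin ℝ F (Ioo (-1:ℝ) 1) y = 0 := by
    intro y hy
    rw [fderivWithin_of_isOpen isOpen_Ioo hy, (hD y hy).hasFDerivAt.fderiv]
    ext
    simp
  have h0 : (0:ℝ) ∈ Ioo (-1:ℝ) 1 := by constructor <;> norm_num
  have := (convex_Ioo (-1:ℝ) 1).is_const_of_fderivWithin_eq_zero hdiff hzero hx h0
  have hF0 : F 0 = 0 := by simp [hF, S1]
  have : F x = 0 := by rw [this, hF0]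
  rw [hF] at this
  linarith [this]

lemma S0_eq_arcsin_sq {x : ℝ} (hx : |x| < 1) :
    Real.arcsin x ^ 2 = ∑' n : ℕ, dc n * x^(2*n+2) := by
  have hxI : x ∈ Ioo (-1:ℝ) 1 := ⟨(abs_lt.mp hx).1, (abs_lt.mp hx).2⟩
  set G := fun y : ℝ => S0 y - Real.arcsin y ^ 2 with hG
  have hD : ∀ y ∈ Ioo (-1:ℝ) 1, HasDerivAt G 0 y := by
    intro y hy
    have hy1 : |y| < 1 := abs_lt.mpr ⟨hy.1, hy.2⟩
    have h1y : (0:ℝ) < 1 - y^2 := by nlinarith [abs_lt.mp hy1]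
    have hs0 : 0 < Real.sqrt (1-y^2) := Real.sqrt_pos.mpr h1y
    have ha := (Real.hasDerivAt_arcsin (x := y) (by linarith [hy.1]) (by linarith [hy.2])).pow 2
    have h := (hasDerivAt_S0 hy1).sub ha
    have hval : S1 y - ((2:ℕ):ℝ) * Real.arcsin y ^ (2-1) * (1/Real.sqrt (1-y^2)) = 0 := by
      have harc := sqrt_S1_eq_arcsin hy
      rw [← harc]
      have hne : Real.sqrt (1-y^2) ≠ 0 := ne_of_gt hs0
      field_simp
      norm_num
      ring
    rwa [hval] at h
  have hdiff : DifferentiableOn ℝ G (Ioo (-1:ℝ) 1) :=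
    fun y hy => (hD y hy).differentiableAt.differentiableWithinAt
  have hzero : ∀ y ∈ Ioo (-1:ℝ) 1, fderivWithin ℝ G (Ioo (-1:ℝ) 1) y = 0 := by
    intro y hy
    rw [fderivWithin_of_isOpen isOpen_Ioo hy, (hD y hy).hasFDerivAt.fderiv]
    ext
    simp
  have h0 : (0:ℝ) ∈ Ioo (-1:ℝ) 1 := by constructor <;> norm_num
  have hconst := (convex_Ioo (-1:ℝ) 1).is_const_of_fderivWithin_eq_zero hdiff hzero hxI h0
  have hG0 : G 0 = 0 := by simp [hG, S0]
  have : G x = 0 := by rw [hconst, hG0]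
  rw [hG] at this
  have := sub_eq_zero.mp this
  rw [← this, S0]

lemma integral_sin_pow_halfpi (m : ℕ) :
    ∫ θ in (0:ℝ)..(π/2), Real.sin θ ^ (2*m)
      = (π/2) * ∏ i ∈ Finset.range m, (2*(i:ℝ)+1)/(2*(i:ℝ)+2) := by
  have hint : ∀ a b : ℝ, IntervalIntegrable (fun θ => Real.sin θ ^ (2*m)) volume a b :=
    fun a b => (continuous_sin.pow _).intervalIntegrable a b
  have hadd := intervalIntegral.integral_add_adjacent_intervals (hint 0 (π/2)) (hint (π/2) π)
  have hsym : (∫ θ in (π/2:ℝ)..π, Real.sin θ ^ (2*m))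
      = ∫ θ in (0:ℝ)..(π/2), Real.sin θ ^ (2*m) := by
    have h := intervalIntegral.integral_comp_sub_left (a := 0) (b := π/2)
      (fun θ => Real.sin θ ^ (2*m)) π
    simp only [Real.sin_pi_sub, sub_zero] at h
    have h2 : π - π/2 = π/2 := by ring
    rw [h2] at h
    exact h.symm
  have heven := integral_sin_pow_even (n := m)
  rw [← hadd, hsym] at heven
  linarith [heven]

lemma term_integral (t : ℝ) (n : ℕ) :
    ∫ θ in (0:ℝ)..(π/2), dc n * (t * Real.sin θ)^(2*n+2)
      = π/4 * ((t^2)^(n+1) / ((n:ℝ)+1)^2) := by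
  have h1 : ∀ θ : ℝ, dc n * (t * Real.sin θ)^(2*n+2)
      = (dc n * t^(2*n+2)) * Real.sin θ^(2*(n+1)) := by
    intro θ
    have : 2*(n+1) = 2*n+2 := by omega
    rw [this, mul_pow]; ring
  simp_rw [h1]
  rw [intervalIntegral.integral_const_mul, integral_sin_pow_halfpi (n+1)]
  have hw := dc_wallis n
  have ht : t^(2*n+2) = (t^2)^(n+1) := by rw [← pow_mul]; ring_nf
  calc dc n * t^(2*n+2) * ((π/2) * ∏ i ∈ Finset.range (n+1), (2*(i:ℝ)+1)/(2*(i:ℝ)+2))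
      = t^(2*n+2) * (π/2) * (dc n * ∏ i ∈ Finset.range (n+1), (2*(i:ℝ)+1)/(2*(i:ℝ)+2)) := by
        ring
    _ = t^(2*n+2) * (π/2) * (1/(2*((n:ℝ)+1)^2)) := by rw [hw]
    _ = π/4 * ((t^2)^(n+1) / ((n:ℝ)+1)^2) := by
        rw [ht]
        have hne : ((n:ℝ)+1)^2 ≠ 0 := by positivity
        field_simp
        ring

lemma sin_image_Ioo : Real.sin '' Set.Ioo 0 (π/2) = Set.Ioo (0:ℝ) 1 := by
  ext u
  constructor
  · rintro ⟨θ, hθ, rfl⟩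
    have hπ : θ < π := lt_trans hθ.2 (by linarith [Real.pi_pos])
    refine ⟨Real.sin_pos_of_pos_of_lt_pi hθ.1 hπ, ?_⟩
    have h1 : θ ∈ Set.Icc (-(π/2)) (π/2) := ⟨by linarith [hθ.1, Real.pi_pos], hθ.2.le⟩
    have h2 : (π/2) ∈ Set.Icc (-(π/2)) (π/2) := ⟨by linarith [Real.pi_pos], le_refl _⟩
    have := Real.strictMonoOn_sin h1 h2 hθ.2
    rwa [Real.sin_pi_div_two] at this
  · intro hu
    refine ⟨Real.arcsin u, ⟨Real.arcsin_pos.2 hu.1, Real.arcsin_lt_pi_div_two.2 hu.2⟩, ?_⟩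
    exact Real.sin_arcsin (by linarith [hu.1]) hu.2.le

lemma subst_eq (t : ℝ) :
    (∫ u in (0:ℝ)..1, Real.arcsin (t*u)^2 / Real.sqrt (1-u^2))
      = ∫ θ in Set.Ioo (0:ℝ) (π/2), Real.arcsin (t * Real.sin θ)^2 := by
  have hderiv : ∀ θ ∈ Set.Ioo (0:ℝ) (π/2),
      HasDerivWithinAt Real.sin (Real.cos θ) (Set.Ioo (0:ℝ) (π/2)) θ :=
    fun θ _ => (Real.hasDerivAt_sin θ).hasDerivWithinAt
  have hinj : Set.InjOn Real.sin (Set.Ioo (0:ℝ) (π/2)) := by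
    apply Real.injOn_sin.mono
    intro θ hθ
    exact ⟨by linarith [hθ.1, Real.pi_pos], hθ.2.le⟩
  have himg := MeasureTheory.integral_image_eq_integral_abs_deriv_smul measurableSet_Ioo
    hderiv hinj (fun u => Real.arcsin (t*u)^2 / Real.sqrt (1-u^2))
  rw [sin_image_Ioo] at himg
  rw [intervalIntegral.integral_of_le (by norm_num : (0:ℝ) ≤ 1),
    MeasureTheory.integral_Ioc_eq_integral_Ioo, himg]
  apply MeasureTheory.setIntegral_congr_fun measurableSet_Ioo
  intro θ hθ
  have hcos : 0 < Real.cos θ :=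
    Real.cos_pos_of_mem_Ioo ⟨by linarith [hθ.1, Real.pi_pos], hθ.2⟩
  have hsq : Real.sqrt (1 - Real.sin θ^2) = Real.cos θ := by
    rw [← Real.cos_sq']
    exact Real.sqrt_sq hcos.le
  simp only [smul_eq_mul]
  rw [hsq, abs_of_pos hcos]
  field_simp

lemma norm_term (t : ℝ) (n : ℕ) (θ : ℝ) :
    ‖dc n * (t * Real.sin θ)^(2*n+2)‖ = dc n * (t * Real.sin θ)^(2*n+2) := by
  apply Real.norm_of_nonneg
  apply mul_nonneg (dc_pos n).le
  have : 2*n+2 = (n+1)*2 := by omega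
  rw [this, pow_mul]
  exact sq_nonneg _

lemma integral_Ioo_term (t : ℝ) (n : ℕ) :
    ∫ θ in Set.Ioo (0:ℝ) (π/2), dc n * (t * Real.sin θ)^(2*n+2)
      = π/4 * ((t^2)^(n+1) / ((n:ℝ)+1)^2) := by
  rw [← MeasureTheory.integral_Ioc_eq_integral_Ioo,
    ← intervalIntegral.integral_of_le (by positivity : (0:ℝ) ≤ π/2), term_integral]

lemma base_summable : Summable (fun n : ℕ => 1 / ((n:ℝ)+1)^2) := by
  have h := summable_one_div_nat_pow (p := 2) |>.mpr one_lt_two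
  have h2 := (summable_nat_add_iff 1).mpr h
  refine h2.congr fun n => ?_
  push_cast
  ring

lemma tsum_swap (t : ℝ) (ht0 : 0 ≤ t) (ht1 : t ≤ 1) :
    (∫ θ in Set.Ioo (0:ℝ) (π/2), Real.arcsin (t * Real.sin θ)^2)
      = ∑' n : ℕ, (π/4 * ((t^2)^(n+1) / ((n:ℝ)+1)^2)) := by
  have hpt : Set.EqOn (fun θ => Real.arcsin (t * Real.sin θ)^2)
      (fun θ => ∑' n : ℕ, dc n * (t * Real.sin θ)^(2*n+2)) (Set.Ioo (0:ℝ) (π/2)) := by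
    intro θ hθ
    have hsin : Real.sin θ ∈ Set.Ioo (0:ℝ) 1 := by
      rw [← sin_image_Ioo]
      exact Set.mem_image_of_mem _ hθ
    have habs : |t * Real.sin θ| < 1 := by
      rw [abs_of_nonneg (mul_nonneg ht0 hsin.1.le)]
      calc t * Real.sin θ ≤ 1 * Real.sin θ := by
            exact mul_le_mul_of_nonneg_right ht1 hsin.1.le
        _ = Real.sin θ := one_mul _
        _ < 1 := hsin.2
    exact S0_eq_arcsin_sq habs
  rw [MeasureTheory.setIntegral_congr_fun measurableSet_Ioo hpt]
  have hInt : ∀ n : ℕ, MeasureTheory.Integrable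
      (fun θ => dc n * (t * Real.sin θ)^(2*n+2))
      (MeasureTheory.volume.restrict (Set.Ioo (0:ℝ) (π/2))) := by
    intro n
    have hc : Continuous (fun θ : ℝ => dc n * (t * Real.sin θ)^(2*n+2)) := by
      continuity
    exact (hc.integrableOn_Icc).mono_set Set.Ioo_subset_Icc_self
  have hval : ∀ n : ℕ, (∫ θ in Set.Ioo (0:ℝ) (π/2), ‖dc n * (t * Real.sin θ)^(2*n+2)‖)
      = π/4 * ((t^2)^(n+1) / ((n:ℝ)+1)^2) := by
    intro n
    simp_rw [norm_term]
    exact integral_Ioo_term t n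
  have hsum : Summable (fun n : ℕ =>
      ∫ θ in Set.Ioo (0:ℝ) (π/2), ‖dc n * (t * Real.sin θ)^(2*n+2)‖) := by
    simp_rw [hval]
    refine Summable.of_nonneg_of_le (fun n => by positivity) (fun n => ?_)
      (base_summable.mul_left (π/4))
    have ht2 : (t^2)^(n+1) ≤ 1 := pow_le_one₀ (by positivity) (by nlinarith)
    gcongr
  rw [← MeasureTheory.integral_tsum_of_summable_integral_norm hInt hsum]
  exact tsum_congr fun n => integral_Ioo_term t n

theorem dilog_even_integral (t : ℝ) (ht0 : 0 ≤ t) (ht1 : t ≤ 1) :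
    (1 / Real.pi) * ∫ u in (0:ℝ)..1, (Real.arcsin (t * u)) ^ 2 / Real.sqrt (1 - u ^ 2) =
      (1 / 4) * ∑' n : ℕ, (t ^ 2) ^ (n + 1) / ((n + 1 : ℕ) : ℝ) ^ 2 := by
  rw [subst_eq t, tsum_swap t ht0 ht1]
  have hY : (∑' n : ℕ, (t ^ 2) ^ (n + 1) / ((n + 1 : ℕ) : ℝ) ^ 2)
      = ∑' n : ℕ, (t^2)^(n+1) / ((n:ℝ)+1)^2 := by
    refine tsum_congr fun n => ?_
    push_cast
    ring
  rw [hY]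
  have := tsum_mul_left (L := SummationFilter.unconditional ℕ) (a := π/4) (f := fun n : ℕ => (t^2)^(n+1) / ((n:ℝ)+1)^2)
  rw [this]
  have hpi : Real.pi ≠ 0 := Real.pi_ne_zero
  field_simp
end

section
/- For all real t with 0 ≤ t ≤ 1, ∫_0^1 (arcsin(t·u) + (1/π)(arcsin(t·u))^2)/√(1-u^2) du = Li₂(t). -/
open Real Set

namespace DilogAux

noncomputable section

def A : ℕ → ℝ
  | 0 => 0
  | 1 => 1
  | (n+2) => (n:ℝ)^2 / (((n:ℝ)+2)*((n:ℝ)+1)) * A n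

def B : ℕ → ℝ
  | 0 => 0
  | 1 => 0
  | (n+2) => if n = 0 then 1 else (n:ℝ)^2 / (((n:ℝ)+2)*((n:ℝ)+1)) * B n

def W : ℕ → ℝ
  | 0 => Real.pi/2
  | 1 => 1
  | (n+2) => (((n:ℝ)+1)/((n:ℝ)+2)) * W n

lemma A_zero : A 0 = 0 := rfl
lemma A_one : A 1 = 1 := rfl
lemma A_step (n : ℕ) : A (n+2) = (n:ℝ)^2 / (((n:ℝ)+2)*((n:ℝ)+1)) * A n := by
  simp [A]
lemma A_two : A 2 = 0 := by
  rw [A_step]; norm_num [A_zero]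
lemma B_zero : B 0 = 0 := rfl
lemma B_one : B 1 = 0 := rfl
lemma B_two : B 2 = 1 := by simp [B]
lemma B_step (n : ℕ) : B (n+3) = ((n:ℝ)+1)^2 / (((n:ℝ)+3)*((n:ℝ)+2)) * B (n+1) := by
  show B ((n+1)+2) = _
  rw [B, if_neg (Nat.succ_ne_zero n)]
  push_cast
  ring_nf
lemma W_zero : W 0 = Real.pi/2 := rfl
lemma W_one : W 1 = 1 := rfl
lemma W_step (n : ℕ) : W (n+2) = (((n:ℝ)+1)/((n:ℝ)+2)) * W n := by simp [W]

lemma A_mem (n : ℕ) : 0 ≤ A n ∧ A n ≤ 1 := by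
  induction n using Nat.twoStepInduction with
  | zero => norm_num [A_zero]
  | one => norm_num [A_one]
  | more n ih _ =>
    rw [A_step]
    have h1 : (n:ℝ)^2 / (((n:ℝ)+2)*((n:ℝ)+1)) ≤ 1 := by
      rw [div_le_one (by positivity)]
      nlinarith [Nat.cast_nonneg (α := ℝ) n]
    exact ⟨mul_nonneg (by positivity) ih.1, mul_le_one₀ h1 ih.1 ih.2⟩

lemma B_mem (n : ℕ) : 0 ≤ B n ∧ B n ≤ 1 := by
  induction n using Nat.twoStepInduction with
  | zero => norm_num [B_zero]
  | one => norm_num [B_one]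
  | more n ih _ =>
    match n with
    | 0 => norm_num [B_two]
    | (m+1) =>
      rw [B_step]
      have h1 : ((m:ℝ)+1)^2 / (((m:ℝ)+3)*((m:ℝ)+2)) ≤ 1 := by
        rw [div_le_one (by positivity)]
        nlinarith [Nat.cast_nonneg (α := ℝ) m]
      exact ⟨mul_nonneg (by positivity) ih.1, mul_le_one₀ h1 ih.1 ih.2⟩

lemma W_nonneg (n : ℕ) : 0 ≤ W n := by
  induction n using Nat.twoStepInduction with
  | zero => rw [W_zero]; positivity
  | one => norm_num [W_one]
  | more n ih _ => rw [W_step]; exact mul_nonneg (by positivity) ih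

lemma key (n : ℕ) :
    (A (n+1) + (1/Real.pi) * B (n+1)) * W (n+1) = 1/((n:ℝ)+1)^2 := by
  induction n using Nat.twoStepInduction with
  | zero => norm_num [A_one, B_one, W_one]
  | one =>
    rw [show (1:ℕ)+1 = 2 from rfl, A_two, B_two, W_step]
    have : Real.pi ≠ 0 := Real.pi_ne_zero
    rw [W_zero]
    field_simp
    ring
  | more n ih _ =>
    have goalcast : (((n+2:ℕ)):ℝ) + 1 = (n:ℝ)+3 := by push_cast; ring
    rw [show n+2+1 = n+3 from rfl, goalcast]
    have hA : A (n+3) = ((n:ℝ)+1)^2 / (((n:ℝ)+3)*((n:ℝ)+2)) * A (n+1) := by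
      have := A_step (n+1)
      push_cast at this
      convert this using 3 <;> ring
    have hB := B_step n
    have hW : W (n+3) = (((n:ℝ)+2)/((n:ℝ)+3)) * W (n+1) := by
      have := W_step (n+1)
      push_cast at this
      convert this using 3 <;> ring
    have h1 : ((n:ℝ)+1) ≠ 0 := by positivity
    have h2 : ((n:ℝ)+2) ≠ 0 := by positivity
    have h3 : ((n:ℝ)+3) ≠ 0 := by positivity
    calc (A (n+3) + (1/Real.pi) * B (n+3)) * W (n+3)
        = (((n:ℝ)+1)^2/(((n:ℝ)+3)*((n:ℝ)+2)) * (((n:ℝ)+2)/((n:ℝ)+3)))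
            * ((A (n+1) + (1/Real.pi) * B (n+1)) * W (n+1)) := by
          rw [hA, hB, hW]; ring
      _ = 1/((n:ℝ)+3)^2 := by rw [ih]; field_simp
  


def dS (c : ℕ → ℝ) : ℕ → ℝ := fun n => ((n:ℝ)+1) * c (n+1)

def S (c : ℕ → ℝ) (x : ℝ) : ℝ := ∑' n, c n * x^n

def Pb (c : ℕ → ℝ) : Prop := ∃ C : ℝ, ∃ d : ℕ, ∀ n, |c n| ≤ C * ((n:ℝ)+1)^d

lemma Pb.of_le_one {c : ℕ → ℝ} (h : ∀ n, |c n| ≤ 1) : Pb c :=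
  ⟨1, 0, fun n => by simpa using h n⟩

lemma Pb.mul_poly {c : ℕ → ℝ} (h : Pb c) (p : ℕ → ℝ)
    (hp : ∃ D : ℝ, ∃ e : ℕ, ∀ n, |p n| ≤ D * ((n:ℝ)+1)^e) :
    Pb (fun n => p n * c n) := by
  obtain ⟨C, d, hC⟩ := h
  obtain ⟨D, e, hD⟩ := hp
  refine ⟨D * C, e + d, fun n => ?_⟩
  have h1 : (0:ℝ) ≤ ((n:ℝ)+1) := by positivity
  calc |p n * c n| = |p n| * |c n| := abs_mul _ _
    _ ≤ (D * ((n:ℝ)+1)^e) * (C * ((n:ℝ)+1)^d) := by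
        apply mul_le_mul (hD n) (hC n) (abs_nonneg _)
        exact le_trans (abs_nonneg _) (hD n)
    _ = D * C * ((n:ℝ)+1)^(e+d) := by rw [pow_add]; ring

lemma Pb.dS {c : ℕ → ℝ} (h : Pb c) : Pb (DilogAux.dS c) := by
  obtain ⟨C, d, hC⟩ := h
  have hC0 : 0 ≤ C := by
    have := (abs_nonneg (c 0)).trans (hC 0)
    simpa using this
  refine ⟨2^(d+1) * C, d+1, fun n => ?_⟩
  have h1 : (0:ℝ) < ((n:ℝ)+1) := by positivity
  have h2 : ((n:ℝ)+1+1) ≤ 2 * ((n:ℝ)+1) := by linarith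
  calc |((n:ℝ)+1) * c (n+1)| = ((n:ℝ)+1) * |c (n+1)| := by
        rw [abs_mul, abs_of_nonneg h1.le]
    _ ≤ ((n:ℝ)+1) * (C * (((n+1:ℕ):ℝ)+1)^d) := by
        apply mul_le_mul_of_nonneg_left (hC (n+1)) h1.le
    _ ≤ (((n:ℝ)+1)+1) * (C * (((n:ℝ)+1)+1)^d) := by
        push_cast
        have : (0:ℝ) ≤ C * ((n:ℝ)+1+1)^d := by positivity
        nlinarith
    _ = C * (((n:ℝ)+1)+1)^(d+1) := by rw [pow_succ]; ring
    _ ≤ C * (2*((n:ℝ)+1))^(d+1) := by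
        apply mul_le_mul_of_nonneg_left _ hC0
        exact pow_le_pow_left₀ (by positivity) h2 _
    _ = 2^(d+1) * C * ((n:ℝ)+1)^(d+1) := by rw [mul_pow]; ring

lemma summable_poly_geom (d : ℕ) {x : ℝ} (hx : |x| < 1) :
    Summable (fun n : ℕ => ((n:ℝ)+1)^d * |x|^n) := by
  by_cases hx0 : x = 0
  · subst hx0
    apply summable_of_ne_finset_zero (s := {0})
    intro n hn
    have : n ≠ 0 := by simpa using hn
    simp [zero_pow this]
  · have h1 : Summable (fun n : ℕ => ((n:ℝ))^d * |x|^n) :=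
      summable_pow_mul_geometric_of_norm_lt_one d (by rwa [Real.norm_eq_abs, abs_abs])
    have h2 : Summable (fun n : ℕ => (((n+1:ℕ)):ℝ)^d * |x|^(n+1)) :=
      (summable_nat_add_iff 1).2 h1
    have hxa : |x| ≠ 0 := fun h => hx0 (abs_eq_zero.1 h)
    have h3 : Summable (fun n : ℕ => |x|⁻¹ * ((((n+1:ℕ)):ℝ)^d * |x|^(n+1))) := h2.mul_left _
    have h4 : Summable (fun n : ℕ => ((n:ℝ)+1)^d * |x|^n) := by
      refine h3.congr fun n => ?_
      push_cast
      calc |x|⁻¹ * (((n:ℝ)+1)^d * |x|^(n+1))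
          = ((n:ℝ)+1)^d * |x|^n * (|x|⁻¹ * |x|) := by rw [pow_succ]; ring
        _ = ((n:ℝ)+1)^d * |x|^n := by rw [inv_mul_cancel₀ hxa, mul_one]
    exact h4

lemma Pb.summable {c : ℕ → ℝ} (h : Pb c) {x : ℝ} (hx : |x| < 1) :
    Summable (fun n => c n * x^n) := by
  obtain ⟨C, d, hC⟩ := h
  refine Summable.of_norm_bounded
    (((summable_poly_geom d hx).mul_left C)) (fun n => ?_)
  rw [Real.norm_eq_abs, abs_mul, abs_pow]
  calc |c n| * |x|^n ≤ (C * ((n:ℝ)+1)^d) * |x|^n :=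
        mul_le_mul_of_nonneg_right (hC n) (by positivity)
    _ = C * (((n:ℝ)+1)^d * |x|^n) := by ring

lemma Pb.summable_abs {c : ℕ → ℝ} (h : Pb c) {x : ℝ} (hx : |x| < 1) :
    Summable (fun n => |c n| * x^n) := by
  have : Pb (fun n => |c n|) := by
    obtain ⟨C, d, hC⟩ := h
    exact ⟨C, d, fun n => by rw [abs_abs]; exact hC n⟩
  exact this.summable hx

lemma S_zero (c : ℕ → ℝ) : S c 0 = c 0 := by
  rw [S, tsum_eq_single 0 (fun n hn => by simp [zero_pow hn])]
  simp

lemma hasDerivAt_S {c : ℕ → ℝ} (h : Pb c) {x : ℝ} (hx : |x| < 1) :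
    HasDerivAt (S c) (S (dS c) x) x := by
  set r : ℝ := (|x|+1)/2 with hr
  have hx0 : 0 ≤ |x| := abs_nonneg x
  have hr1 : r < 1 := by rw [hr]; linarith
  have hxr : |x| < r := by rw [hr]; linarith
  have hr0 : 0 < r := by rw [hr]; linarith
  have hrr : |r| < 1 := by rwa [abs_of_pos hr0]
  have hds : Pb (dS c) := h.dS
  set u : ℕ → ℝ := fun n => |c n| * ((n:ℝ) * r^(n-1)) with hu
  have hu1 : Summable (fun m => |dS c m| * r^m) := hds.summable_abs hrr
  have hu2 : Summable u := by
    apply (summable_nat_add_iff 1).1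
    refine hu1.congr fun m => ?_
    rw [hu]
    simp only [dS, abs_mul, Nat.add_sub_cancel]
    rw [abs_of_nonneg (by positivity : (0:ℝ) ≤ (m:ℝ)+1)]
    push_cast
    ring
  have hder : ∀ n : ℕ, ∀ y ∈ Metric.ball (0:ℝ) r,
      HasDerivAt (fun z => c n * z^n) (c n * ((n:ℝ) * y^(n-1))) y :=
    fun n y _ => (hasDerivAt_pow n y).const_mul (c n)
  have hbound : ∀ n : ℕ, ∀ y ∈ Metric.ball (0:ℝ) r,
      ‖c n * ((n:ℝ) * y^(n-1))‖ ≤ u n := by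
    intro n y hy
    have hyr : |y| ≤ r := by
      have := mem_ball_zero_iff.1 hy
      rw [Real.norm_eq_abs] at this
      exact this.le
    rw [Real.norm_eq_abs, abs_mul, abs_mul, abs_pow,
      abs_of_nonneg (Nat.cast_nonneg n : (0:ℝ) ≤ (n:ℕ))]
    show |c n| * ((n:ℝ) * |y|^(n-1)) ≤ |c n| * ((n:ℝ) * r^(n-1))
    gcongr
  have hsum0 : Summable fun n => c n * x^n := h.summable hx
  have hmem : x ∈ Metric.ball (0:ℝ) r := by
    rw [mem_ball_zero_iff, Real.norm_eq_abs]; exact hxr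
  have H := hasDerivAt_tsum_of_isPreconnected hu2 Metric.isOpen_ball
    (convex_ball (0:ℝ) r).isPreconnected hder hbound hmem hsum0 hmem
  have hsum1 : Summable (fun n => c n * ((n:ℝ) * x^(n-1))) :=
    Summable.of_norm_bounded hu2 (fun n => hbound n x hmem)
  have hval : (∑' n, c n * ((n:ℝ) * x^(n-1))) = S (dS c) x := by
    rw [Summable.tsum_eq_zero_add hsum1]
    simp only [Nat.cast_zero, zero_mul, mul_zero, zero_add]
    refine tsum_congr fun m => ?_
    simp only [dS, Nat.add_sub_cancel]
    push_cast
    ring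
  rw [← hval]
  exact H


lemma tsum_shift {f : ℕ → ℝ} (hs : Summable f) (h0 : f 0 = 0) :
    ∑' n, f n = ∑' n, f (n+1) := by
  rw [Summable.tsum_eq_zero_add hs, h0, zero_add]

lemma Pb_n_mul {c : ℕ → ℝ} (h : Pb c) : Pb (fun n => (n:ℝ) * c n) := by
  refine h.mul_poly _ ⟨1, 1, fun n => ?_⟩
  rw [abs_of_nonneg (Nat.cast_nonneg n : (0:ℝ) ≤ (n:ℕ))]
  simp only [pow_one, one_mul]
  linarith

lemma Pb_nn_mul {c : ℕ → ℝ} (h : Pb c) : Pb (fun n => (n:ℝ) * ((n:ℝ)-1) * c n) := by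
  refine h.mul_poly _ ⟨1, 2, fun n => ?_⟩
  have h0 : (0:ℝ) ≤ (n:ℝ) := Nat.cast_nonneg n
  have h1 : |(n:ℝ)*((n:ℝ)-1)| ≤ ((n:ℝ)+1)*((n:ℝ)+1) := by
    rw [abs_mul, abs_of_nonneg h0]
    have h2 : |(n:ℝ)-1| ≤ (n:ℝ)+1 := abs_le.2 ⟨by linarith, by linarith⟩
    nlinarith [abs_nonneg ((n:ℝ)-1)]
  calc |(n:ℝ)*((n:ℝ)-1)| ≤ ((n:ℝ)+1)*((n:ℝ)+1) := h1
    _ = 1 * ((n:ℝ)+1)^2 := by ring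

lemma shift1 {c : ℕ → ℝ} (h : Pb c) {x : ℝ} (hx : |x| < 1) :
    x * S (dS c) x = ∑' n : ℕ, (n:ℝ) * c n * x^n := by
  have hs : Summable (fun n : ℕ => (n:ℝ) * c n * x^n) := (Pb_n_mul h).summable hx
  rw [tsum_shift hs (by norm_num), S, ← tsum_mul_left]
  exact tsum_congr fun m => by simp only [dS]; push_cast; ring

lemma shift2 {c : ℕ → ℝ} (h : Pb c) {x : ℝ} (hx : |x| < 1) :
    x^2 * S (dS (dS c)) x = ∑' n : ℕ, (n:ℝ) * ((n:ℝ)-1) * c n * x^n := by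
  have hs : Summable (fun n : ℕ => (n:ℝ) * ((n:ℝ)-1) * c n * x^n) :=
    (Pb_nn_mul h).summable hx
  rw [tsum_shift hs (by norm_num),
    tsum_shift ((summable_nat_add_iff 1).2 hs) (by norm_num), S, ← tsum_mul_left]
  exact tsum_congr fun m => by simp only [dS]; push_cast; ring

lemma ode {c : ℕ → ℝ} (h : Pb c) {x : ℝ} (hx : |x| < 1) :
    (1 - x^2) * S (dS (dS c)) x - x * S (dS c) x
      = ∑' n : ℕ, ((((n:ℝ)+1)*((n:ℝ)+2) * c (n+2) - (n:ℝ)^2 * c n) * x^n) := by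
  have h1 : Summable (fun n : ℕ => dS (dS c) n * x^n) := (h.dS.dS).summable hx
  have hg2 : Summable (fun n : ℕ => (n:ℝ) * ((n:ℝ)-1) * c n * x^n) :=
    (Pb_nn_mul h).summable hx
  have hg1 : Summable (fun n : ℕ => (n:ℝ) * c n * x^n) := (Pb_n_mul h).summable hx
  calc (1 - x^2) * S (dS (dS c)) x - x * S (dS c) x
      = S (dS (dS c)) x - x^2 * S (dS (dS c)) x - x * S (dS c) x := by ring
    _ = (∑' n : ℕ, dS (dS c) n * x^n) - (∑' n : ℕ, (n:ℝ) * ((n:ℝ)-1) * c n * x^n)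
          - (∑' n : ℕ, (n:ℝ) * c n * x^n) := by rw [shift1 h hx, shift2 h hx, S]
    _ = ∑' n : ℕ, (dS (dS c) n * x^n - (n:ℝ) * ((n:ℝ)-1) * c n * x^n
          - (n:ℝ) * c n * x^n) := by rw [Summable.tsum_sub (h1.sub hg2) hg1, Summable.tsum_sub h1 hg2]
    _ = ∑' n : ℕ, ((((n:ℝ)+1)*((n:ℝ)+2) * c (n+2) - (n:ℝ)^2 * c n) * x^n) := by
        refine tsum_congr fun n => ?_
        simp only [dS]
        push_cast
        ring


lemma PbA : Pb A := Pb.of_le_one (fun n => by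
  rw [abs_of_nonneg (A_mem n).1]; exact (A_mem n).2)

lemma PbB : Pb B := Pb.of_le_one (fun n => by
  rw [abs_of_nonneg (B_mem n).1]; exact (B_mem n).2)

lemma hasDerivAt_sqrt_one_sub_sq {x : ℝ} (hx : |x| < 1) :
    HasDerivAt (fun y : ℝ => Real.sqrt (1 - y^2)) (-x / Real.sqrt (1 - x^2)) x := by
  have hx' := abs_lt.1 hx
  have hx2 : 1 - x^2 > 0 := by nlinarith
  have h0 : 1 - x^2 ≠ 0 := ne_of_gt hx2
  have hinner : HasDerivAt (fun y : ℝ => 1 - y^2) (-(2*x^1)) x :=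
    (hasDerivAt_pow 2 x).const_sub 1
  have hs0 : Real.sqrt (1-x^2) ≠ 0 := ne_of_gt (Real.sqrt_pos.2 hx2)
  have := (Real.hasDerivAt_sqrt h0).comp x hinner
  refine this.congr_deriv ?_
  field_simp

lemma eq_on_Ico {f g d : ℝ → ℝ} (h0 : f 0 = g 0)
    (hf : ∀ y ∈ Ico (0:ℝ) 1, HasDerivAt f (d y) y)
    (hg : ∀ y ∈ Ico (0:ℝ) 1, HasDerivAt g (d y) y) :
    ∀ x ∈ Ico (0:ℝ) 1, f x = g x := by
  intro x hx
  obtain ⟨hx0, hx1⟩ := hx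
  have kcont : ContinuousOn (fun y => f y - g y) (Icc 0 x) := by
    intro y hy
    have hy' : y ∈ Ico (0:ℝ) 1 := ⟨hy.1, lt_of_le_of_lt hy.2 hx1⟩
    exact (((hf y hy').sub (hg y hy')).continuousAt).continuousWithinAt
  have kderiv : ∀ y ∈ Ico (0:ℝ) x, HasDerivWithinAt (fun y => f y - g y) 0 (Ici y) y := by
    intro y hy
    have hy' : y ∈ Ico (0:ℝ) 1 := ⟨hy.1, lt_trans hy.2 hx1⟩
    have h2 := ((hf y hy').sub (hg y hy')).hasDerivWithinAt (s := Ici y)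
    rw [sub_self] at h2; exact h2
  have hfin := constant_of_has_deriv_right_zero kcont kderiv x ⟨hx0, le_refl x⟩
  have hfin' : f x - g x = f 0 - g 0 := hfin
  have h00 : f 0 - g 0 = 0 := by rw [h0]; ring
  linarith [hfin', h00]

lemma abs_lt_one_of_Ico {y : ℝ} (hy : y ∈ Ico (0:ℝ) 1) : |y| < 1 :=
  abs_lt.2 ⟨by linarith [hy.1], hy.2⟩

lemma sqrt_ne_zero' {y : ℝ} (hy : |y| < 1) : Real.sqrt (1 - y^2) ≠ 0 := by
  have hy' := abs_lt.1 hy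
  exact ne_of_gt (Real.sqrt_pos.2 (by nlinarith))

lemma sq_sqrt' {y : ℝ} (hy : |y| < 1) : Real.sqrt (1 - y^2)^2 = 1 - y^2 := by
  have hy' := abs_lt.1 hy
  exact Real.sq_sqrt (by nlinarith)

lemma deriv_combo {P Q y : ℝ} (hy : |y| < 1)
    (hode : (1-y^2) * Q - y * P = K) :
    -y / Real.sqrt (1-y^2) * P + Real.sqrt (1-y^2) * Q = K / Real.sqrt (1-y^2) := by
  have hs0 := sqrt_ne_zero' hy
  have hsq := sq_sqrt' hy
  rw [← hode, ← hsq]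
  field_simp
  rw [Real.sqrt_sq (Real.sqrt_nonneg _)]
  ring

lemma odeA {y : ℝ} (hy : |y| < 1) :
    (1 - y^2) * S (dS (dS A)) y - y * S (dS A) y = 0 := by
  rw [ode PbA hy]
  have : ∀ n : ℕ, ((((n:ℝ)+1)*((n:ℝ)+2) * A (n+2) - (n:ℝ)^2 * A n) * y^n) = 0 := by
    intro n
    rw [A_step]
    have h1 : ((n:ℝ)+2)*((n:ℝ)+1) ≠ 0 := by positivity
    field_simp
    ring
  rw [tsum_congr this, tsum_zero]

lemma odeB {y : ℝ} (hy : |y| < 1) :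
    (1 - y^2) * S (dS (dS B)) y - y * S (dS B) y = 2 := by
  rw [ode PbB hy]
  rw [tsum_eq_single 0 ?h]
  · norm_num [B_two, B_zero]
  · intro n hn
    match n, hn with
    | (m+1), _ =>
      have hB := B_step m
      have h1 : ((m:ℝ)+3)*((m:ℝ)+2) ≠ 0 := by positivity
      have e : ((((m+1:ℕ):ℝ)+1)*(((m+1:ℕ):ℝ)+2) * B (m+1+2) - ((m+1:ℕ):ℝ)^2 * B (m+1)) = 0 := by
        push_cast
        rw [show m+1+2 = m+3 from rfl, hB]
        field_simp
        ring
      rw [e, zero_mul]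

lemma sqrt_mul_S_dA : ∀ x ∈ Ico (0:ℝ) 1,
    Real.sqrt (1-x^2) * S (dS A) x = 1 := by
  have h := eq_on_Ico (f := fun y => Real.sqrt (1-y^2) * S (dS A) y)
    (g := fun _ => 1) (d := fun _ => 0) ?h0 ?hf ?hg
  · exact h
  case h0 => norm_num [S_zero, dS, A_one]
  case hg => intro y _; exact hasDerivAt_const y 1
  case hf =>
    intro y hy
    have hy' := abs_lt_one_of_Ico hy
    have hprod := (hasDerivAt_sqrt_one_sub_sq hy').mul (hasDerivAt_S PbA.dS hy')
    have hval := deriv_combo (P := S (dS A) y) (Q := S (dS (dS A)) y) hy' (odeA hy')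
    rw [zero_div] at hval
    exact hval ▸ hprod

lemma SA_eq : ∀ x ∈ Ico (0:ℝ) 1, S A x = Real.arcsin x := by
  refine eq_on_Ico (d := fun y => S (dS A) y) ?_ ?_ ?_
  · rw [S_zero, A_zero, Real.arcsin_zero]
  · intro y hy
    exact hasDerivAt_S PbA (abs_lt_one_of_Ico hy)
  · intro y hy
    have hy' := abs_lt_one_of_Ico hy
    have hy'' := abs_lt.1 hy'
    have h := Real.hasDerivAt_arcsin (by linarith) (ne_of_lt hy''.2)
    have hS : S (dS A) y = 1 / Real.sqrt (1-y^2) := by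
      have := sqrt_mul_S_dA y hy
      field_simp [sqrt_ne_zero' hy'] at this ⊢
      linarith
    show HasDerivAt Real.arcsin (S (dS A) y) y
    rw [hS]
    exact h

lemma sqrt_mul_S_dB : ∀ x ∈ Ico (0:ℝ) 1,
    Real.sqrt (1-x^2) * S (dS B) x = 2 * Real.arcsin x := by
  refine eq_on_Ico (d := fun y => 2 / Real.sqrt (1-y^2)) ?_ ?_ ?_
  · norm_num [S_zero, dS, B_one]
  · intro y hy
    have hy' := abs_lt_one_of_Ico hy
    have hprod := (hasDerivAt_sqrt_one_sub_sq hy').mul (hasDerivAt_S PbB.dS hy')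
    have hval := deriv_combo (P := S (dS B) y) (Q := S (dS (dS B)) y) hy' (odeB hy')
    show HasDerivAt (fun x => Real.sqrt (1-x^2) * S (dS B) x) (2 / Real.sqrt (1-y^2)) y
    exact hval ▸ hprod
  · intro y hy
    have hy' := abs_lt_one_of_Ico hy
    have hy'' := abs_lt.1 hy'
    have h := (Real.hasDerivAt_arcsin (by linarith) (ne_of_lt hy''.2)).const_mul 2
    refine h.congr_deriv ?_
    field_simp

lemma SB_eq : ∀ x ∈ Ico (0:ℝ) 1, S B x = Real.arcsin x ^ 2 := by
  refine eq_on_Ico (d := fun y => S (dS B) y) ?_ ?_ ?_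
  · rw [S_zero, B_zero, Real.arcsin_zero]
    norm_num
  · intro y hy
    exact hasDerivAt_S PbB (abs_lt_one_of_Ico hy)
  · intro y hy
    have hy' := abs_lt_one_of_Ico hy
    have hy'' := abs_lt.1 hy'
    have h := (Real.hasDerivAt_arcsin (by linarith) (ne_of_lt hy''.2)).pow 2
    have hS : S (dS B) y = 2 * Real.arcsin y / Real.sqrt (1-y^2) := by
      have h2 := sqrt_mul_S_dB y hy
      field_simp [sqrt_ne_zero' hy'] at h2 ⊢
      linarith
    show HasDerivAt (fun x => Real.arcsin x ^ 2) (S (dS B) y) y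
    rw [hS]
    refine h.congr_deriv ?_
    push_cast
    ring


def g (n : ℕ) : ℝ → ℝ := fun u => u^n / Real.sqrt (1 - u^2)

lemma g_meas (n : ℕ) : Measurable (g n) := by
  have h1 : Measurable fun u : ℝ => Real.sqrt (1-u^2) :=
    Real.continuous_sqrt.measurable.comp
      ((continuous_const.sub (continuous_pow 2)).measurable)
  exact (continuous_pow n).measurable.div h1

lemma g_intable (n : ℕ) : IntervalIntegrable (g n) MeasureTheory.volume 0 1 := by
  have hrpow : IntervalIntegrable (fun x : ℝ => x ^ (-(1/2) : ℝ)) MeasureTheory.volume 1 0 :=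
    intervalIntegral.intervalIntegrable_rpow' (by norm_num)
  have hmaj : IntervalIntegrable (fun x : ℝ => (1 - x) ^ (-(1/2) : ℝ)) MeasureTheory.volume 0 1 := by
    simpa using hrpow.comp_sub_left 1
  refine hmaj.mono_fun (g_meas n).aestronglyMeasurable ?_
  filter_upwards [MeasureTheory.ae_restrict_mem measurableSet_uIoc] with u hu
  rw [Set.uIoc_of_le (by norm_num : (0:ℝ) ≤ 1)] at hu
  obtain ⟨hu0, hu1⟩ := hu
  by_cases h1 : u = 1
  · subst h1
    simp [g, Real.zero_rpow]
  · have hu1' : u < 1 := lt_of_le_of_ne hu1 h1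
    have hs1 : (0:ℝ) < 1 - u := by linarith
    have h2 : Real.sqrt (1-u) ≤ Real.sqrt (1-u^2) := Real.sqrt_le_sqrt (by nlinarith)
    have h3 : (0:ℝ) < Real.sqrt (1-u) := Real.sqrt_pos.2 hs1
    have h4 : (1-u) ^ (-(1/2):ℝ) = 1 / Real.sqrt (1-u) := by
      rw [Real.rpow_neg hs1.le, ← Real.sqrt_eq_rpow, one_div]
    rw [Real.norm_eq_abs, Real.norm_eq_abs, abs_of_nonneg (show (0:ℝ) ≤ g n u by rw [g]; positivity),
      abs_of_nonneg (Real.rpow_nonneg hs1.le _), h4, g]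
    exact div_le_div₀ (by norm_num) (pow_le_one₀ hu0.le hu1) h3 h2

lemma W_integral (n : ℕ) : (∫ u in (0:ℝ)..1, g n u) = W n := by
  induction n using Nat.twoStepInduction with
  | zero =>
    rw [W_zero]
    have h := intervalIntegral.integral_eq_sub_of_hasDerivAt_of_le
      (f := Real.arcsin) (f' := g 0) zero_le_one
      Real.continuous_arcsin.continuousOn
      (fun x hx => by
        have := Real.hasDerivAt_arcsin (by linarith [hx.1] : x ≠ -1) (ne_of_lt hx.2)
        simpa [g, pow_zero] using this)
      (g_intable 0)
    rw [h, Real.arcsin_one, Real.arcsin_zero]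
    ring
  | one =>
    rw [W_one]
    have h := intervalIntegral.integral_eq_sub_of_hasDerivAt_of_le
      (f := fun u => -Real.sqrt (1-u^2)) (f' := g 1) zero_le_one
      ((continuous_const.sub (continuous_pow 2)).sqrt.neg.continuousOn)
      (fun x hx => by
        have hx' : |x| < 1 := abs_lt.2 ⟨by linarith [hx.1], hx.2⟩
        have := (hasDerivAt_sqrt_one_sub_sq hx').neg
        have hval : -(-x / Real.sqrt (1-x^2)) = g 1 x := by
          rw [g, pow_one]; ring
        exact hval ▸ this)
      (g_intable 1)
    rw [h]
    norm_num
  | more n ih _ =>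
    have hFTC := intervalIntegral.integral_eq_sub_of_hasDerivAt_of_le
      (f := fun u => u^(n+1) * Real.sqrt (1-u^2))
      (f' := fun u => ((n:ℝ)+1) * g n u - ((n:ℝ)+2) * g (n+2) u) zero_le_one
      (((continuous_pow (n+1)).mul
        ((continuous_const.sub (continuous_pow 2)).sqrt)).continuousOn)
      (fun x hx => by
        have hx' : |x| < 1 := abs_lt.2 ⟨by linarith [hx.1], hx.2⟩
        have hs0 := sqrt_ne_zero' hx'
        have hsq := sq_sqrt' hx'
        have hD := (hasDerivAt_pow (n+1) x).mul (hasDerivAt_sqrt_one_sub_sq hx')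
        have hval : (((n:ℕ)+1:ℕ):ℝ) * x^((n+1)-1) * Real.sqrt (1-x^2)
            + x^(n+1) * (-x / Real.sqrt (1-x^2))
            = ((n:ℝ)+1) * g n x - ((n:ℝ)+2) * g (n+2) x := by
          rw [g, g, Nat.add_sub_cancel]
          push_cast
          field_simp
          linear_combination (((n:ℝ)+1) * x^n) * hsq
        show HasDerivAt (fun u => u^(n+1) * Real.sqrt (1-u^2))
          (((n:ℝ)+1) * g n x - ((n:ℝ)+2) * g (n+2) x) x
        exact hval ▸ hD)
      (((g_intable n).const_mul _).sub ((g_intable (n+2)).const_mul _))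
    rw [intervalIntegral.integral_sub ((g_intable n).const_mul _)
        ((g_intable (n+2)).const_mul _),
      intervalIntegral.integral_const_mul, intervalIntegral.integral_const_mul, ih]
      at hFTC
    have hre : (1:ℝ)^(n+1) * Real.sqrt (1-1^2) - 0^(n+1) * Real.sqrt (1-(0:ℝ)^2) = 0 := by
      norm_num
    rw [hre] at hFTC
    rw [W_step]
    have h2 : ((n:ℝ)+2) ≠ 0 := by positivity
    field_simp at hFTC ⊢
    linarith [hFTC]


lemma main (t : ℝ) (ht0 : 0 ≤ t) (ht1 : t ≤ 1) :
    ∫ u in (0:ℝ)..1,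
        (Real.arcsin (t * u) + (1 / Real.pi) * (Real.arcsin (t * u)) ^ 2) /
          Real.sqrt (1 - u ^ 2) =
      ∑' n : ℕ, t ^ (n + 1) / ((n + 1 : ℕ) : ℝ) ^ 2 := by
  have hπ : (0:ℝ) < Real.pi := Real.pi_pos
  set c : ℕ → ℝ := fun n => A n + (1/Real.pi) * B n with hc
  set f : ℕ → ℝ → ℝ := fun n u => (c n * t^n) * g n u with hf
  set μ := MeasureTheory.volume.restrict (Ioc (0:ℝ) 1) with hμ
  have hcnn : ∀ n, 0 ≤ c n := fun n =>
    add_nonneg (A_mem n).1 (mul_nonneg (by positivity) (B_mem n).1)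
  have hkey : ∀ n : ℕ, c (n+1) * W (n+1) = 1/((n:ℝ)+1)^2 := key
  have hc0 : c 0 = 0 := by rw [hc]; simp [A_zero, B_zero]
  have hvnn : ∀ n : ℕ, 0 ≤ c n * t^n * W n := fun n =>
    mul_nonneg (mul_nonneg (hcnn n) (pow_nonneg ht0 n)) (W_nonneg n)
  have hsum : Summable (fun n : ℕ => c n * t^n * W n) := by
    refine Summable.of_nonneg_of_le hvnn ?_
      (Real.summable_one_div_nat_pow.mpr one_lt_two)
    intro n
    match n with
    | 0 => simp [hc0]
    | (m+1) =>
      have h1 : t^(m+1) ≤ 1 := pow_le_one₀ ht0 ht1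
      calc c (m+1) * t^(m+1) * W (m+1) ≤ c (m+1) * 1 * W (m+1) :=
            mul_le_mul_of_nonneg_right
              (mul_le_mul_of_nonneg_left h1 (hcnn (m+1))) (W_nonneg (m+1))
        _ = 1/((m:ℝ)+1)^2 := by rw [mul_one, hkey m]
        _ = 1/((m+1:ℕ):ℝ)^2 := by push_cast; ring
  have hgint : ∀ n, MeasureTheory.IntegrableOn (g n) (Ioc (0:ℝ) 1) :=
    fun n => (intervalIntegrable_iff_integrableOn_Ioc_of_le zero_le_one).1 (g_intable n)
  have hfint : ∀ n, MeasureTheory.Integrable (f n) μ := fun n => (hgint n).const_mul _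
  have hfmeas : ∀ n, MeasureTheory.AEStronglyMeasurable (f n) μ :=
    fun n => ((g_meas n).const_mul _).aestronglyMeasurable
  have hfnn : ∀ n, 0 ≤ᵐ[μ] f n := by
    intro n
    filter_upwards [MeasureTheory.ae_restrict_mem measurableSet_Ioc] with u hu
    exact mul_nonneg (mul_nonneg (hcnn n) (pow_nonneg ht0 n))
      (div_nonneg (pow_nonneg hu.1.le n) (Real.sqrt_nonneg _))
  have hint_val : ∀ n, (∫ u, f n u ∂μ) = c n * t^n * W n := by
    intro n
    have hgval : (∫ u, g n u ∂μ) = W n := by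
      rw [← W_integral n, intervalIntegral.integral_of_le zero_le_one]
    rw [hf]
    simp only
    rw [MeasureTheory.integral_const_mul, hgval]
  have hlint : (∑' n, ∫⁻ u, ‖f n u‖₊ ∂μ) ≠ ⊤ := by
    have heach : ∀ n, (∫⁻ u, ‖f n u‖₊ ∂μ) = ENNReal.ofReal (c n * t^n * W n) := by
      intro n
      rw [← hint_val n,
        MeasureTheory.ofReal_integral_eq_lintegral_ofReal (hfint n) (hfnn n)]
      refine MeasureTheory.lintegral_congr_ae ?_
      filter_upwards [hfnn n] with u hu
      rw [← Real.enorm_eq_ofReal hu]; rfl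
    rw [tsum_congr heach, ← ENNReal.ofReal_tsum_of_nonneg hvnn hsum]
    exact ENNReal.ofReal_ne_top
  have h2 : ∀ᵐ (u : ℝ), u ≠ (1:ℝ) := by
    refine MeasureTheory.ae_iff.2 ?_
    have : {a : ℝ | ¬ a ≠ 1} = {1} := by ext a; simp
    rw [this]
    exact MeasureTheory.measure_singleton 1
  have hae : (fun u => (Real.arcsin (t*u) + (1/Real.pi) * (Real.arcsin (t*u))^2) /
      Real.sqrt (1-u^2)) =ᵐ[μ] fun u => ∑' n, f n u := by
    filter_upwards [MeasureTheory.ae_restrict_mem measurableSet_Ioc,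
      MeasureTheory.ae_restrict_of_ae h2] with u hu hu1
    have hu0 : 0 < u := hu.1
    have hu1' : u < 1 := lt_of_le_of_ne hu.2 hu1
    have hx : t*u ∈ Ico (0:ℝ) 1 := by
      constructor
      · exact mul_nonneg ht0 hu0.le
      · calc t*u ≤ 1*u := by gcongr
          _ < 1 := by rwa [one_mul]
    have hxa : |t*u| < 1 := abs_lt.2 ⟨by linarith [hx.1], hx.2⟩
    have hsA : Summable fun n => A n * (t*u)^n := PbA.summable hxa
    have hsB : Summable fun n => B n * (t*u)^n := PbB.summable hxa
    rw [← SB_eq _ hx, ← SA_eq _ hx, S, S, ← tsum_mul_left (a := 1/Real.pi),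
      ← Summable.tsum_add hsA (hsB.mul_left _), ← tsum_div_const]
    refine tsum_congr fun n => ?_
    rw [hf, hc]
    simp only [g]
    rw [mul_pow]
    ring
  calc ∫ u in (0:ℝ)..1,
        (Real.arcsin (t * u) + (1 / Real.pi) * (Real.arcsin (t * u)) ^ 2) /
          Real.sqrt (1 - u ^ 2)
      = ∫ u, (Real.arcsin (t*u) + (1/Real.pi) * (Real.arcsin (t*u))^2) /
          Real.sqrt (1-u^2) ∂μ := intervalIntegral.integral_of_le zero_le_one
    _ = ∫ u, (∑' n, f n u) ∂μ := MeasureTheory.integral_congr_ae hae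
    _ = ∑' n, ∫ u, f n u ∂μ := MeasureTheory.integral_tsum hfmeas hlint
    _ = ∑' n : ℕ, c n * t^n * W n := tsum_congr hint_val
    _ = ∑' n : ℕ, t^(n+1) / ((n+1:ℕ):ℝ)^2 := by
        rw [Summable.tsum_eq_zero_add hsum, hc0]
        simp only [zero_mul, zero_add]
        refine tsum_congr fun m => ?_
        rw [show c (m+1) * t^(m+1) * W (m+1) = t^(m+1) * (c (m+1) * W (m+1)) by ring,
          hkey m]
        push_cast
        ring

end
end DilogAux

open Real

theorem dilog_integral (t : ℝ) (ht0 : 0 ≤ t) (ht1 : t ≤ 1) :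
    ∫ u in (0:ℝ)..1,
        (Real.arcsin (t * u) + (1 / Real.pi) * (Real.arcsin (t * u)) ^ 2) /
          Real.sqrt (1 - u ^ 2) =
      ∑' n : ℕ, t ^ (n + 1) / ((n + 1 : ℕ) : ℝ) ^ 2 := by
  exact DilogAux.main t ht0 ht1
end

section
/- For all real t with 0 ≤ t ≤ 1, ∫_0^1 arsinh(t·u)/√(1-u^2) du = ∑_{n=1}^∞ (-1)^(n-1) t^(2n-1)/(2n-1)^2, the inverse tangent integral Ti₂(t). -/
open Real MeasureTheory Set intervalIntegral

noncomputable def ti2f (s u : ℝ) : ℝ := u / (Real.sqrt (1 - u ^ 2) * Real.sqrt (1 + (s * u) ^ 2))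

lemma ti2_arsinh_rep (t u : ℝ) :
    Real.arsinh (t * u) / Real.sqrt (1 - u ^ 2) = ∫ s in (0:ℝ)..t, ti2f s u := by
  have hderiv : ∀ s : ℝ, HasDerivAt (fun s : ℝ => Real.arsinh (s * u))
      (u * (Real.sqrt (1 + (s * u) ^ 2))⁻¹) s := by
    intro s
    have h1 : HasDerivAt (fun s : ℝ => s * u) u s := by
      simpa using (hasDerivAt_id s).mul_const u
    have := (Real.hasDerivAt_arsinh (s * u)).comp s h1
    simpa [mul_comm, Function.comp_def] using this
  have hcont : Continuous fun s : ℝ => u * (Real.sqrt (1 + (s * u) ^ 2))⁻¹ := by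
    apply continuous_const.mul
    apply Continuous.inv₀ (by fun_prop)
    intro s
    positivity
  have hint : ∫ s in (0:ℝ)..t, u * (Real.sqrt (1 + (s * u) ^ 2))⁻¹
      = Real.arsinh (t * u) - Real.arsinh (0 * u) :=
    intervalIntegral.integral_eq_sub_of_hasDerivAt (fun s _ => hderiv s)
      (hcont.intervalIntegrable 0 t)
  rw [show Real.arsinh (t * u) = ∫ s in (0:ℝ)..t, u * (Real.sqrt (1 + (s * u) ^ 2))⁻¹ by
    rw [hint]; simp]
  rw [← intervalIntegral.integral_div]
  congr 1; funext s
  unfold ti2f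
  rw [mul_comm (Real.sqrt (1 - u ^ 2)), ← div_div, ← div_eq_mul_inv]

lemma ti2_sqrt_int : IntervalIntegrable (fun u : ℝ => 1 / Real.sqrt (1 - u ^ 2)) volume 0 1 := by
  apply intervalIntegrable_deriv_of_nonneg (g := Real.arcsin)
  · exact Real.continuous_arcsin.continuousOn
  · intro x hx
    simp only [min_eq_left zero_le_one, max_eq_right zero_le_one] at hx
    exact Real.hasDerivAt_arcsin (by linarith [hx.1]) (ne_of_lt hx.2)
  · intro x _
    positivity

lemma ti2_bound (s u : ℝ) (h0 : 0 ≤ u) (h1 : u ≤ 1) :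
    ‖ti2f s u‖ ≤ 1 / Real.sqrt (1 - u ^ 2) := by
  unfold ti2f
  have ha : 0 ≤ Real.sqrt (1 - u ^ 2) := Real.sqrt_nonneg _
  have hd : 1 ≤ Real.sqrt (1 + (s * u) ^ 2) := by
    rw [Real.le_sqrt zero_le_one (by positivity)]
    nlinarith [sq_nonneg (s*u)]
  rw [Real.norm_of_nonneg (div_nonneg h0 (by positivity))]
  rw [← div_div]
  calc u / Real.sqrt (1 - u ^ 2) / Real.sqrt (1 + (s * u) ^ 2)
      ≤ u / Real.sqrt (1 - u ^ 2) := div_le_self (by positivity) hd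
    _ ≤ 1 / Real.sqrt (1 - u ^ 2) := by
        rcases eq_or_lt_of_le ha with h | h
        · simp [← h]
        · gcongr

lemma ti2_meas : Measurable (fun p : ℝ × ℝ => ti2f p.2 p.1) := by
  unfold ti2f
  fun_prop

lemma ti2_int (s : ℝ) : IntervalIntegrable (fun u => ti2f s u) volume 0 1 := by
  apply ti2_sqrt_int.mono_fun
  · exact ((ti2_meas.comp (measurable_id.prodMk measurable_const)).aestronglyMeasurable)
  · rw [Set.uIoc_of_le zero_le_one]
    refine (ae_restrict_iff' measurableSet_Ioc).2 (ae_of_all _ fun u hu => ?_)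
    simp only
    calc ‖ti2f s u‖ ≤ 1 / Real.sqrt (1 - u ^ 2) := ti2_bound s u hu.1.le hu.2
      _ ≤ ‖1 / Real.sqrt (1 - u ^ 2)‖ := by rw [Real.norm_eq_abs]; exact le_abs_self _

lemma ti2_unc_int (t : ℝ) : Integrable (fun p : ℝ × ℝ => ti2f p.2 p.1)
    ((volume.restrict (Set.Ioc (0:ℝ) 1)).prod (volume.restrict (Set.Ioc (0:ℝ) t))) := by
  have hg : Integrable (fun p : ℝ × ℝ => 1 / Real.sqrt (1 - p.1 ^ 2) * 1)
      ((volume.restrict (Set.Ioc (0:ℝ) 1)).prod (volume.restrict (Set.Ioc (0:ℝ) t))) := by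
    have hg1 : Integrable (fun u : ℝ => 1 / Real.sqrt (1 - u ^ 2))
        (volume.restrict (Set.Ioc (0:ℝ) 1)) := ti2_sqrt_int.1
    exact hg1.mul_prod (integrable_const (1:ℝ))
  refine hg.mono' ti2_meas.aestronglyMeasurable ?_
  rw [Measure.prod_restrict]
  refine (ae_restrict_iff' (measurableSet_Ioc.prod measurableSet_Ioc)).2
    (ae_of_all _ fun p hp => ?_)
  rw [mul_one]
  exact ti2_bound _ _ hp.1.1.le hp.1.2

lemma ti2_inner (s : ℝ) (hs : 0 < s) :
    ∫ u in (0:ℝ)..1, ti2f s u = Real.arctan s / s := by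
  set b := Real.sqrt (1 + s ^ 2) with hb
  have hb0 : 0 < b := Real.sqrt_pos.2 (by positivity)
  have hbsq : b ^ 2 = 1 + s ^ 2 := Real.sq_sqrt (by positivity)
  set F : ℝ → ℝ := fun u => -(Real.arcsin (s / b * Real.sqrt (1 - u ^ 2)) / s) with hF
  have hcont : ContinuousOn F (Set.Icc 0 1) := by
    apply Continuous.continuousOn
    exact ((Real.continuous_arcsin.comp (continuous_const.mul
      ((continuous_const.sub (continuous_pow 2)).sqrt))).div_const s).neg
  have hderiv : ∀ u ∈ Set.Ioo (0:ℝ) 1, HasDerivWithinAt F (ti2f s u) (Set.Ioi u) u := by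
    intro u hu
    obtain ⟨hu0, hu1⟩ := hu
    have h1u : 0 < 1 - u ^ 2 := by nlinarith
    set a := Real.sqrt (1 - u ^ 2) with ha
    have ha0 : 0 < a := Real.sqrt_pos.2 h1u
    have hasq : a ^ 2 = 1 - u ^ 2 := Real.sq_sqrt h1u.le
    set d := Real.sqrt (1 + (s * u) ^ 2) with hd
    have hd0 : 0 < d := Real.sqrt_pos.2 (by positivity)
    have hdsq : d ^ 2 = 1 + (s * u) ^ 2 := Real.sq_sqrt (by positivity)
    -- derivative of inner sqrt
    have h2 : HasDerivAt (fun u : ℝ => Real.sqrt (1 - u ^ 2))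
        (1 / (2 * a) * (0 - 2 * u)) u := by
      have h1 : HasDerivAt (fun u : ℝ => 1 - u ^ 2) (0 - 2 * u) u := by
        exact ((hasDerivAt_pow 2 u).const_sub (1:ℝ)).congr_deriv (by simp)
      exact (Real.hasDerivAt_sqrt (ne_of_gt h1u)).comp u h1
    have h3 : HasDerivAt (fun u : ℝ => s / b * Real.sqrt (1 - u ^ 2))
        (s / b * (1 / (2 * a) * (0 - 2 * u))) u := h2.const_mul _
    -- arcsin composition
    have hy0 : 0 < s / b * a := by positivity
    have hy1 : s / b * a < 1 := by
      have h1 : s < b := by nlinarith [hbsq, hb0, hs]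
      have h2 : a ≤ 1 := by nlinarith [hasq, ha0]
      calc s / b * a ≤ s / b * 1 := by
            apply mul_le_mul_of_nonneg_left h2 (by positivity)
        _ < 1 := by rw [mul_one, div_lt_one hb0]; exact h1
    have h4 : HasDerivAt F
        (-(1 / Real.sqrt (1 - (s / b * a) ^ 2) * (s / b * (1 / (2 * a) * (0 - 2 * u))) / s)) u := by
      have := (Real.hasDerivAt_arcsin (by linarith : s / b * a ≠ -1)
        (ne_of_lt hy1)).comp u h3
      exact (this.div_const s).neg
    -- identify the sqrt
    have h5 : Real.sqrt (1 - (s / b * a) ^ 2) = d / b := by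
      have : 1 - (s / b * a) ^ 2 = (d / b) ^ 2 := by
        field_simp
        nlinarith [hasq, hdsq, hbsq]
      rw [this, Real.sqrt_sq (by positivity)]
    rw [h5] at h4
    have h6 : -(1 / (d / b) * (s / b * (1 / (2 * a) * (0 - 2 * u))) / s) = ti2f s u := by
      unfold ti2f
      field_simp
      ring
      rw [hd, ha]
      ring_nf
    rw [h6] at h4
    exact h4.hasDerivWithinAt
  have := intervalIntegral.integral_eq_sub_of_hasDeriv_right_of_le zero_le_one
    hcont hderiv (ti2_int s)
  rw [this, hF]
  simp only [one_pow, sub_self, Real.sqrt_zero, mul_zero, Real.arcsin_zero, zero_div, neg_zero,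
    pow_two, zero_mul, sub_zero, Real.sqrt_one, mul_one]
  rw [Real.arctan_eq_arcsin]
  ring

theorem ti2_integral (t : ℝ) (ht0 : 0 ≤ t) (ht1 : t ≤ 1) :
    ∫ u in (0:ℝ)..1, Real.arsinh (t * u) / Real.sqrt (1 - u ^ 2) =
      ∑' n : ℕ, (-1) ^ n * t ^ (2 * (n + 1) - 1) / ((2 * (n + 1) - 1 : ℕ) : ℝ) ^ 2 := by
  have key : (∫ u in (0:ℝ)..1, Real.arsinh (t * u) / Real.sqrt (1 - u ^ 2))
      = ∫ s in Set.Ioo (0:ℝ) t, Real.arctan s / s := by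
    calc ∫ u in (0:ℝ)..1, Real.arsinh (t * u) / Real.sqrt (1 - u ^ 2)
        = ∫ u in (0:ℝ)..1, ∫ s in (0:ℝ)..t, ti2f s u := by
          simp_rw [ti2_arsinh_rep t]
      _ = ∫ u in Set.Ioc (0:ℝ) 1, ∫ s in Set.Ioc (0:ℝ) t, ti2f s u := by
          rw [intervalIntegral.integral_of_le zero_le_one]
          simp_rw [intervalIntegral.integral_of_le ht0]
      _ = ∫ s in Set.Ioc (0:ℝ) t, ∫ u in Set.Ioc (0:ℝ) 1, ti2f s u :=
          MeasureTheory.integral_integral_swap (ti2_unc_int t)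
      _ = ∫ s in Set.Ioc (0:ℝ) t, Real.arctan s / s := by
          refine setIntegral_congr_fun measurableSet_Ioc fun s hs => ?_
          rw [← intervalIntegral.integral_of_le zero_le_one]
          exact ti2_inner s hs.1
      _ = ∫ s in Set.Ioo (0:ℝ) t, Real.arctan s / s := integral_Ioc_eq_integral_Ioo
  rw [key]
  set F : ℕ → ℝ → ℝ := fun n s => (-1 : ℝ) ^ n * s ^ (2 * n) / (2 * (n : ℝ) + 1) with hFdef
  have hF_int : ∀ n : ℕ, Integrable (F n) (volume.restrict (Set.Ioo 0 t)) := by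
    intro n
    have : Continuous (F n) := by fun_prop
    exact ((this.intervalIntegrable 0 t).1).mono_set Set.Ioo_subset_Ioc_self
  have hval : ∀ n : ℕ, ∫ s in Set.Ioo (0:ℝ) t, F n s
      = (-1 : ℝ) ^ n * t ^ (2 * n + 1) / (2 * (n : ℝ) + 1) ^ 2 := by
    intro n
    rw [← integral_Ioc_eq_integral_Ioo, ← intervalIntegral.integral_of_le ht0, hFdef]
    simp only
    rw [intervalIntegral.integral_div, intervalIntegral.integral_const_mul,
      integral_pow, zero_pow (by omega : 2 * n + 1 ≠ 0)]
    have hne : (2 * (n:ℝ) + 1) ≠ 0 := by positivity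
    push_cast
    field_simp
    ring
  have hnorm : ∀ n : ℕ, ∫ s in Set.Ioo (0:ℝ) t, ‖F n s‖
      = t ^ (2 * n + 1) / (2 * (n : ℝ) + 1) ^ 2 := by
    intro n
    rw [setIntegral_congr_fun measurableSet_Ioo
      (g := fun s => s ^ (2 * n) / (2 * (n : ℝ) + 1)) (fun s hs => by
        simp only [hFdef, Real.norm_eq_abs, abs_div, abs_mul, abs_pow, abs_neg, abs_one,
          one_pow, one_mul, abs_of_nonneg hs.1.le, abs_of_pos (by positivity :
            (0:ℝ) < 2 * (n : ℝ) + 1)])]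
    rw [← integral_Ioc_eq_integral_Ioo, ← intervalIntegral.integral_of_le ht0]
    rw [intervalIntegral.integral_div, integral_pow, zero_pow (by omega : 2 * n + 1 ≠ 0)]
    have hne : (2 * (n:ℝ) + 1) ≠ 0 := by positivity
    push_cast
    field_simp
    ring
  have hsum : Summable fun n : ℕ => ∫ s in Set.Ioo (0:ℝ) t, ‖F n s‖ := by
    have hbase : Summable (fun n : ℕ => 1 / ((n : ℝ) + 1) ^ 2) := by
      have := (summable_nat_add_iff (f := fun n : ℕ => 1 / (n : ℝ) ^ 2) 1).2
        (summable_one_div_nat_pow.2 one_lt_two)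
      simpa using this
    refine Summable.of_nonneg_of_le (fun n => ?_) (fun n => ?_) hbase
    · rw [hnorm n]; positivity
    · rw [hnorm n]
      have h1 : t ^ (2 * n + 1) ≤ 1 := pow_le_one₀ ht0 ht1
      have h2 : ((n : ℝ) + 1) ^ 2 ≤ (2 * (n : ℝ) + 1) ^ 2 := by
        have : (0:ℝ) ≤ (n : ℝ) := Nat.cast_nonneg n
        nlinarith
      calc t ^ (2 * n + 1) / (2 * (n : ℝ) + 1) ^ 2
          ≤ 1 / (2 * (n : ℝ) + 1) ^ 2 := by gcongr
        _ ≤ 1 / ((n : ℝ) + 1) ^ 2 := by gcongr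
  have hpt : Set.EqOn (fun s => Real.arctan s / s) (fun s => ∑' n, F n s)
      (Set.Ioo (0:ℝ) t) := by
    intro s hs
    have hs0 : 0 < s := hs.1
    have hs1 : ‖s‖ < 1 := by
      rw [Real.norm_eq_abs, abs_of_pos hs0]
      exact lt_of_lt_of_le hs.2 ht1
    have h := (Real.hasSum_arctan hs1).div_const s
    have heq : (fun n : ℕ => (-1 : ℝ) ^ n * s ^ (2 * n + 1) / ((2 * n + 1 : ℕ) : ℝ) / s)
        = fun n => F n s := by
      funext n
      rw [hFdef]
      simp only
      rw [pow_succ]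
      push_cast
      field_simp
      try ring
    rw [heq] at h
    simpa using h.tsum_eq.symm
  rw [setIntegral_congr_fun measurableSet_Ioo hpt]
  rw [← MeasureTheory.integral_tsum_of_summable_integral_norm hF_int hsum]
  refine tsum_congr fun n => ?_
  rw [hval n, show 2 * (n + 1) - 1 = 2 * n + 1 by omega]
  push_cast
  ring
end

section
/- ∫_0^1 arsinh(u)/√(1-u^2) du = G, the Catalan constant. -/
open Real MeasureTheory Set intervalIntegral

noncomputable def Fk (s u : ℝ) : ℝ := u / (Real.sqrt (1 + (u*s)^2) * Real.sqrt (1 - u^2))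

lemma Fk_meas : Measurable (fun p : ℝ × ℝ => Fk p.1 p.2) := by
  unfold Fk
  fun_prop

-- bound integrable
lemma bound_int : IntegrableOn (fun u : ℝ => (1-u) ^ (-(1/2) : ℝ)) (Ioc (0:ℝ) 1) := by
  have h : IntervalIntegrable (fun x : ℝ => x ^ (-(1/2):ℝ)) volume 0 1 :=
    intervalIntegral.intervalIntegrable_rpow' (by norm_num)
  have h2 := (h.comp_sub_left 1).symm
  simpa using h2.1

lemma Fk_bound {s u : ℝ} (hu : u ∈ Ioo (0:ℝ) 1) : ‖Fk s u‖ ≤ (1-u) ^ (-(1/2) : ℝ) := by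
  obtain ⟨h0, h1⟩ := hu
  have hA : (1:ℝ) ≤ Real.sqrt (1 + (u*s)^2) := by
    calc (1:ℝ) = Real.sqrt 1 := Real.sqrt_one.symm
    _ ≤ _ := Real.sqrt_le_sqrt (by nlinarith [sq_nonneg (u*s)])
  have hB : Real.sqrt (1-u) ≤ Real.sqrt (1 - u^2) := by
    apply Real.sqrt_le_sqrt; nlinarith
  have hBpos : 0 < Real.sqrt (1-u) := Real.sqrt_pos.2 (by linarith)
  have hFk : Fk s u ≤ (Real.sqrt (1-u))⁻¹ := by
    unfold Fk
    have hprod : 0 < Real.sqrt (1 + (u*s)^2) * Real.sqrt (1 - u^2) :=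
      mul_pos (Real.sqrt_pos.2 (by positivity)) (Real.sqrt_pos.2 (by nlinarith))
    rw [div_le_iff₀ hprod]
    calc (Real.sqrt (1-u))⁻¹ * (Real.sqrt (1 + (u*s)^2) * Real.sqrt (1 - u^2))
        ≥ (Real.sqrt (1-u))⁻¹ * (1 * Real.sqrt (1-u)) := by
          apply mul_le_mul_of_nonneg_left _ (by positivity)
          exact mul_le_mul hA hB (by positivity) (by positivity)
      _ = 1 := by field_simp
      _ ≥ u := le_of_lt h1
  have hnn : 0 ≤ Fk s u := by unfold Fk; positivity
  rw [Real.norm_of_nonneg hnn, Real.rpow_neg (by linarith), ← Real.sqrt_eq_rpow]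
  · exact hFk

lemma Fk_sect_int (s : ℝ) : IntegrableOn (fun u => Fk s u) (Ioc (0:ℝ) 1) := by
  apply Integrable.mono' bound_int
  · exact (Fk_meas.comp (measurable_const.prodMk measurable_id)).aestronglyMeasurable
  · filter_upwards [ae_restrict_mem measurableSet_Ioc] with u hu
    rcases eq_or_lt_of_le hu.2 with h1 | h1
    · have : Fk s u = 0 := by
        unfold Fk; rw [show (1:ℝ) - u^2 = 0 by rw [h1]; ring]; simp
      rw [this, norm_zero]
      exact Real.rpow_nonneg (by linarith [h1.le]) _
    · exact Fk_bound ⟨hu.1, h1⟩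

lemma Fk_intervalInt (s : ℝ) : IntervalIntegrable (fun u => Fk s u) volume 0 1 := by
  rw [intervalIntegrable_iff_integrableOn_Ioc_of_le zero_le_one]
  exact Fk_sect_int s

lemma inner_s {s : ℝ} (hs : s ∈ Ioo (0:ℝ) 1) :
    ∫ u in (0:ℝ)..1, Fk s u = Real.arctan s / s := by
  obtain ⟨hs0, hs1⟩ := hs
  set c : ℝ := s / Real.sqrt (1 + s^2) with hc
  have hsq : Real.sqrt (1 + s^2) > 0 := Real.sqrt_pos.2 (by positivity)
  have hcpos : 0 < c := by positivity
  have hc1 : c < 1 := by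
    rw [hc, div_lt_one hsq]
    nlinarith [Real.sq_sqrt (show (0:ℝ) ≤ 1 + s^2 by positivity), Real.sqrt_nonneg (1+s^2)]
  have hc2 : c^2 = s^2 / (1 + s^2) := by
    rw [hc, div_pow, Real.sq_sqrt (by positivity)]
  set G : ℝ → ℝ := fun u => -(1/s) * Real.arcsin (c * Real.sqrt (1 - u^2)) with hG
  have hcont : ContinuousOn G (Icc 0 1) := by
    apply Continuous.continuousOn
    exact continuous_const.mul (Real.continuous_arcsin.comp
      (continuous_const.mul ((continuous_const.sub (continuous_pow 2)).sqrt)))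
  have hderiv : ∀ u ∈ Ioo (0:ℝ) 1, HasDerivAt G (Fk s u) u := by
    intro u hu
    obtain ⟨hu0, hu1⟩ := hu
    have h1u : 0 < 1 - u^2 := by nlinarith
    have hsqrtu : 0 < Real.sqrt (1 - u^2) := Real.sqrt_pos.2 h1u
    have hsle : Real.sqrt (1 - u^2) ≤ 1 := by
      calc Real.sqrt (1 - u^2) ≤ Real.sqrt 1 := Real.sqrt_le_sqrt (by nlinarith)
      _ = 1 := Real.sqrt_one
    have hyval : c * Real.sqrt (1 - u^2) < 1 := by
      calc c * Real.sqrt (1 - u^2) ≤ c * 1 := by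
            exact mul_le_mul_of_nonneg_left (by simpa using hsle) hcpos.le
        _ < 1 := by linarith
    have hypos : 0 < c * Real.sqrt (1 - u^2) := by positivity
    -- derivative of u ↦ sqrt (1 - u^2)
    have d1 : HasDerivAt (fun u : ℝ => 1 - u^2) (-(2*u)) u := by
      simpa using ((hasDerivAt_pow 2 u).const_sub 1)
    have d2 : HasDerivAt (fun u : ℝ => Real.sqrt (1 - u^2))
        (1 / (2 * Real.sqrt (1 - u^2)) * (-(2*u))) u :=
      (Real.hasDerivAt_sqrt h1u.ne').comp u d1
    have d3 : HasDerivAt (fun u : ℝ => c * Real.sqrt (1 - u^2))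
        (c * (1 / (2 * Real.sqrt (1 - u^2)) * (-(2*u)))) u := d2.const_mul c
    have d4 : HasDerivAt (fun y : ℝ => Real.arcsin y)
        (1 / Real.sqrt (1 - (c * Real.sqrt (1 - u^2))^2)) (c * Real.sqrt (1 - u^2)) :=
      Real.hasDerivAt_arcsin (by linarith) (by linarith)
    have d5 := (d4.comp u d3).const_mul (-(1/s))
    convert d5 using 1
    · rfl
    · rfl
    · rfl
    have key : 1 - (c * Real.sqrt (1 - u^2))^2 = (1 + (u*s)^2) / (1 + s^2) := by
      rw [mul_pow, Real.sq_sqrt h1u.le, hc2]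
      field_simp
      ring
    have e1 : Real.sqrt (1+(u*s)^2) ≠ 0 := by positivity
    have e3 : Real.sqrt (1-u^2) ≠ 0 := hsqrtu.ne'
    rw [key, Real.sqrt_div (by positivity : (0:ℝ) ≤ 1+(u*s)^2), hc]
    unfold Fk
    field_simp
  have := intervalIntegral.integral_eq_sub_of_hasDerivAt_of_le zero_le_one hcont hderiv
    (Fk_intervalInt s)
  rw [this]
  have h10 : Real.sqrt (1 - (1:ℝ)^2) = 0 := by norm_num
  have h00 : Real.sqrt (1 - (0:ℝ)^2) = 1 := by norm_num
  rw [hG]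
  simp only [h10, h00, mul_zero, mul_one, Real.arcsin_zero, mul_zero]
  rw [Real.arctan_eq_arcsin]
  field_simp
  simp [hc]

lemma arsinh_integral (u : ℝ) :
    ∫ t in (0:ℝ)..u, (Real.sqrt (1+t^2))⁻¹ = Real.arsinh u := by
  rw [intervalIntegral.integral_eq_sub_of_hasDerivAt
    (fun t _ => Real.hasDerivAt_arsinh t) ?_]
  · simp
  · apply Continuous.intervalIntegrable
    exact (Real.continuous_sqrt.comp (by continuity)).inv₀
      (fun t => (Real.sqrt_pos.2 (by positivity)).ne')

lemma inner_u {u : ℝ} (hu : u ∈ Ioo (0:ℝ) 1) :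
    ∫ s in (0:ℝ)..1, Fk s u = Real.arsinh u / Real.sqrt (1 - u^2) := by
  have hrw : (fun s => Fk s u) =
      fun s => (Real.sqrt (1-u^2))⁻¹ * (u * (Real.sqrt (1+(u*s)^2))⁻¹) := by
    funext s; unfold Fk; ring
  have hcomp := intervalIntegral.integral_comp_mul_left
    (fun t => (Real.sqrt (1+t^2))⁻¹) hu.1.ne' (a := 0) (b := 1)
  rw [hrw, intervalIntegral.integral_const_mul, intervalIntegral.integral_const_mul]
  simp only [mul_zero, mul_one] at hcomp
  rw [hcomp, smul_eq_mul, arsinh_integral]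
  rw [div_eq_mul_inv]
  field_simp [hu.1.ne']

noncomputable abbrev μ01 : MeasureTheory.Measure ℝ := volume.restrict (Ioc (0:ℝ) 1)

lemma Fk_norm_bound_ae (s : ℝ) : ∀ᵐ u ∂μ01, ‖Fk s u‖ ≤ (1-u) ^ (-(1/2) : ℝ) := by
  filter_upwards [ae_restrict_mem measurableSet_Ioc] with u hu
  rcases eq_or_lt_of_le hu.2 with h1 | h1
  · have : Fk s u = 0 := by
      unfold Fk; rw [show (1:ℝ) - u^2 = 0 by rw [h1]; ring]; simp
    rw [this, norm_zero]
    exact Real.rpow_nonneg (by linarith [h1.le]) _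
  · exact Fk_bound ⟨hu.1, h1⟩

lemma Fk_norm_int_le (s : ℝ) :
    ∫ u, ‖Fk s u‖ ∂μ01 ≤ ∫ u, (1-u) ^ (-(1/2) : ℝ) ∂μ01 :=
  integral_mono_ae (Fk_sect_int s).norm bound_int (Fk_norm_bound_ae s)

lemma Fk_prod_int : Integrable (Function.uncurry Fk) (μ01.prod μ01) := by
  have hmeas : AEStronglyMeasurable (Function.uncurry Fk) (μ01.prod μ01) :=
    Fk_meas.aestronglyMeasurable
  rw [MeasureTheory.integrable_prod_iff hmeas]
  refine ⟨ae_of_all _ (fun s => Fk_sect_int s), ?_⟩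
  have : IsFiniteMeasure μ01 := ⟨by simp⟩
  apply Integrable.mono' (integrable_const (∫ u, (1-u) ^ (-(1/2) : ℝ) ∂μ01))
  · exact hmeas.norm.integral_prod_right'
  · refine ae_of_all _ (fun s => ?_)
    rw [Real.norm_of_nonneg (integral_nonneg (fun u => norm_nonneg _))]
    exact Fk_norm_int_le s

noncomputable def gk (n : ℕ) (s : ℝ) : ℝ := (-1)^n * s^(2*n) / (2*(n:ℝ)+1)

lemma gk_hasSum {s : ℝ} (hs : s ∈ Ioo (0:ℝ) 1) :
    HasSum (fun n => gk n s) (Real.arctan s / s) := by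
  have h := (Real.hasSum_arctan (x := s)
    (by rw [Real.norm_eq_abs, abs_of_pos hs.1]; exact hs.2)).div_const s
  convert h using 2 with n
  · rfl
  unfold gk
  have hs0 : s ≠ 0 := hs.1.ne'
  field_simp
  push_cast
  ring

lemma gk_norm (n : ℕ) (s : ℝ) : ‖gk n s‖ = s^(2*n) / (2*(n:ℝ)+1) := by
  unfold gk
  rw [Real.norm_eq_abs, abs_div, abs_mul, abs_pow, abs_neg, abs_one, one_pow, one_mul,
    abs_of_nonneg ((even_two_mul n).pow_nonneg s), abs_of_pos (by positivity)]

lemma gk_cont (n : ℕ) : Continuous (gk n) := by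
  unfold gk; fun_prop

lemma gk_int (n : ℕ) : ∫ s, gk n s ∂μ01 = (-1)^n / (2*(n:ℝ)+1)^2 := by
  rw [← intervalIntegral.integral_of_le zero_le_one]
  have : (fun s => gk n s) = fun s => ((-1)^n / (2*(n:ℝ)+1)) * s^(2*n) := by
    funext s; unfold gk; ring
  rw [this, intervalIntegral.integral_const_mul, integral_pow]
  push_cast
  have : (2*(n:ℝ)+1) ≠ 0 := by positivity
  field_simp
  ring

lemma gk_norm_int (n : ℕ) : ∫ s, ‖gk n s‖ ∂μ01 = 1 / (2*(n:ℝ)+1)^2 := by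
  simp only [gk_norm]
  rw [← intervalIntegral.integral_of_le zero_le_one]
  have : (fun s : ℝ => s^(2*n) / (2*(n:ℝ)+1)) = fun s => (1 / (2*(n:ℝ)+1)) * s^(2*n) := by
    funext s; ring
  rw [this, intervalIntegral.integral_const_mul, integral_pow]
  push_cast
  have : (2*(n:ℝ)+1) ≠ 0 := by positivity
  field_simp
  ring

lemma gk_summable : Summable (fun n => ∫ s, ‖gk n s‖ ∂μ01) := by
  simp only [gk_norm_int]
  have h0 : Summable (fun n : ℕ => 1 / ((n:ℝ)+1)^2) := by
    have := (Real.summable_one_div_nat_pow (p := 2)).2 one_lt_two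
    have h1 := (summable_nat_add_iff 1).2 this
    convert h1 using 2 with n
    · rfl
    push_cast
    ring
  apply h0.of_nonneg_of_le (fun n => by positivity)
  intro n
  have hn : (0:ℝ) ≤ n := Nat.cast_nonneg n
  rw [div_le_div_iff₀ (by positivity) (by positivity)]
  nlinarith

theorem integral_arsinh_div_sqrt_eq_catalan :
    ∫ u in (0:ℝ)..1, Real.arsinh u / Real.sqrt (1 - u ^ 2) =
      ∑' n : ℕ, (-1) ^ n / ((2 * n + 1 : ℕ) : ℝ) ^ 2 := by
  have hae : ∀ᵐ x ∂μ01, x ∈ Ioo (0:ℝ) 1 := by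
    have h2 : ∀ᵐ x ∂μ01, x ≠ (1:ℝ) := by
      rw [ae_iff]
      have : {x : ℝ | ¬ x ≠ 1} = {1} := by ext x; simp
      rw [this]
      simp [Measure.restrict_apply]
    filter_upwards [ae_restrict_mem measurableSet_Ioc, h2] with x hx hne
    exact ⟨hx.1, lt_of_le_of_ne hx.2 hne⟩
  have step1 : ∫ u in (0:ℝ)..1, Real.arsinh u / Real.sqrt (1 - u ^ 2)
      = ∫ u, (∫ s, Fk s u ∂μ01) ∂μ01 := by
    rw [intervalIntegral.integral_of_le zero_le_one]
    apply MeasureTheory.integral_congr_ae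
    filter_upwards [hae] with u hu
    rw [← inner_u hu, intervalIntegral.integral_of_le zero_le_one]
  have step2 : ∫ u, (∫ s, Fk s u ∂μ01) ∂μ01 = ∫ s, (∫ u, Fk s u ∂μ01) ∂μ01 :=
    (MeasureTheory.integral_integral_swap Fk_prod_int).symm
  have step3 : ∫ s, (∫ u, Fk s u ∂μ01) ∂μ01 = ∫ s, (∑' n, gk n s) ∂μ01 := by
    apply MeasureTheory.integral_congr_ae
    filter_upwards [hae] with s hs
    rw [← intervalIntegral.integral_of_le zero_le_one, inner_s hs]
    exact ((gk_hasSum hs).tsum_eq).symm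
  have step4 : ∫ s, (∑' n, gk n s) ∂μ01 = ∑' n, ∫ s, gk n s ∂μ01 :=
    (integral_tsum_of_summable_integral_norm
      (fun n => (gk_cont n).integrableOn_Ioc) gk_summable).symm
  rw [step1, step2, step3, step4]
  apply tsum_congr
  intro n
  rw [gk_int]
  push_cast
  ring
end

section
/- (2/π) · ∫_0^1 ((1/2)(arcsin x)^2 · arccos x)/x dx = (1/8)·ζ(3). -/
open Real Set Filter MeasureTheory intervalIntegral
open scoped Topology FourierTransform

noncomputable def fA (x : ℝ) : ℝ := 1 / 2 * Real.arcsin x ^ 2 * Real.arccos x / x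

lemma fA_zero : fA 0 = 0 := by simp [fA]

lemma continuous_fA : Continuous fA := by
  rw [continuous_iff_continuousAt]
  intro x
  rcases eq_or_ne x 0 with rfl | hx
  · rw [← continuousWithinAt_compl_self]
    have h1 : Tendsto (fun y : ℝ => Real.arcsin y / y) (𝓝[≠] 0) (𝓝 1) := by
      have hd := (Real.hasDerivAt_arcsin (by norm_num) (by norm_num) (x := 0))
      have he : (1:ℝ) / Real.sqrt (1 - 0 ^ 2) = 1 := by norm_num
      rw [he, hasDerivAt_iff_tendsto_slope] at hd
      refine hd.congr (fun y => ?_)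
      simp [slope_def_field]
    have h2 : Tendsto (fun y : ℝ => 1 / 2 * Real.arcsin y * Real.arccos y)
        (𝓝[≠] 0) (𝓝 (1 / 2 * Real.arcsin 0 * Real.arccos 0)) :=
      ((continuous_const.mul Real.continuous_arcsin).mul
        Real.continuous_arccos).continuousAt.continuousWithinAt
    have h3 : Tendsto (fun y : ℝ => (Real.arcsin y / y) *
        (1 / 2 * Real.arcsin y * Real.arccos y)) (𝓝[≠] 0)
        (𝓝 (1 * (1 / 2 * Real.arcsin 0 * Real.arccos 0))) := h1.mul h2
    have h4 : ∀ y ∈ ({0}ᶜ : Set ℝ), (Real.arcsin y / y) *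
        (1 / 2 * Real.arcsin y * Real.arccos y) = fA y := by
      intro y hy
      have : y ≠ 0 := hy
      rw [fA]
      field_simp
    unfold ContinuousWithinAt
    rw [fA_zero]
    have h5 : Tendsto fA (𝓝[≠] 0) (𝓝 (1 * (1 / 2 * Real.arcsin 0 * Real.arccos 0))) :=
      h3.congr' (eventually_nhdsWithin_of_forall h4)
    simpa using h5
  · exact (((continuous_const.mul (Real.continuous_arcsin.pow 2)).mul
      Real.continuous_arccos).continuousAt.div continuousAt_id hx)

noncomputable def pA (t : ℝ) : ℝ := 1 / 2 * t ^ 2 * (π / 2 - t)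

lemma substitution :
    ∫ x in (0:ℝ)..1, fA x = ∫ t in (0:ℝ)..(π / 2), Real.cos t • fA (Real.sin t) := by
  have h := intervalIntegral.integral_comp_smul_deriv (a := 0) (b := π / 2)
    (f := Real.sin) (f' := Real.cos) (g := fA)
    (fun x _ => Real.hasDerivAt_sin x) Real.continuous_cos.continuousOn continuous_fA
  rw [Real.sin_zero, Real.sin_pi_div_two] at h
  exact h.symm

lemma telescope (N : ℕ) (t : ℝ) :
    Real.cos t - Real.cos ((2 * (N:ℝ) + 1) * t)
      = 2 * Real.sin t * ∑ n ∈ Finset.range N, Real.sin (2 * ((n:ℝ) + 1) * t) := by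
  induction N with
  | zero => simp
  | succ N ih =>
    rw [Finset.sum_range_succ, mul_add, ← ih]
    have h := Real.cos_sub_cos ((2 * (N:ℝ) + 1) * t) ((2 * (N:ℝ) + 3) * t)
    rw [show ((2 * (N:ℝ) + 1) * t + (2 * (N:ℝ) + 3) * t) / 2 = 2 * ((N:ℝ) + 1) * t by ring,
      show ((2 * (N:ℝ) + 1) * t - (2 * (N:ℝ) + 3) * t) / 2 = -t by ring, Real.sin_neg] at h
    push_cast
    ring_nf
    ring_nf at h ⊢
    linarith [h]

lemma fA_sin_eq {t : ℝ} (ht : t ∈ Set.Icc 0 (π / 2)) (ht0 : t ≠ 0) :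
    fA (Real.sin t) = pA t / Real.sin t := by
  have h1 : Real.arcsin (Real.sin t) = t :=
    Real.arcsin_sin (by linarith [ht.1, Real.pi_pos]) ht.2
  rw [fA, pA, h1, Real.arccos_eq_pi_div_two_sub_arcsin, h1]

lemma key (N : ℕ) : Set.EqOn (fun t => Real.cos t • fA (Real.sin t))
    (fun t => (∑ n ∈ Finset.range N, 2 * pA t * Real.sin (2 * ((n:ℝ) + 1) * t))
      + fA (Real.sin t) * Real.cos ((2 * (N:ℝ) + 1) * t)) (Set.uIcc 0 (π / 2)) := by
  intro t ht
  rw [Set.uIcc_of_le (by positivity)] at ht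
  rcases eq_or_ne t 0 with rfl | ht0
  · simp [fA_zero, pA]
  · have hsin : Real.sin t ≠ 0 := by
      have : 0 < t := lt_of_le_of_ne ht.1 (Ne.symm ht0)
      have h2 : t < π := lt_of_le_of_lt ht.2 (by linarith [Real.pi_pos])
      exact ne_of_gt (Real.sin_pos_of_pos_of_lt_pi this h2)
    simp only [smul_eq_mul, fA_sin_eq ht ht0]
    have hsum : ∑ n ∈ Finset.range N, 2 * pA t * Real.sin (2 * ((n:ℝ) + 1) * t)
        = 2 * pA t * ∑ n ∈ Finset.range N, Real.sin (2 * ((n:ℝ) + 1) * t) :=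
      (Finset.mul_sum _ _ _).symm
    rw [hsum]
    have htel := telescope N t
    field_simp
    ring_nf at htel ⊢
    linear_combination pA t * htel

lemma split (N : ℕ) :
    ∫ t in (0:ℝ)..(π / 2), Real.cos t • fA (Real.sin t)
      = (∑ n ∈ Finset.range N,
          ∫ t in (0:ℝ)..(π / 2), 2 * pA t * Real.sin (2 * ((n:ℝ) + 1) * t))
        + ∫ t in (0:ℝ)..(π / 2), fA (Real.sin t) * Real.cos ((2 * (N:ℝ) + 1) * t) := by
  rw [intervalIntegral.integral_congr (key N)]
  have hcont : ∀ n : ℕ, Continuous fun t => 2 * pA t * Real.sin (2 * ((n:ℝ) + 1) * t) := by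
    intro n
    apply Continuous.mul
    · exact continuous_const.mul (by unfold pA; fun_prop)
    · exact Real.continuous_sin.comp (continuous_const.mul continuous_id)
  have hrem : Continuous fun t => fA (Real.sin t) * Real.cos ((2 * (N:ℝ) + 1) * t) := by
    apply Continuous.mul
    · exact continuous_fA.comp Real.continuous_sin
    · exact Real.continuous_cos.comp (continuous_const.mul continuous_id)
  rw [intervalIntegral.integral_add _ (hrem.intervalIntegrable _ _)]
  · rw [intervalIntegral.integral_finset_sum]
    intro n _
    exact (hcont n).intervalIntegrable _ _
  · exact (continuous_finset_sum _ fun n _ => hcont n).intervalIntegrable _ _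

lemma integral_term (n : ℕ) :
    ∫ t in (0:ℝ)..(π / 2), 2 * pA t * Real.sin (2 * ((n:ℝ) + 1) * t)
      = (2 * (-1:ℝ) ^ n - 1) * π / (8 * ((n:ℝ) + 1) ^ 3) := by
  set m : ℝ := 2 * ((n:ℝ) + 1) with hm_def
  have hm : m ≠ 0 := by positivity
  set F : ℝ → ℝ := fun s => -(1 / 2 * s ^ 2 * (π / 2 - s)) * Real.cos (m * s) / m
      + (π / 2 * s - 3 / 2 * s ^ 2) * Real.sin (m * s) / m ^ 2
      + (π / 2 - 3 * s) * Real.cos (m * s) / m ^ 3 + 3 * Real.sin (m * s) / m ^ 4 with hF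
  have hderiv : ∀ t ∈ Set.uIcc (0:ℝ) (π / 2), HasDerivAt F (pA t * Real.sin (m * t)) t := by
    intro t _
    have hms : HasDerivAt (fun s : ℝ => m * s) m t := by
      simpa using (hasDerivAt_id t).const_mul m
    have hcos : HasDerivAt (fun s : ℝ => Real.cos (m * s)) (-Real.sin (m * t) * m) t := hms.cos
    have hsin : HasDerivAt (fun s : ℝ => Real.sin (m * s)) (Real.cos (m * t) * m) t := hms.sin
    have hA : HasDerivAt (fun s : ℝ => -(1 / 2 * s ^ 2 * (π / 2 - s)))
        (-((1 / 2 * (2 * t ^ 1)) * (π / 2 - t) + (1 / 2 * t ^ 2) * (0 - 1))) t := by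
      exact (((hasDerivAt_pow 2 t).const_mul (1 / 2)).mul
        ((hasDerivAt_const t (π / 2)).sub (hasDerivAt_id t))).neg
    have hB : HasDerivAt (fun s : ℝ => π / 2 * s - 3 / 2 * s ^ 2)
        (π / 2 * 1 - 3 / 2 * (2 * t ^ 1)) t := by
      exact (((hasDerivAt_id t).const_mul (π / 2))).sub ((hasDerivAt_pow 2 t).const_mul (3 / 2))
    have hC : HasDerivAt (fun s : ℝ => π / 2 - 3 * s) (0 - 3 * 1) t := by
      exact (hasDerivAt_const t (π / 2)).sub ((hasDerivAt_id t).const_mul 3)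
    have := ((((hA.mul hcos).div_const m).add ((hB.mul hsin).div_const (m ^ 2))).add
      ((hC.mul hcos).div_const (m ^ 3))).add ((hsin.const_mul 3).div_const (m ^ 4))
    convert this using 1
    · rfl
    · rfl
    · rfl
    rw [pA]
    field_simp
    ring
  have hint : IntervalIntegrable (fun t => pA t * Real.sin (m * t)) volume 0 (π / 2) := by
    apply Continuous.intervalIntegrable
    exact ((continuous_const.mul (continuous_pow 2)).mul
      (continuous_const.sub continuous_id)).mul
      (Real.continuous_sin.comp (continuous_const.mul continuous_id))
  have heq : ∫ t in (0:ℝ)..(π / 2), pA t * Real.sin (m * t) = F (π / 2) - F 0 :=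
    intervalIntegral.integral_eq_sub_of_hasDerivAt hderiv hint
  have h2 : ∫ t in (0:ℝ)..(π / 2), 2 * pA t * Real.sin (m * t)
      = 2 * ∫ t in (0:ℝ)..(π / 2), pA t * Real.sin (m * t) := by
    rw [← intervalIntegral.integral_const_mul]
    congr 1; ext t; ring
  rw [h2, heq]
  have h1 : m * (π / 2) = ((n + 1 : ℕ) : ℝ) * π := by push_cast [hm_def]; ring
  have hc : Real.cos (m * (π / 2)) = (-1:ℝ) ^ (n + 1) := by
    rw [h1]; simpa using Real.cos_nat_mul_pi_sub 0 (n + 1)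
  have hs : Real.sin (m * (π / 2)) = 0 := by rw [h1, Real.sin_nat_mul_pi]
  have hn1 : ((n:ℝ) + 1) ≠ 0 := by positivity
  rw [hF]
  simp only [mul_zero, Real.cos_zero, Real.sin_zero]
  rw [hc, hs]
  rw [show ((-1:ℝ) ^ (n + 1)) = -(-1:ℝ) ^ n by rw [pow_succ]; ring]
  rw [hm_def]
  field_simp
  ring

lemma re_exp_mul_I (θ r : ℝ) :
    (Complex.exp ((θ:ℂ) * Complex.I) * (r:ℂ)).re = Real.cos θ * r := by
  rw [Complex.exp_mul_I, ← Complex.ofReal_cos, ← Complex.ofReal_sin]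
  simp [Complex.mul_re, Complex.add_re, Complex.add_im, Complex.mul_im,
    Complex.cos_ofReal_re]

lemma remainder_tendsto :
    Tendsto (fun N : ℕ => ∫ t in (0:ℝ)..(π / 2),
      fA (Real.sin t) * Real.cos ((2 * (N:ℝ) + 1) * t)) atTop (𝓝 0) := by
  set g : ℝ → ℂ := fun t => (fA (Real.sin t) : ℂ) with hg
  have hgc : Continuous g := Complex.continuous_ofReal.comp
    (continuous_fA.comp Real.continuous_sin)
  set φ : ℝ → ℂ := (Set.Ioc (0:ℝ) (π / 2)).indicator g with hφdef
  have hφ : Integrable φ :=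
    (hgc.integrableOn_Ioc).integrable_indicator measurableSet_Ioc
  set w : ℕ → ℝ := fun N => -((2 * (N:ℝ) + 1) / (2 * π)) with hw_def
  have hw : Tendsto w atTop (cocompact ℝ) := by
    have h1 : Tendsto (fun N : ℕ => 2 * (N:ℝ) + 1) atTop atTop :=
      tendsto_atTop_add_const_right _ 1 (tendsto_natCast_atTop_atTop.const_mul_atTop two_pos)
    have h2 : Tendsto (fun N : ℕ => (2 * (N:ℝ) + 1) / (2 * π)) atTop atTop :=
      h1.atTop_div_const (by positivity)
    have h3 : Tendsto w atTop atBot := tendsto_neg_atTop_atBot.comp h2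
    rw [cocompact_eq_atBot_atTop]
    exact h3.mono_right le_sup_left
  have hRL := (Real.tendsto_integral_exp_smul_cocompact φ).comp hw
  have hre := (Complex.continuous_re.tendsto 0).comp hRL
  simp only [Complex.zero_re] at hre
  refine hre.congr fun N => ?_
  have hπ : (0:ℝ) < π := Real.pi_pos
  have key1 : ∀ v : ℝ, 𝐞 (-(v * w N)) • φ v
      = (Set.Ioc (0:ℝ) (π / 2)).indicator
          (fun v => Complex.exp (((2 * (N:ℝ) + 1) * v : ℝ) * Complex.I) * g v) v := by
    intro v
    by_cases hv : v ∈ Set.Ioc (0:ℝ) (π / 2)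
    · rw [hφdef, Set.indicator_of_mem hv, Set.indicator_of_mem hv, Circle.smul_def,
        Real.fourierChar_apply]
      have harg : 2 * π * -(v * w N) = (2 * (N:ℝ) + 1) * v := by
        rw [hw_def]
        field_simp
      rw [harg, smul_eq_mul]
    · rw [hφdef, Set.indicator_of_notMem hv, Set.indicator_of_notMem hv, smul_zero]
  have key2 : (∫ v, 𝐞 (-(v * w N)) • φ v)
      = ∫ v in Set.Ioc (0:ℝ) (π / 2),
          Complex.exp (((2 * (N:ℝ) + 1) * v : ℝ) * Complex.I) * g v := by
    rw [← MeasureTheory.integral_indicator measurableSet_Ioc]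
    exact integral_congr_ae (Eventually.of_forall key1)
  rw [Function.comp_apply, Function.comp_apply, key2]
  have hint : IntegrableOn
      (fun v => Complex.exp (((2 * (N:ℝ) + 1) * v : ℝ) * Complex.I) * g v)
      (Set.Ioc (0:ℝ) (π / 2)) := by
    apply Continuous.integrableOn_Ioc
    exact (Complex.continuous_exp.comp
      ((Complex.continuous_ofReal.comp (continuous_const.mul continuous_id)).mul
        continuous_const)).mul hgc
  have hcomm := ContinuousLinearMap.integral_comp_comm Complex.reCLM hint
  rw [show (∫ v in Set.Ioc (0:ℝ) (π / 2),
        Complex.exp (((2 * (N:ℝ) + 1) * v : ℝ) * Complex.I) * g v).re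
      = Complex.reCLM (∫ v in Set.Ioc (0:ℝ) (π / 2),
        Complex.exp (((2 * (N:ℝ) + 1) * v : ℝ) * Complex.I) * g v) from rfl, ← hcomm]
  rw [intervalIntegral.integral_of_le (by positivity)]
  refine setIntegral_congr_fun measurableSet_Ioc fun v _ => ?_
  simp only [Complex.reCLM_apply, hg]
  rw [re_exp_mul_I]
  ring

noncomputable def dA (n : ℕ) : ℝ := (2 * (-1:ℝ) ^ n - 1) / ((n:ℝ) + 1) ^ 3

lemma hT_summable : Summable (fun n : ℕ => 1 / ((n:ℝ) + 1) ^ 3) := by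
  have h := (summable_nat_add_iff 1).mpr
    ((Real.summable_one_div_nat_pow (p := 3)).mpr (by norm_num))
  refine h.congr fun n => ?_
  push_cast
  ring

lemma hd_summable : Summable dA := by
  refine Summable.of_norm_bounded (g := fun n => 3 * (1 / ((n:ℝ) + 1) ^ 3))
    (hT_summable.mul_left 3) fun n => ?_
  have hnum : |2 * (-1:ℝ) ^ n - 1| ≤ 3 := by
    rcases Nat.even_or_odd n with h | h
    · rw [h.neg_one_pow]; norm_num
    · rw [h.neg_one_pow]; norm_num
  have hpos : (0:ℝ) < ((n:ℝ) + 1) ^ 3 := by positivity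
  rw [dA, Real.norm_eq_abs, abs_div, abs_of_pos hpos]
  show _ ≤ 3 * (1 / ((n:ℝ) + 1) ^ 3)
  rw [mul_one_div]
  gcongr


set_option maxHeartbeats 1000000 in
lemma tsum_d : ∑' n, dA n = (1 / 2) * ∑' n : ℕ, 1 / ((n:ℝ) + 1) ^ 3 := by
  set T := ∑' n : ℕ, 1 / ((n:ℝ) + 1) ^ 3 with hT
  have h2 : Function.Injective (fun k : ℕ => 2 * k) := fun a b h => by
    dsimp only at h; omega
  have h2' : Function.Injective (fun k : ℕ => 2 * k + 1) := fun a b h => by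
    dsimp only at h; omega
  have hde : ∀ k : ℕ, dA (2 * k) = 1 / ((2 * (k:ℝ)) + 1) ^ 3 := by
    intro k
    rw [dA, (even_two_mul k).neg_one_pow]
    push_cast
    norm_num
  have hdo : ∀ k : ℕ, dA (2 * k + 1) = -(3 / 8) * (1 / ((k:ℝ) + 1) ^ 3) := by
    intro k
    rw [dA, (odd_two_mul_add_one k).neg_one_pow]
    have : ((2 * k + 1 : ℕ) : ℝ) + 1 = 2 * ((k:ℝ) + 1) := by push_cast; ring
    rw [this]
    have hk : ((k:ℝ) + 1) ≠ 0 := by positivity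
    field_simp
    ring
  have hee : ∀ k : ℕ, (fun n : ℕ => 1 / ((n:ℝ) + 1) ^ 3) (2 * k + 1)
      = (1 / 8) * (1 / ((k:ℝ) + 1) ^ 3) := by
    intro k
    have : ((2 * k + 1 : ℕ) : ℝ) + 1 = 2 * ((k:ℝ) + 1) := by push_cast; ring
    simp only [this]
    have hk : ((k:ℝ) + 1) ≠ 0 := by positivity
    field_simp
    ring
  have hs1 : Summable (fun k : ℕ => (fun n : ℕ => 1 / ((n:ℝ) + 1) ^ 3) (2 * k)) :=
    hT_summable.comp_injective h2
  have hs2 : Summable (fun k : ℕ => (fun n : ℕ => 1 / ((n:ℝ) + 1) ^ 3) (2 * k + 1)) :=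
    hT_summable.comp_injective h2'
  have hs3 : Summable (fun k : ℕ => dA (2 * k)) := hd_summable.comp_injective h2
  have hs4 : Summable (fun k : ℕ => dA (2 * k + 1)) := hd_summable.comp_injective h2'
  have hsplitT := tsum_even_add_odd (f := fun n : ℕ => 1 / ((n:ℝ) + 1) ^ 3) hs1 hs2
  have hsplitD := tsum_even_add_odd (f := dA) hs3 hs4
  have hOe : ∑' k : ℕ, (fun n : ℕ => 1 / ((n:ℝ) + 1) ^ 3) (2 * k + 1) = (1 / 8) * T := by
    rw [tsum_congr hee, tsum_mul_left]
  have hDe : ∑' k : ℕ, dA (2 * k) = ∑' k : ℕ, (fun n : ℕ => 1 / ((n:ℝ) + 1) ^ 3) (2 * k) := by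
    refine tsum_congr fun k => ?_
    rw [hde k]
    push_cast
    norm_num
  have hDo : ∑' k : ℕ, dA (2 * k + 1) = -(3 / 8) * T := by
    rw [tsum_congr hdo, tsum_mul_left]
  rw [hOe] at hsplitT
  rw [hDe, hDo] at hsplitD
  have hO : ∑' k : ℕ, (fun n : ℕ => 1 / ((n:ℝ) + 1) ^ 3) (2 * k) = T - (1 / 8) * T := by
    linarith [hsplitT]
  rw [hO] at hsplitD
  linarith [hsplitD]

theorem integral_arcsin_sq_arccos :
    (2 / Real.pi) * ∫ x in (0:ℝ)..1, (1 / 2) * (Real.arcsin x) ^ 2 * Real.arccos x / x =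
      (1 / 8) * ∑' n : ℕ, 1 / ((n + 1 : ℕ) : ℝ) ^ 3 := by
  have hIeq : (∫ x in (0:ℝ)..1, (1 / 2) * (Real.arcsin x) ^ 2 * Real.arccos x / x)
      = ∫ x in (0:ℝ)..1, fA x := rfl
  set cA : ℕ → ℝ := fun n => (2 * (-1:ℝ) ^ n - 1) * π / (8 * ((n:ℝ) + 1) ^ 3) with hcA
  have hc_eq : ∀ n, cA n = (π / 8) * dA n := by
    intro n
    rw [hcA, dA]
    have h1 : ((n:ℝ) + 1) ^ 3 ≠ 0 := by positivity
    field_simp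
  have hc_sum : Summable cA :=
    (hd_summable.mul_left (π / 8)).congr fun n => (hc_eq n).symm
  have hps : ∀ N : ℕ, ∑ n ∈ Finset.range N, cA n
      = (∫ t in (0:ℝ)..(π / 2), Real.cos t • fA (Real.sin t))
        - ∫ t in (0:ℝ)..(π / 2), fA (Real.sin t) * Real.cos ((2 * (N:ℝ) + 1) * t) := by
    intro N
    rw [split N]
    have h : ∑ n ∈ Finset.range N, cA n = ∑ n ∈ Finset.range N,
        ∫ t in (0:ℝ)..(π / 2), 2 * pA t * Real.sin (2 * ((n:ℝ) + 1) * t) :=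
      Finset.sum_congr rfl fun n _ => by rw [integral_term n]
    rw [h]
    ring
  have htend : Tendsto (fun N => ∑ n ∈ Finset.range N, cA n) atTop
      (𝓝 ((∫ t in (0:ℝ)..(π / 2), Real.cos t • fA (Real.sin t)) - 0)) :=
    Tendsto.congr (fun N => (hps N).symm) (tendsto_const_nhds.sub remainder_tendsto)
  rw [sub_zero] at htend
  have hval : ∑' n, cA n = ∫ t in (0:ℝ)..(π / 2), Real.cos t • fA (Real.sin t) :=
    tendsto_nhds_unique hc_sum.hasSum.tendsto_sum_nat htend
  have hsum_val : ∑' n, cA n = (π / 8) * ((1 / 2) * ∑' n : ℕ, 1 / ((n:ℝ) + 1) ^ 3) := by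
    rw [tsum_congr hc_eq, tsum_mul_left, tsum_d]
  have hTT : ∑' n : ℕ, 1 / (((n + 1 : ℕ)):ℝ) ^ 3 = ∑' n : ℕ, 1 / ((n:ℝ) + 1) ^ 3 :=
    tsum_congr fun n => by push_cast; ring
  rw [hIeq, substitution, ← hval, hsum_val, hTT]
  have hπ := Real.pi_ne_zero
  field_simp
end
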